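/- arXiv:1309.1545 — 5 statements merged into one kernel-verified Lean document; each statement's English description precedes it below -/
import Mathlib

section
/- Let h, p ≥ 1 and m ≥ 2 be integers with h ≥ mp. Then σ_{h,p,p}(T_{m,2}) = σ*_{h,p,p}(T_{m,2}) = 2h + mp. -/
open SimpleGraph

/-- An `L(h,p,p)`-labelling of `G` with span `ℓ`: labels in `{0,…,ℓ}`, labels of vertices at
distance 1 differ by at least `h`, labels of vertices at distance 2 or 3 differ by at least `p`. -/
def IsLLabelling {V : Type} (G : SimpleGraph V) (h p ℓ : ℕ) (f : V → ℕ) : Prop :=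
  (∀ v, f v ≤ ℓ) ∧
  (∀ u v, G.dist u v = 1 → (h : ℤ) ≤ |(f u : ℤ) - (f v : ℤ)|) ∧
  (∀ u v, G.dist u v = 2 ∨ G.dist u v = 3 → (p : ℤ) ≤ |(f u : ℤ) - (f v : ℤ)|)

/-- `λ_{h,p,p}(G)`: the minimum span of an `L(h,p,p)`-labelling of `G`. -/
noncomputable def lambdaNum {V : Type} (G : SimpleGraph V) (h p : ℕ) : ℕ :=
  sInf {ℓ : ℕ | ∃ f : V → ℕ, IsLLabelling G h p ℓ f}

/-- A circular interval modulo `n`: a set of residues of the form `{a, a+1, …, a+s}` mod `n`. -/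
def IsCircInterval (n : ℕ) (I : Set (ZMod n)) : Prop :=
  ∃ (a : ZMod n) (s : ℕ), I = {x : ZMod n | ∃ i : ℕ, i ≤ s ∧ x = a + (i : ZMod n)}

/-- An elegant `L(h,p,p)`-labelling: additionally each vertex `u` has a circular interval `I u`
modulo `ℓ+1` containing the labels of all neighbours of `u`, with `I u ∩ I v = ∅` for edges `uv`. -/
def IsElegantLLabelling {V : Type} (G : SimpleGraph V) (h p ℓ : ℕ) (f : V → ℕ) : Prop :=
  IsLLabelling G h p ℓ f ∧
  ∃ I : V → Set (ZMod (ℓ + 1)),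
    (∀ u, IsCircInterval (ℓ + 1) (I u)) ∧
    (∀ u w, G.Adj u w → ((f w : ZMod (ℓ + 1)) ∈ I u)) ∧
    (∀ u v, G.Adj u v → I u ∩ I v = ∅)

/-- `λ*_{h,p,p}(G)`: the minimum span of an elegant `L(h,p,p)`-labelling of `G`. -/
noncomputable def lambdaStar {V : Type} (G : SimpleGraph V) (h p : ℕ) : ℕ :=
  sInf {ℓ : ℕ | ∃ f : V → ℕ, IsElegantLLabelling G h p ℓ f}

/-- The `ℓ`-cyclic distance between labels `a` and `b`. -/
def cycDist (ℓ a b : ℕ) : ℤ :=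
  min |(a : ℤ) - (b : ℤ)| ((ℓ : ℤ) - |(a : ℤ) - (b : ℤ)|)

/-- A `C(h,p,p)`-labelling of `G` with span `ℓ`: labels in `{0,…,ℓ-1}`, and the `ℓ`-cyclic distance
between labels of vertices at distance 1 (resp. 2 or 3) is at least `h` (resp. `p`). -/
def IsCLabelling {V : Type} (G : SimpleGraph V) (h p ℓ : ℕ) (f : V → ℕ) : Prop :=
  (∀ v, f v < ℓ) ∧
  (∀ u v, G.dist u v = 1 → (h : ℤ) ≤ cycDist ℓ (f u) (f v)) ∧
  (∀ u v, G.dist u v = 2 ∨ G.dist u v = 3 → (p : ℤ) ≤ cycDist ℓ (f u) (f v))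

/-- `σ_{h,p,p}(G)`: the minimum positive `ℓ` such that `G` has a `C(h,p,p)`-labelling of span `ℓ`. -/
noncomputable def sigmaNum {V : Type} (G : SimpleGraph V) (h p : ℕ) : ℕ :=
  sInf {ℓ : ℕ | 0 < ℓ ∧ ∃ f : V → ℕ, IsCLabelling G h p ℓ f}

/-- An elegant `C(h,p,p)`-labelling: additionally each vertex `u` has a circular interval `I u`
modulo `ℓ` containing the labels of all neighbours of `u`, with `I u ∩ I v = ∅` for edges `uv`. -/
def IsElegantCLabelling {V : Type} (G : SimpleGraph V) (h p ℓ : ℕ) (f : V → ℕ) : Prop :=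
  IsCLabelling G h p ℓ f ∧
  ∃ I : V → Set (ZMod ℓ),
    (∀ u, IsCircInterval ℓ (I u)) ∧
    (∀ u w, G.Adj u w → ((f w : ZMod ℓ) ∈ I u)) ∧
    (∀ u v, G.Adj u v → I u ∩ I v = ∅)

/-- `σ*_{h,p,p}(G)`: the minimum positive `ℓ` such that `G` has an elegant `C(h,p,p)`-labelling
of span `ℓ`. -/
noncomputable def sigmaStar {V : Type} (G : SimpleGraph V) (h p : ℕ) : ℕ :=
  sInf {ℓ : ℕ | 0 < ℓ ∧ ∃ f : V → ℕ, IsElegantCLabelling G h p ℓ f}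

/-- `Δ₂(G) = max over edges uv of (deg u + deg v)`. -/
noncomputable def deltaTwo {V : Type} (G : SimpleGraph V) [Fintype V] [DecidableRel G.Adj] : ℕ :=
  sSup {d : ℕ | ∃ u v : V, G.Adj u v ∧ d = G.degree u + G.degree v}


namespace Stmt12Aux
open SimpleGraph


lemma emod_cases (ℓ x : ℤ) (hx1 : -ℓ < x) (hx2 : x < ℓ) :
    x % ℓ = x ∨ x % ℓ = x + ℓ := by
  rcases le_or_gt 0 x with hx | hx
  · left; exact Int.emod_eq_of_lt hx hx2
  · right
    have h1 : (x + ℓ) % ℓ = x + ℓ := Int.emod_eq_of_lt (by omega) (by omega)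
    have h2 : (x + ℓ) % ℓ = x % ℓ := by
      have := Int.add_mul_emod_self_left (a := x) (b := ℓ) (c := 1)
      rw [mul_one] at this; omega
    omega

lemma window {ℓ x y c : ℕ} (hx : x < ℓ) (hy : y < ℓ)
    (hc : (c:ℤ) ≤ cycDist ℓ x y) :
    (c:ℤ) ≤ ((y:ℤ) - x) % ℓ ∧ ((y:ℤ) - x) % ℓ ≤ (ℓ:ℤ) - c := by
  have hx' : (x:ℤ) < ℓ := by exact_mod_cast hx
  have hy' : (y:ℤ) < ℓ := by exact_mod_cast hy
  have hx0 : (0:ℤ) ≤ x := Int.natCast_nonneg x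
  have hy0 : (0:ℤ) ≤ y := Int.natCast_nonneg y
  have hcase := emod_cases ℓ ((y:ℤ) - x) (by omega) (by omega)
  have hm1 : 0 ≤ ((y:ℤ) - x) % ℓ := Int.emod_nonneg _ (by omega)
  have hm2 : ((y:ℤ) - x) % ℓ < ℓ := Int.emod_lt_of_pos _ (by omega)
  unfold cycDist at hc
  rw [le_min_iff] at hc
  rcases abs_cases ((x:ℤ) - y) with ⟨he, h0⟩ | ⟨he, h0⟩ <;> rw [he] at hc <;>
    rcases hcase with hd | hd <;> omega

lemma sep {ℓ x y y' c : ℕ} (hx : x < ℓ) (hy : y < ℓ) (hy' : y' < ℓ)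
    (hc : (c:ℤ) ≤ cycDist ℓ y y') :
    (c:ℤ) ≤ |((y:ℤ) - x) % ℓ - ((y':ℤ) - x) % ℓ| := by
  have hx' : (x:ℤ) < ℓ := by exact_mod_cast hx
  have hy1 : (y:ℤ) < ℓ := by exact_mod_cast hy
  have hy2 : (y':ℤ) < ℓ := by exact_mod_cast hy'
  have hx0 : (0:ℤ) ≤ x := Int.natCast_nonneg x
  have hw0 : (0:ℤ) ≤ y := Int.natCast_nonneg y
  have hw1 : (0:ℤ) ≤ y' := Int.natCast_nonneg y'
  have hc1 := emod_cases ℓ ((y:ℤ) - x) (by omega) (by omega)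
  have hc2 := emod_cases ℓ ((y':ℤ) - x) (by omega) (by omega)
  have hm1 : 0 ≤ ((y:ℤ) - x) % ℓ := Int.emod_nonneg _ (by omega)
  have hm2 : ((y:ℤ) - x) % ℓ < ℓ := Int.emod_lt_of_pos _ (by omega)
  have hm3 : 0 ≤ ((y':ℤ) - x) % ℓ := Int.emod_nonneg _ (by omega)
  have hm4 : ((y':ℤ) - x) % ℓ < ℓ := Int.emod_lt_of_pos _ (by omega)
  unfold cycDist at hc
  rw [le_min_iff] at hc
  rcases abs_cases ((y:ℤ) - y') with ⟨he, h0⟩ | ⟨he, h0⟩ <;> rw [he] at hc <;>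
    rcases le_total (((y:ℤ) - x) % ℓ) (((y':ℤ) - x) % ℓ) with ho | ho <;>
    [rw [abs_of_nonpos (by omega)]; rw [abs_of_nonneg (by omega)];
     rw [abs_of_nonpos (by omega)]; rw [abs_of_nonneg (by omega)]] <;>
    rcases hc1 with hd1 | hd1 <;> rcases hc2 with hd2 | hd2 <;> omega

lemma finIdx_inj {α : Type*} (s : Finset α) {a b : α} (ha : a ∈ s) (hb : b ∈ s)
    (h : (s.equivFin ⟨a, ha⟩ : Fin s.card).val = (s.equivFin ⟨b, hb⟩ : Fin s.card).val) :
    a = b := by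
  have := s.equivFin.injective (Fin.ext h)
  exact congrArg Subtype.val this

lemma finIdx_congr {α : Type*} {s t : Finset α} (hst : s = t) {a : α} (ha : a ∈ s) :
    (s.equivFin ⟨a, ha⟩ : Fin s.card).val = (t.equivFin ⟨a, hst ▸ ha⟩ : Fin t.card).val := by
  subst hst; rfl




lemma cast_ne {n a b : ℕ} (h1 : a < b) (h2 : b < a + n) : (a : ZMod n) ≠ (b : ZMod n) := by
  intro hE
  have h3 : (n : ℕ) ∣ b - a := (Nat.modEq_iff_dvd' h1.le).mp
    ((ZMod.natCast_eq_natCast_iff a b n).mp hE)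
  have h4 := Nat.le_of_dvd (by omega) h3
  omega

lemma spread {T : Finset ℤ} {q : ℤ} (hq : 0 < q) {k : ℕ} (hc : T.card = k + 1)
    (hsep : ∀ a ∈ T, ∀ b ∈ T, a ≠ b → q ≤ |a - b|) :
    ∃ a ∈ T, ∃ b ∈ T, a + k * q ≤ b := by
  set iso := T.orderIsoOfFin hc with hiso
  refine ⟨iso 0, (iso 0).2, iso ⟨k, by omega⟩, (iso ⟨k, by omega⟩).2, ?_⟩
  have key : ∀ j : ℕ, (hj : j ≤ k) → (iso 0 : ℤ) + j * q ≤ iso ⟨j, by omega⟩ := by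
    intro j
    induction j with
    | zero => intro _; simp
    | succ n ih =>
      intro hj
      have h1 := ih (by omega)
      have hlt : (iso ⟨n, by omega⟩ : ℤ) < iso ⟨n + 1, by omega⟩ := by
        have := iso.strictMono (show (⟨n, by omega⟩ : Fin (k+1)) < ⟨n+1, by omega⟩ by
          simp [Fin.lt_def])
        exact_mod_cast this
      have hne : (iso ⟨n, by omega⟩ : ℤ) ≠ (iso ⟨n+1, by omega⟩ : ℤ) := hlt.ne
      have := hsep _ (iso ⟨n, by omega⟩).2 _ (iso ⟨n+1, by omega⟩).2 hne
      rw [abs_sub_comm, abs_of_pos (by omega)] at this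
      push_cast
      nlinarith
  have := key k le_rfl
  exact this




/-- circular interval -/
def CI (n a s : ℕ) : Set (ZMod n) := {x : ZMod n | ∃ i : ℕ, i ≤ s ∧ x = (a : ZMod n) + (i : ZMod n)}

lemma M1 (hp : 1 ≤ p) {i : ℕ} (hi : i < m) :
    ((h + i*p : ℕ) : ZMod (2*h+m*p)) ∈ CI (2*h+m*p) h ((m-1)*p) := by
  refine ⟨i*p, ?_, by push_cast; ring⟩
  exact Nat.mul_le_mul_right p (by omega)

lemma M2 (hp : 1 ≤ p) {i : ℕ} (hi : i < m) :
    ((0 : ℕ) : ZMod (2*h+m*p)) ∈ CI (2*h+m*p) (2*h+i*p) (m*p) := by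
  refine ⟨(m-i)*p, Nat.mul_le_mul_right p (by omega), ?_⟩
  have e1 : (m-i)*p = m*p - i*p := Nat.sub_mul m i p
  have e2 : i*p ≤ m*p := Nat.mul_le_mul_right p hi.le
  have e3 : (2*h+i*p) + (m-i)*p = 2*h+m*p := by omega
  rw [← Nat.cast_add, e3, ZMod.natCast_self, Nat.cast_zero]

def gcL (h p m t : ℕ) : ℕ := if t < m then 2*h + t*p else (t-m+1)*p

lemma M3 (hp : 1 ≤ p) {i k : ℕ} (hi : i < m) (hk : k < m) :
    ((gcL h p m (i+k) : ℕ) : ZMod (2*h+m*p)) ∈ CI (2*h+m*p) (2*h+i*p) (m*p) := by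
  rw [gcL]
  split_ifs with ht
  · refine ⟨k*p, Nat.mul_le_mul_right p hk.le, ?_⟩
    rw [← Nat.cast_add]
    congr 1
    have : (i+k)*p = i*p + k*p := Nat.add_mul i k p
    omega
  · refine ⟨(k+1)*p, Nat.mul_le_mul_right p hk, ?_⟩
    have e0 : i+k-m+1 = i+k+1-m := by omega
    have e1 : (i+k+1-m)*p = (i+k+1)*p - m*p := Nat.sub_mul _ m p
    have e2 : m*p ≤ (i+k+1)*p := Nat.mul_le_mul_right p (by omega)
    have e3 : (i+k+1)*p = i*p + k*p + p := by rw [Nat.add_mul, Nat.add_mul, one_mul]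
    have e4 : (k+1)*p = k*p + p := by rw [Nat.add_mul, one_mul]
    have e5 : (2*h+i*p) + (k+1)*p = (2*h+m*p) + (i+k-m+1)*p := by rw [e0]; omega
    calc ((i+k-m+1)*p : ℕ) = (((2*h+m*p) + (i+k-m+1)*p : ℕ) : ZMod (2*h+m*p)) := by
          rw [Nat.cast_add, ZMod.natCast_self, zero_add]
      _ = (((2*h+i*p) + (k+1)*p : ℕ) : ZMod (2*h+m*p)) := by rw [e5]
      _ = ((2*h+i*p : ℕ) : ZMod (2*h+m*p)) + ((k+1)*p : ℕ) := by push_cast; ring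

lemma M4 {a n : ℕ} : ((a : ℕ) : ZMod n) ∈ CI n a 0 := ⟨0, le_rfl, by simp⟩

lemma D1 (hp : 1 ≤ p) (hmp : m * p ≤ h) {i : ℕ} (hi : i < m) :
    CI (2*h+m*p) h ((m-1)*p) ∩ CI (2*h+m*p) (2*h+i*p) (m*p) = ∅ := by
  rw [Set.eq_empty_iff_forall_notMem]
  rintro x ⟨⟨j1, hj1, hx1⟩, ⟨j2, hj2, hx2⟩⟩
  have heq : ((h + j1 : ℕ) : ZMod (2*h+m*p)) = ((2*h+i*p + j2 : ℕ) : ZMod (2*h+m*p)) := by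
    push_cast at hx1 hx2 ⊢
    linear_combination hx2 - hx1
  have e1 : (m-1)*p + p = m*p := by
    have h1 : (m-1)*p = m*p - 1*p := Nat.sub_mul m 1 p
    rw [one_mul] at h1
    have h2 : p ≤ m*p := Nat.le_mul_of_pos_left p (by omega)
    omega
  have e2 : i*p ≤ (m-1)*p := Nat.mul_le_mul_right p (by omega)
  exact cast_ne (by omega) (by omega) heq

lemma D2 (hp : 1 ≤ p) (hh : 1 ≤ h) (hmp : m * p ≤ h) {i : ℕ} (hi : i < m) :
    CI (2*h+m*p) (h+i*p) 0 ∩ CI (2*h+m*p) (2*h+i*p) (m*p) = ∅ := by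
  rw [Set.eq_empty_iff_forall_notMem]
  rintro x ⟨⟨j1, hj1, hx1⟩, ⟨j2, hj2, hx2⟩⟩
  interval_cases j1
  have heq : ((h + i*p : ℕ) : ZMod (2*h+m*p)) = ((2*h+i*p + j2 : ℕ) : ZMod (2*h+m*p)) := by
    push_cast at hx1 hx2 ⊢
    linear_combination hx2 - hx1
  have e2 : i*p ≤ m*p := Nat.mul_le_mul_right p hi.le
  exact cast_ne (by omega) (by omega) heq

lemma gcL_lt (hp : 1 ≤ p) (hmp : m * p ≤ h) {i k : ℕ} (hi : i < m) (hk : k < m) :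
    gcL h p m (i+k) < 2*h+m*p := by
  rw [gcL]
  have e2 : i*p ≤ m*p := Nat.mul_le_mul_right p hi.le
  split_ifs with ht
  · have h1 : (i+k+1)*p ≤ m*p := Nat.mul_le_mul_right p ht
    have h2 : (i+k+1)*p = (i+k)*p + p := Nat.succ_mul _ p
    omega
  · have h1 : (i+k-m+1)*p ≤ m*p := Nat.mul_le_mul_right p (by omega)
    have h2 : p ≤ m*p := Nat.le_mul_of_pos_left p (by omega)
    omega




lemma cycDist_comm (ℓ a b : ℕ) : cycDist ℓ a b = cycDist ℓ b a := by
  simp [cycDist, abs_sub_comm]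

lemma cyc_ge' {c ℓ a b : ℕ} (h1 : (c:ℤ) ≤ (a:ℤ) - b ∨ (c:ℤ) ≤ (b:ℤ) - a)
    (h2 : (a:ℤ) - b ≤ (ℓ:ℤ) - c) (h3 : (b:ℤ) - a ≤ (ℓ:ℤ) - c) : (c:ℤ) ≤ cycDist ℓ a b := by
  unfold cycDist
  rcases abs_cases ((a:ℤ) - (b:ℤ)) with ⟨he, h0⟩ | ⟨he, h0⟩ <;> rcases h1 with h1 | h1 <;>
    refine le_min ?_ ?_ <;> rw [he] <;> omega

variable {h p m : ℕ}

lemma A1 (hp : 1 ≤ p) (hmp : m * p ≤ h) {i : ℕ} (hi : i < m) :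
    (h:ℤ) ≤ cycDist (2*h+m*p) 0 (h+i*p) := by
  have hi' : (i:ℤ) + 1 ≤ m := by exact_mod_cast hi
  have hp' : (1:ℤ) ≤ p := by exact_mod_cast hp
  apply cyc_ge' (Or.inr ?_) ?_ ?_ <;> push_cast <;> nlinarith

lemma A2 (hp : 1 ≤ p) (hmp : m * p ≤ h) {i k : ℕ} (hi : i < m) (hk : k < m) :
    (h:ℤ) ≤ cycDist (2*h+m*p) (h+i*p) (gcL h p m (i+k)) := by
  have hi' : (i:ℤ) + 1 ≤ m := by exact_mod_cast hi
  have hk' : (k:ℤ) + 1 ≤ m := by exact_mod_cast hk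
  have hp' : (1:ℤ) ≤ p := by exact_mod_cast hp
  have hmp' : (m:ℤ) * p ≤ h := by exact_mod_cast hmp
  rw [gcL]
  split_ifs with ht
  · have ht' : (i:ℤ) + k + 1 ≤ m := by exact_mod_cast ht
    apply cyc_ge' (Or.inr ?_) ?_ ?_ <;> push_cast <;> nlinarith
  · have ht' : (m:ℤ) ≤ i + k := by exact_mod_cast Nat.le_of_not_lt ht
    have hc : ((i+k-m+1 : ℕ) : ℤ) = i + k - m + 1 := by
      push_cast [Nat.cast_sub (Nat.le_of_not_lt ht)]; ring
    apply cyc_ge' (Or.inl ?_) ?_ ?_ <;> push_cast [hc] <;> nlinarith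

lemma A3 (hp : 1 ≤ p) {i j : ℕ} (hi : i < m) (hj : j < m) (hij : i < j) :
    (p:ℤ) ≤ cycDist (2*h+m*p) (h+i*p) (h+j*p) := by
  have hj' : (j:ℤ) + 1 ≤ m := by exact_mod_cast hj
  have hij' : (i:ℤ) + 1 ≤ j := by exact_mod_cast hij
  have hp' : (1:ℤ) ≤ p := by exact_mod_cast hp
  apply cyc_ge' (Or.inr ?_) ?_ ?_ <;> push_cast <;> nlinarith

lemma A4 (hp : 1 ≤ p) (hmp : m * p ≤ h) (hm : 2 ≤ m) {i k : ℕ} (hi : i < m) (hk : k < m) :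
    (p:ℤ) ≤ cycDist (2*h+m*p) 0 (gcL h p m (i+k)) := by
  have hi' : (i:ℤ) + 1 ≤ m := by exact_mod_cast hi
  have hk' : (k:ℤ) + 1 ≤ m := by exact_mod_cast hk
  have hp' : (1:ℤ) ≤ p := by exact_mod_cast hp
  have hmp' : (m:ℤ) * p ≤ h := by exact_mod_cast hmp
  have hm' : (2:ℤ) ≤ m := by exact_mod_cast hm
  rw [gcL]
  split_ifs with ht
  · have ht' : (i:ℤ) + k + 1 ≤ m := by exact_mod_cast ht
    apply cyc_ge' (Or.inr ?_) ?_ ?_ <;> push_cast <;> nlinarith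
  · have ht' : (m:ℤ) ≤ i + k := by exact_mod_cast Nat.le_of_not_lt ht
    have hc : ((i+k-m+1 : ℕ) : ℤ) = i + k - m + 1 := by
      push_cast [Nat.cast_sub (Nat.le_of_not_lt ht)]; ring
    apply cyc_ge' (Or.inr ?_) ?_ ?_ <;> push_cast [hc] <;> nlinarith

lemma A5 (hp : 1 ≤ p) (hmp : m * p ≤ h) {i j k : ℕ} (hi : i < m) (hj : j < m) (hk : k < m) :
    (p:ℤ) ≤ cycDist (2*h+m*p) (h+j*p) (gcL h p m (i+k)) := by
  have hi' : (i:ℤ) + 1 ≤ m := by exact_mod_cast hi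
  have hj' : (j:ℤ) + 1 ≤ m := by exact_mod_cast hj
  have hk' : (k:ℤ) + 1 ≤ m := by exact_mod_cast hk
  have hp' : (1:ℤ) ≤ p := by exact_mod_cast hp
  have hmp' : (m:ℤ) * p ≤ h := by exact_mod_cast hmp
  rw [gcL]
  split_ifs with ht
  · have ht' : (i:ℤ) + k + 1 ≤ m := by exact_mod_cast ht
    apply cyc_ge' (Or.inr ?_) ?_ ?_ <;> push_cast <;> nlinarith
  · have ht' : (m:ℤ) ≤ i + k := by exact_mod_cast Nat.le_of_not_lt ht
    have hc : ((i+k-m+1 : ℕ) : ℤ) = i + k - m + 1 := by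
      push_cast [Nat.cast_sub (Nat.le_of_not_lt ht)]; ring
    apply cyc_ge' (Or.inl ?_) ?_ ?_ <;> push_cast [hc] <;> nlinarith

set_option maxHeartbeats 1000000 in
lemma A6 (hp : 1 ≤ p) (hmp : m * p ≤ h) {i k k' : ℕ} (hi : i < m) (hk : k < m)
    (hk' : k' < m) (hkk : k < k') :
    (p:ℤ) ≤ cycDist (2*h+m*p) (gcL h p m (i+k)) (gcL h p m (i+k')) := by
  have hi' : (i:ℤ) + 1 ≤ m := by exact_mod_cast hi
  have hk1 : (k:ℤ) + 1 ≤ m := by exact_mod_cast hk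
  have hk2 : (k':ℤ) + 1 ≤ m := by exact_mod_cast hk'
  have hkk' : (k:ℤ) + 1 ≤ k' := by exact_mod_cast hkk
  have hp' : (1:ℤ) ≤ p := by exact_mod_cast hp
  have hmp' : (m:ℤ) * p ≤ h := by exact_mod_cast hmp
  rw [gcL, gcL]
  split_ifs with h1 h2 h2
  · have h1' : (i:ℤ) + k + 1 ≤ m := by exact_mod_cast h1
    have h2' : (i:ℤ) + k' + 1 ≤ m := by exact_mod_cast h2
    apply cyc_ge' (Or.inr ?_) ?_ ?_ <;> push_cast <;> nlinarith
  · have h1' : (i:ℤ) + k + 1 ≤ m := by exact_mod_cast h1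
    have h2' : (m:ℤ) ≤ i + k' := by exact_mod_cast Nat.le_of_not_lt h2
    have hc : ((i+k'-m+1 : ℕ) : ℤ) = i + k' - m + 1 := by
      push_cast [Nat.cast_sub (Nat.le_of_not_lt h2)]; ring
    apply cyc_ge' (Or.inl ?_) ?_ ?_ <;> push_cast [hc] <;> nlinarith
  · omega
  · have h1' : (m:ℤ) ≤ i + k := by exact_mod_cast Nat.le_of_not_lt h1
    have h2' : (m:ℤ) ≤ i + k' := by exact_mod_cast Nat.le_of_not_lt h2
    have hc : ((i+k-m+1 : ℕ) : ℤ) = i + k - m + 1 := by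
      push_cast [Nat.cast_sub (Nat.le_of_not_lt h1)]; ring
    have hc' : ((i+k'-m+1 : ℕ) : ℤ) = i + k' - m + 1 := by
      push_cast [Nat.cast_sub (Nat.le_of_not_lt h2)]; ring
    apply cyc_ge' (Or.inr ?_) ?_ ?_ <;> push_cast [hc, hc'] <;> nlinarith




variable {V : Type} {G : SimpleGraph V}

lemma path_len_eq (hT : G.IsTree) {a b : V} {w1 w2 : G.Walk a b}
    (h1 : w1.IsPath) (h2 : w2.IsPath) : w1.length = w2.length := by
  have := hT.IsAcyclic.path_unique ⟨w1, h1⟩ ⟨w2, h2⟩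
  have := congrArg (fun q : G.Path a b => (q : G.Walk a b).length) this
  simpa using this

lemma path_eq (hT : G.IsTree) {a b : V} {w1 w2 : G.Walk a b}
    (h1 : w1.IsPath) (h2 : w2.IsPath) : w1 = w2 := by
  have := hT.IsAcyclic.path_unique ⟨w1, h1⟩ ⟨w2, h2⟩
  exact congrArg Subtype.val this

lemma tri (hT : G.IsTree) {a b c : V} (hab : G.Adj a b) (hbc : G.Adj b c)
    (hac : G.Adj a c) : False := by
  have hpath : (Walk.cons hab (Walk.cons hbc Walk.nil) : G.Walk a c).IsPath := by
    simp [Walk.cons_isPath_iff, hab.ne, hbc.ne, hac.ne]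
  have hp1 : (Walk.cons hac Walk.nil : G.Walk a c).IsPath := by
    simp [Walk.cons_isPath_iff, hac.ne]
  have := path_len_eq hT hp1 hpath
  simp [Walk.length_cons] at this

variable {r : V}

/-- trichotomy -/
lemma trichot (hT : G.IsTree) (hball : ∀ v : V, G.dist r v ≤ 2) (v : V) : v = r ∨ G.Adj r v ∨ (¬ G.Adj r v ∧ v ≠ r ∧ G.dist r v = 2) := by
  have h2 := hball v
  by_cases h0 : v = r
  · exact Or.inl h0
  by_cases h1 : G.Adj r v
  · exact Or.inr (Or.inl h1)
  · refine Or.inr (Or.inr ⟨h1, h0, ?_⟩)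
    have hne : G.dist r v ≠ 0 := fun hz =>
      h0 ((hT.isConnected.dist_eq_zero_iff).mp hz).symm
    have hne1 : G.dist r v ≠ 1 := fun hz =>
      h1 (SimpleGraph.dist_eq_one_iff_adj.mp hz)
    omega

lemma gc_dist (hT : G.IsTree) (hball : ∀ v : V, G.dist r v ≤ 2) {u : V} (hu1 : ¬ G.Adj r u) (hu2 : u ≠ r) : G.dist r u = 2 := by
  rcases trichot hT hball u with h | h | h
  · exact absurd h hu2
  · exact absurd h hu1
  · exact h.2.2

/-- every neighbour of a grandchild is a child of r -/
lemma gc_nbr_child [DecidableEq V] (hT : G.IsTree) (hball : ∀ v : V, G.dist r v ≤ 2) {u x : V} (hu1 : ¬ G.Adj r u) (hu2 : u ≠ r) (hux : G.Adj u x) :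
    G.Adj r x := by
  rcases trichot hT hball x with h | h | ⟨hx1, hx2, hx3⟩
  · subst h; exact absurd hux.symm hu1
  · exact h
  · exfalso
    -- both u and x are grandchildren, adjacent: contradiction
    have hdu : G.dist r u = 2 := gc_dist hT hball hu1 hu2
    obtain ⟨wu, hwu⟩ := hT.isConnected.exists_walk_length_eq_dist r u
    obtain ⟨wx, hwx⟩ := hT.isConnected.exists_walk_length_eq_dist r x
    rw [hdu] at hwu; rw [hx3] at hwx
    -- decompose wu : r = a :: u
    obtain ⟨a, ha, wu', hwu'⟩ := Walk.exists_eq_cons_of_ne (fun h => hu2 h.symm) wu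
    have hlen : wu'.length = 1 := by
      have := congrArg Walk.length hwu'
      simp [Walk.length_cons] at this; omega
    have hau : G.Adj a u := by
      have := Walk.adj_of_length_eq_one hlen; exact this
    -- a is a child: Adj r a
    -- long walk r - a - u - x is a path
    have hane : a ≠ u := fun h => hu1 (h ▸ ha)
    have hax : a ≠ x := fun h => hx1 (h ▸ ha)
    have hra : r ≠ a := ha.ne
    have hrx : r ≠ x := fun h => hx2 h.symm
    have hru : r ≠ u := fun h => hu2 h.symm
    have hux' : u ≠ x := hux.ne
    have hpath : (Walk.cons ha (Walk.cons hau (Walk.cons hux Walk.nil))).IsPath := by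
      simp [Walk.cons_isPath_iff, hra, hane, hax, hru, hux', hrx]
    have h2 := SimpleGraph.dist_le (Walk.cons ha (Walk.cons hau (Walk.cons hux Walk.nil)))
    -- the bypass of wx is a path from r to x
    have hb1 : wx.bypass.IsPath := Walk.bypass_isPath wx
    have hb2 : wx.bypass.length ≤ 2 := hwx ▸ Walk.length_bypass_le wx
    have := path_len_eq hT hb1 hpath
    simp [Walk.length_cons] at this
    omega


lemma gc_nbr_unique (hT : G.IsTree) {u x y : V} (hu1 : ¬ G.Adj r u) (hu2 : u ≠ r)
    (hrx : G.Adj r x) (hry : G.Adj r y) (hux : G.Adj u x) (huy : G.Adj u y) : x = y := by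
  have hxu : x ≠ u := fun h => hu1 (h ▸ hrx)
  have hyu : y ≠ u := fun h => hu1 (h ▸ hry)
  have hp1 : (Walk.cons hrx (Walk.cons hux.symm Walk.nil) : G.Walk r u).IsPath := by
    have hru : ¬ r = u := fun h => hu2 h.symm
    simp [Walk.cons_isPath_iff, hrx.ne, hxu, hru]
  have hp2 : (Walk.cons hry (Walk.cons huy.symm Walk.nil) : G.Walk r u).IsPath := by
    have hru : ¬ r = u := fun h => hu2 h.symm
    simp [Walk.cons_isPath_iff, hry.ne, hyu, hru]
  have := path_eq hT hp1 hp2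
  have := congrArg Walk.support this
  simp [Walk.support_cons] at this
  exact this

lemma gc_nbr_exists (hT : G.IsTree) (hball : ∀ v : V, G.dist r v ≤ 2)
    {u : V} (hu2 : u ≠ r) : ∃ x, G.Adj u x := by
  obtain ⟨w, _⟩ := hT.isConnected.exists_walk_length_eq_dist u r
  obtain ⟨a, ha, _, _⟩ := Walk.exists_eq_cons_of_ne hu2 w
  exact ⟨a, ha⟩

lemma gc_gc_far [DecidableEq V] (hT : G.IsTree) (hball : ∀ v : V, G.dist r v ≤ 2)
    {u w x y : V} (hu1 : ¬ G.Adj r u) (hu2 : u ≠ r) (hw1 : ¬ G.Adj r w) (hw2 : w ≠ r)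
    (hux : G.Adj u x) (hwy : G.Adj w y) (hxy : x ≠ y)
    (hd : G.dist u w = 2 ∨ G.dist u w = 3) : False := by
  have hrx : G.Adj r x := gc_nbr_child hT hball hu1 hu2 hux
  have hry : G.Adj r y := gc_nbr_child hT hball hw1 hw2 hwy
  have huw : u ≠ w := by
    intro h; subst h
    exact hxy (gc_nbr_unique hT hu1 hu2 hrx hry hux hwy)
  obtain ⟨wk, hwk⟩ := hT.isConnected.exists_walk_length_eq_dist u w
  obtain ⟨a, ha, wk1, hwk1⟩ := Walk.exists_eq_cons_of_ne huw wk
  have hax : a = x := gc_nbr_unique hT hu1 hu2 (gc_nbr_child hT hball hu1 hu2 ha) hrx ha hux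
  subst a
  have hxw : x ≠ w := fun h => hw1 (h ▸ hrx)
  obtain ⟨b, hb, wk2, hwk2⟩ := Walk.exists_eq_cons_of_ne (fun h => hxw h.symm) wk1.reverse
  have hby : b = y := gc_nbr_unique hT hw1 hw2 (gc_nbr_child hT hball hw1 hw2 hb) hry hb hwy
  subst b
  -- wk2 : y → x, length = dist - 2
  have hlen : wk2.length + 2 = G.dist u w := by
    have e1 := congrArg Walk.length hwk1
    have e2 := congrArg Walk.length hwk2
    simp [Walk.length_cons, Walk.length_reverse] at e1 e2
    omega
  rcases hd with hd | hd
  · have : wk2.length = 0 := by omega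
    exact hxy (Walk.eq_of_length_eq_zero this).symm
  · have : wk2.length = 1 := by omega
    exact tri hT hry (Walk.adj_of_length_eq_one this) hrx


end Stmt12Aux

open Stmt12Aux in
set_option maxHeartbeats 2000000 in
theorem stmt12 {V : Type} [Fintype V] (G : SimpleGraph V) [DecidableRel G.Adj]
    (hT : G.IsTree) (m : ℕ) (hm : 2 ≤ m) (r : V)
    (hr : G.degree r = m)
    (hnbr : ∀ v : V, G.Adj r v → G.degree v = m + 1)
    (hball : ∀ v : V, G.dist r v ≤ 2)
    (h p : ℕ) (hp : 1 ≤ p) (hh : 1 ≤ h) (hmp : m * p ≤ h) :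
    sigmaNum G h p = 2 * h + m * p ∧ sigmaStar G h p = 2 * h + m * p := by
  classical
  set L := 2 * h + m * p with hL
  have hL0 : 0 < L := by omega
  have htri := trichot hT hball
  -- child index
  have hNcard : (G.neighborFinset r).card = m := by
    rw [SimpleGraph.card_neighborFinset_eq_degree, hr]
  set ci : V → ℕ := fun v => if hv : v ∈ G.neighborFinset r
      then (((G.neighborFinset r).equivFin ⟨v, hv⟩ : Fin _) : ℕ) else 0 with hci
  have hci_eq : ∀ (v : V) (hv : v ∈ G.neighborFinset r),
      ci v = (((G.neighborFinset r).equivFin ⟨v, hv⟩ : Fin _) : ℕ) := by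
    intro v hv; simp only [hci]; rw [dif_pos hv]
  have hci_lt : ∀ v, G.Adj r v → ci v < m := by
    intro v hv
    have hv' : v ∈ G.neighborFinset r := by simpa using hv
    rw [hci_eq v hv']
    exact hNcard ▸ ((G.neighborFinset r).equivFin ⟨v, hv'⟩).isLt
  have hci_inj : ∀ v w, G.Adj r v → G.Adj r w → ci v = ci w → v = w := by
    intro v w hv hw hvw
    have hv' : v ∈ G.neighborFinset r := by simpa using hv
    have hw' : w ∈ G.neighborFinset r := by simpa using hw
    rw [hci_eq v hv', hci_eq w hw'] at hvw
    exact finIdx_inj _ hv' hw' hvw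
  -- parent
  have hpar : ∀ u, ¬G.Adj r u → u ≠ r → ∃ x, G.Adj u x ∧ G.Adj r x := by
    intro u h1 h2
    obtain ⟨x, hx⟩ := gc_nbr_exists hT hball h2
    exact ⟨x, hx, gc_nbr_child hT hball h1 h2 hx⟩
  set P : V → V := fun u => if hu : ¬G.Adj r u ∧ u ≠ r then (hpar u hu.1 hu.2).choose else r
    with hP
  have hP_eq : ∀ u (h1 : ¬G.Adj r u) (h2 : u ≠ r), G.Adj u (P u) ∧ G.Adj r (P u) := by
    intro u h1 h2
    simp only [hP]
    rw [dif_pos ⟨h1, h2⟩]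
    exact (hpar u h1 h2).choose_spec
  have hP_uniq : ∀ u (h1 : ¬G.Adj r u) (h2 : u ≠ r) (x : V), G.Adj u x → x = P u := by
    intro u h1 h2 x hx
    exact gc_nbr_unique hT h1 h2 (gc_nbr_child hT hball h1 h2 hx) (hP_eq u h1 h2).2 hx
      (hP_eq u h1 h2).1
  -- sibling index
  have hMcard : ∀ u, ¬G.Adj r u → u ≠ r → (G.neighborFinset (P u) \ {r}).card = m := by
    intro u h1 h2
    have hadj := (hP_eq u h1 h2).2
    have hsub : ({r} : Finset V) ⊆ G.neighborFinset (P u) := by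
      rw [Finset.singleton_subset_iff, SimpleGraph.mem_neighborFinset]
      exact hadj.symm
    rw [Finset.card_sdiff_of_subset hsub, SimpleGraph.card_neighborFinset_eq_degree, hnbr (P u) hadj]
    simp
  have hmemM : ∀ u, ¬G.Adj r u → u ≠ r → u ∈ G.neighborFinset (P u) \ ({r} : Finset V) := by
    intro u h1 h2
    rw [Finset.mem_sdiff, SimpleGraph.mem_neighborFinset]
    exact ⟨(hP_eq u h1 h2).1.symm, by simp [h2]⟩
  set gi : V → ℕ := fun u => if hu : u ∈ G.neighborFinset (P u) \ ({r} : Finset V)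
      then (((G.neighborFinset (P u) \ {r}).equivFin ⟨u, hu⟩ : Fin _) : ℕ) else 0 with hgi
  have hgi_eq : ∀ (u : V) (hu : u ∈ G.neighborFinset (P u) \ ({r} : Finset V)),
      gi u = (((G.neighborFinset (P u) \ {r}).equivFin ⟨u, hu⟩ : Fin _) : ℕ) := by
    intro u hu; simp only [hgi]; rw [dif_pos hu]
  have hgi_lt : ∀ u, ¬G.Adj r u → u ≠ r → gi u < m := by
    intro u h1 h2
    rw [hgi_eq u (hmemM u h1 h2)]
    have := ((G.neighborFinset (P u) \ {r}).equivFin ⟨u, hmemM u h1 h2⟩).isLt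
    have hcc := hMcard u h1 h2
    omega
  have hgi_inj : ∀ u u', ¬G.Adj r u → u ≠ r → ¬G.Adj r u' → u' ≠ r → P u = P u' →
      gi u = gi u' → u = u' := by
    intro u u' h1 h2 h1' h2' hPP hgg
    rw [hgi_eq u (hmemM u h1 h2), hgi_eq u' (hmemM u' h1' h2')] at hgg
    have hss : (G.neighborFinset (P u) \ {r} : Finset V) = G.neighborFinset (P u') \ {r} := by
      rw [hPP]
    rw [finIdx_congr hss (hmemM u h1 h2)] at hgg
    exact finIdx_inj _ _ _ hgg
  have hPc : ∀ u, ¬G.Adj r u → u ≠ r → ci (P u) < m := fun u h1 h2 =>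
    hci_lt _ (hP_eq u h1 h2).2
  -- the labelling
  set f : V → ℕ := fun u => if u = r then 0 else if G.Adj r u then h + ci u * p
      else gcL h p m (ci (P u) + gi u) with hf
  have hf_r : f r = 0 := by simp [hf]
  have hf_c : ∀ v, G.Adj r v → f v = h + ci v * p := by
    intro v hv; simp only [hf]; rw [if_neg hv.ne', if_pos hv]
  have hf_g : ∀ u, ¬G.Adj r u → u ≠ r → f u = gcL h p m (ci (P u) + gi u) := by
    intro u h1 h2; simp only [hf]; rw [if_neg h2, if_neg h1]
  have hph : (p:ℤ) ≤ (h:ℤ) := by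
    have h1 : p ≤ m*p := Nat.le_mul_of_pos_left p (by omega)
    exact_mod_cast le_trans h1 hmp
  -- span bound
  have hbound : ∀ v, f v < L := by
    intro v
    rcases htri v with rfl | hv | ⟨hv1, hv2, -⟩
    · rw [hf_r]; omega
    · rw [hf_c v hv]
      have h1 : ci v * p ≤ m * p := Nat.mul_le_mul_right p (hci_lt v hv).le
      omega
    · rw [hf_g v hv1 hv2]
      exact gcL_lt hp hmp (hPc v hv1 hv2) (hgi_lt v hv1 hv2)
  -- distance-1 condition
  have cond1 : ∀ u v, G.dist u v = 1 → (h:ℤ) ≤ cycDist L (f u) (f v) := by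
    intro u v hd
    have hadj : G.Adj u v := SimpleGraph.dist_eq_one_iff_adj.mp hd
    rcases htri u with rfl | hu | ⟨hu1, hu2, -⟩
    · rw [hf_r, hf_c v hadj]
      exact A1 hp hmp (hci_lt v hadj)
    · rcases htri v with rfl | hv | ⟨hv1, hv2, -⟩
      · rw [hf_r, hf_c u hu, cycDist_comm]
        exact A1 hp hmp (hci_lt u hu)
      · exact (tri hT hu hadj hv).elim
      · have hPv : u = P v := hP_uniq v hv1 hv2 u hadj.symm
        rw [hf_c u hu, hf_g v hv1 hv2, show ci (P v) = ci u from by rw [← hPv]]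
        exact A2 hp hmp (hci_lt u hu) (hgi_lt v hv1 hv2)
    · rcases htri v with rfl | hv | ⟨hv1, hv2, -⟩
      · exact (hu1 hadj.symm).elim
      · have hPu : v = P u := hP_uniq u hu1 hu2 v hadj
        rw [hf_c v hv, hf_g u hu1 hu2, show ci (P u) = ci v from by rw [← hPu], cycDist_comm]
        exact A2 hp hmp (hci_lt v hv) (hgi_lt u hu1 hu2)
      · exact (hv1 (gc_nbr_child hT hball hu1 hu2 hadj)).elim
  -- distance-2/3 condition
  have cond23 : ∀ u v, G.dist u v = 2 ∨ G.dist u v = 3 → (p:ℤ) ≤ cycDist L (f u) (f v) := by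
    intro u v hd
    have hne : u ≠ v := by
      rintro rfl
      rw [SimpleGraph.dist_self] at hd
      omega
    rcases htri u with rfl | hu | ⟨hu1, hu2, -⟩
    · rcases htri v with rfl | hv | ⟨hv1, hv2, -⟩
      · exact absurd rfl hne
      · rw [hf_r, hf_c v hv]
        exact le_trans hph (A1 hp hmp (hci_lt v hv))
      · rw [hf_r, hf_g v hv1 hv2]
        exact A4 hp hmp hm (hPc v hv1 hv2) (hgi_lt v hv1 hv2)
    · rcases htri v with rfl | hv | ⟨hv1, hv2, -⟩
      · rw [hf_r, hf_c u hu, cycDist_comm]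
        exact le_trans hph (A1 hp hmp (hci_lt u hu))
      · rw [hf_c u hu, hf_c v hv]
        have hcine : ci u ≠ ci v := fun hcc => hne (hci_inj u v hu hv hcc)
        rcases lt_or_gt_of_ne hcine with hlt | hlt
        · exact A3 hp (hci_lt u hu) (hci_lt v hv) hlt
        · rw [cycDist_comm]
          exact A3 hp (hci_lt v hv) (hci_lt u hu) hlt
      · rw [hf_c u hu, hf_g v hv1 hv2]
        exact A5 hp hmp (hPc v hv1 hv2) (hci_lt u hu) (hgi_lt v hv1 hv2)
    · rcases htri v with rfl | hv | ⟨hv1, hv2, -⟩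
      · rw [hf_r, hf_g u hu1 hu2, cycDist_comm]
        exact A4 hp hmp hm (hPc u hu1 hu2) (hgi_lt u hu1 hu2)
      · rw [hf_c v hv, hf_g u hu1 hu2, cycDist_comm]
        exact A5 hp hmp (hPc u hu1 hu2) (hci_lt v hv) (hgi_lt u hu1 hu2)
      · by_cases hPP : P u = P v
        · have hgine : gi u ≠ gi v := fun hgg =>
            hne (hgi_inj u v hu1 hu2 hv1 hv2 hPP hgg)
          rw [hf_g u hu1 hu2, hf_g v hv1 hv2, show ci (P u) = ci (P v) from by rw [hPP]]
          rcases lt_or_gt_of_ne hgine with hlt | hlt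
          · exact A6 hp hmp (hPc v hv1 hv2) (hgi_lt u hu1 hu2) (hgi_lt v hv1 hv2) hlt
          · rw [cycDist_comm]
            exact A6 hp hmp (hPc v hv1 hv2) (hgi_lt v hv1 hv2) (hgi_lt u hu1 hu2) hlt
        · exact (gc_gc_far hT hball hu1 hu2 hv1 hv2 (hP_eq u hu1 hu2).1
            (hP_eq v hv1 hv2).1 hPP hd).elim
  have hlab : IsCLabelling G h p L f := ⟨hbound, cond1, cond23⟩
  -- intervals
  set I : V → Set (ZMod L) := fun u => if u = r then CI L h ((m-1)*p)
      else if G.Adj r u then CI L (2*h + ci u * p) (m*p)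
      else CI L (h + ci (P u) * p) 0 with hI
  have hI_r : I r = CI L h ((m-1)*p) := by simp [hI]
  have hI_c : ∀ v, G.Adj r v → I v = CI L (2*h + ci v * p) (m*p) := by
    intro v hv; simp only [hI]; rw [if_neg hv.ne', if_pos hv]
  have hI_g : ∀ u, ¬G.Adj r u → u ≠ r → I u = CI L (h + ci (P u) * p) 0 := by
    intro u h1 h2; simp only [hI]; rw [if_neg h2, if_neg h1]
  have hcirc : ∀ u, IsCircInterval L (I u) := by
    intro u
    rcases htri u with rfl | hu | ⟨hu1, hu2, -⟩
    · rw [hI_r]; exact ⟨_, _, rfl⟩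
    · rw [hI_c u hu]; exact ⟨_, _, rfl⟩
    · rw [hI_g u hu1 hu2]; exact ⟨_, _, rfl⟩
  have hmemI : ∀ u w, G.Adj u w → ((f w : ZMod L) ∈ I u) := by
    intro u w hadj
    rcases htri u with rfl | hu | ⟨hu1, hu2, -⟩
    · rw [hI_r, hf_c w hadj]
      exact M1 hp (hci_lt w hadj)
    · rcases htri w with rfl | hw | ⟨hw1, hw2, -⟩
      · rw [hI_c u hu, hf_r]
        exact M2 hp (hci_lt u hu)
      · exact (tri hT hu hadj hw).elim
      · have hPw : u = P w := hP_uniq w hw1 hw2 u hadj.symm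
        rw [hI_c u hu, hf_g w hw1 hw2, show ci (P w) = ci u from by rw [← hPw]]
        exact M3 hp (hci_lt u hu) (hgi_lt w hw1 hw2)
    · have hw : w = P u := hP_uniq u hu1 hu2 w hadj
      rw [hI_g u hu1 hu2, hw, hf_c (P u) (hP_eq u hu1 hu2).2]
      exact M4
  have hdisj : ∀ u v, G.Adj u v → I u ∩ I v = ∅ := by
    intro u v hadj
    rcases htri u with rfl | hu | ⟨hu1, hu2, -⟩
    · rw [hI_r, hI_c v hadj]
      exact D1 hp hmp (hci_lt v hadj)
    · rcases htri v with rfl | hv | ⟨hv1, hv2, -⟩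
      · rw [Set.inter_comm, hI_r, hI_c u hu]
        exact D1 hp hmp (hci_lt u hu)
      · exact (tri hT hu hadj hv).elim
      · have hPv : u = P v := hP_uniq v hv1 hv2 u hadj.symm
        rw [hI_c u hu, hI_g v hv1 hv2, show ci (P v) = ci u from by rw [← hPv], Set.inter_comm]
        exact D2 hp hh hmp (hci_lt u hu)
    · rcases htri v with rfl | hv | ⟨hv1, hv2, -⟩
      · exact (hu1 hadj.symm).elim
      · have hPu : v = P u := hP_uniq u hu1 hu2 v hadj
        rw [hI_c v hv, hI_g u hu1 hu2, show ci (P u) = ci v from by rw [← hPu]]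
        exact D2 hp hh hmp (hci_lt v hv)
      · exact (hv1 (gc_nbr_child hT hball hu1 hu2 hadj)).elim
  have helegant : IsElegantCLabelling G h p L f := ⟨hlab, I, hcirc, hmemI, hdisj⟩
  -- lower bound
  have hlow : ∀ x : ℕ, 0 < x → ∀ f' : V → ℕ, IsCLabelling G h p x f' → L ≤ x := by
    intro x hx0 f' hf'
    obtain ⟨hfb, hfd1, hfd23⟩ := hf'
    have hNne : (G.neighborFinset r).Nonempty := by
      rw [← Finset.card_pos, hNcard]; omega
    obtain ⟨v, hvmem⟩ := hNne
    have hv : G.Adj r v := by simpa using hvmem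
    have hWcard : (G.neighborFinset v).card = m + 1 := by
      rw [SimpleGraph.card_neighborFinset_eq_degree, hnbr v hv]
    have hd1 : ∀ w ∈ G.neighborFinset v, G.dist v w = 1 := by
      intro w hw
      exact SimpleGraph.dist_eq_one_iff_adj.mpr (by simpa using hw)
    have hgcw : ∀ w ∈ G.neighborFinset v, w ≠ r → ¬G.Adj r w ∧ w ≠ r := by
      intro w hw hwr
      have haw : G.Adj v w := by simpa using hw
      exact ⟨fun hrw => tri hT hv haw hrw, hwr⟩
    have hd2 : ∀ w ∈ G.neighborFinset v, ∀ w' ∈ G.neighborFinset v, w ≠ w' →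
        G.dist w w' = 2 := by
      intro w hw w' hw' hne
      have haw : G.Adj v w := by simpa using hw
      have haw' : G.Adj v w' := by simpa using hw'
      by_cases hwr : w = r
      · subst hwr
        have hg := hgcw w' hw' (Ne.symm hne)
        exact gc_dist hT hball hg.1 hg.2
      · by_cases hw'r : w' = r
        · subst hw'r
          have hg := hgcw w hw hwr
          rw [SimpleGraph.dist_comm]
          exact gc_dist hT hball hg.1 hg.2
        · have hgw := hgcw w hw hwr
          have hgw' := hgcw w' hw' hw'r
          have hle : G.dist w w' ≤ 2 := by
            have := SimpleGraph.dist_le (SimpleGraph.Walk.cons haw.symm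
              (SimpleGraph.Walk.cons haw' SimpleGraph.Walk.nil))
            simpa using this
          have hne0 : G.dist w w' ≠ 0 := fun hz =>
            hne (hT.isConnected.dist_eq_zero_iff.mp hz)
          have hne1 : G.dist w w' ≠ 1 := fun h1 =>
            hgw'.1 (gc_nbr_child hT hball hgw.1 hgw.2 (SimpleGraph.dist_eq_one_iff_adj.mp h1))
          omega
    set g : V → ℤ := fun w => ((f' w : ℤ) - (f' v : ℤ)) % (x : ℤ) with hg
    have hwin : ∀ w ∈ G.neighborFinset v, (h:ℤ) ≤ g w ∧ g w ≤ (x:ℤ) - h := by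
      intro w hw
      exact window (hfb v) (hfb w) (hfd1 v w (hd1 w hw))
    have hsep : ∀ w ∈ G.neighborFinset v, ∀ w' ∈ G.neighborFinset v, w ≠ w' →
        (p:ℤ) ≤ |g w - g w'| := by
      intro w hw w' hw' hne
      exact sep (hfb v) (hfb w) (hfb w') (hfd23 w w' (Or.inl (hd2 w hw w' hw' hne)))
    have hinj : Set.InjOn g (G.neighborFinset v) := by
      intro w hw w' hw' hgg
      by_contra hne
      have := hsep w (Finset.mem_coe.mp hw) w' (Finset.mem_coe.mp hw') hne
      rw [hgg] at this
      simp at this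
      have hp' : (1:ℤ) ≤ p := by exact_mod_cast hp
      omega
    have hTcard : ((G.neighborFinset v).image g).card = m + 1 := by
      rw [Finset.card_image_of_injOn hinj, hWcard]
    have hp0 : (0:ℤ) < p := by exact_mod_cast hp
    obtain ⟨a, ha, b, hb, hab⟩ := spread hp0 hTcard (by
      intro a ha b hb hne
      obtain ⟨w, hw, rfl⟩ := Finset.mem_image.mp ha
      obtain ⟨w', hw', rfl⟩ := Finset.mem_image.mp hb
      exact hsep w hw w' hw' (fun hww => hne (congrArg g hww)))
    obtain ⟨w, hw, rfl⟩ := Finset.mem_image.mp ha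
    obtain ⟨w', hw', rfl⟩ := Finset.mem_image.mp hb
    have h1 := hwin w hw
    have h2 := hwin w' hw'
    have hfin : ((2*h + m*p : ℕ):ℤ) ≤ (x:ℤ) := by
      push_cast
      linarith [h1.1, h2.2, hab]
    exact_mod_cast hfin
  have hmemC : L ∈ {ℓ : ℕ | 0 < ℓ ∧ ∃ f : V → ℕ, IsCLabelling G h p ℓ f} := ⟨hL0, f, hlab⟩
  have hmemE : L ∈ {ℓ : ℕ | 0 < ℓ ∧ ∃ f : V → ℕ, IsElegantCLabelling G h p ℓ f} :=
    ⟨hL0, f, helegant⟩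
  constructor
  · rw [sigmaNum]
    apply le_antisymm
    · exact Nat.sInf_le hmemC
    · apply le_csInf ⟨L, hmemC⟩
      rintro x ⟨hx0, f', hf'⟩
      exact hlow x hx0 f' hf'
  · rw [sigmaStar]
    apply le_antisymm
    · exact Nat.sInf_le hmemE
    · apply le_csInf ⟨L, hmemE⟩
      rintro x ⟨hx0, f', hf'⟩
      exact hlow x hx0 f' hf'.1
end

section
/- Let h, p ≥ 1 and m ≥ 2 be integers with h ≥ (m+1)·p. Then σ_{h,p,p}(T̂_{m,2}) = σ*_{h,p,p}(T̂_{m,2}) = 2h + mp. -/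
open SimpleGraph

-- ===== auxiliary lemmas =====
open SimpleGraph
open scoped Classical
set_option linter.unusedSectionVars false
lemma cyc_ge {ℓ a b c : ℕ} (h2 : c + b ≤ a) (h3 : a + c ≤ ℓ + b) :
    (c : ℤ) ≤ cycDist ℓ a b := by
  unfold cycDist
  have hab : |(a:ℤ) - b| = (a:ℤ) - b := abs_of_nonneg (by omega)
  rw [hab]; apply le_min <;> omega

section
variable {h p m : ℕ} (hp : 1 ≤ p) (hh : 1 ≤ h) (hmp : (m+1)*p ≤ h)

lemma pm (p : ℕ) {a b : ℕ} (hab : a ≤ b) : a * p ≤ b * p := Nat.mul_le_mul hab (le_refl p)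

lemma pe (p a : ℕ) : (a+1)*p = a*p + p := by ring

lemma hmp' (hmp : (m+1)*p ≤ h) : m*p + p ≤ h := by
  have e := pe p m; omega

include hp hh hmp

lemma C1 {i : ℕ} (hi : i ≤ m) : (h:ℤ) ≤ cycDist (2*h+m*p) (h + i*p) 0 := by
  have := pm p hi; apply cyc_ge <;> omega

lemma C2 {i j : ℕ} (hj : j < i) (hi : i ≤ m) :
    (h:ℤ) ≤ cycDist (2*h+m*p) (h + i*p) ((j+1)*p) := by
  have h1 := pm p hi
  have h2 : (j+1)*p ≤ i*p := pm p (by omega)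
  apply cyc_ge <;> omega

lemma C3 {i j : ℕ} (hij : i ≤ j) (hj : j < m) :
    (h:ℤ) ≤ cycDist (2*h+m*p) (2*h + j*p) (h + i*p) := by
  have h1 := pm p (le_of_lt hj)
  have h2 : i*p ≤ j*p := pm p hij
  apply cyc_ge <;> omega

lemma C4 {i : ℕ} (hi : i ≤ m) : (p:ℤ) ≤ cycDist (2*h+m*p) (h + i*p) 0 := by
  have h1 := pm p hi; have h2 := hmp' hmp
  apply cyc_ge <;> omega

lemma C5 {i i' : ℕ} (hi' : i' < i) (hi : i ≤ m) :
    (p:ℤ) ≤ cycDist (2*h+m*p) (h + i*p) (h + i'*p) := by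
  have h1 := pm p hi
  have h2 : (i'+1)*p ≤ i*p := pm p (by omega)
  have e := pe p i'
  have h3 := hmp' hmp
  apply cyc_ge <;> omega

lemma C6 {j : ℕ} (hj : j < m) : (p:ℤ) ≤ cycDist (2*h+m*p) ((j+1)*p) 0 := by
  have h1 : (j+1)*p ≤ m*p := pm p (by omega)
  have e := pe p j
  have h2 := hmp' hmp
  apply cyc_ge <;> omega

lemma C7 {j : ℕ} (hj : j < m) : (p:ℤ) ≤ cycDist (2*h+m*p) (2*h + j*p) 0 := by
  have h1 : (j+1)*p ≤ m*p := pm p (by omega)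
  have e := pe p j
  have h2 := hmp' hmp
  apply cyc_ge <;> omega

lemma C8 {i' j : ℕ} (hi' : i' ≤ m) (hj : j < m) :
    (p:ℤ) ≤ cycDist (2*h+m*p) (h + i'*p) ((j+1)*p) := by
  have h1 := pm p hi'
  have h2 : (j+1)*p ≤ m*p := pm p (by omega)
  have e := pe p j
  have h3 := hmp' hmp
  apply cyc_ge <;> omega

lemma C9 {i' j : ℕ} (hi' : i' ≤ m) (hj : j < m) :
    (p:ℤ) ≤ cycDist (2*h+m*p) (2*h + j*p) (h + i'*p) := by
  have h1 := pm p hi'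
  have h2 : (j+1)*p ≤ m*p := pm p (by omega)
  have e := pe p j
  have h3 := hmp' hmp
  apply cyc_ge <;> omega

lemma C10 {j j' : ℕ} (hj' : j' < j) (hj : j < m) :
    (p:ℤ) ≤ cycDist (2*h+m*p) ((j+1)*p) ((j'+1)*p) := by
  have h1 : (j'+2)*p ≤ (j+1)*p := pm p (by omega)
  have e1 : (j'+2)*p = (j'+1)*p + p := by ring
  have h2 : (j+1)*p ≤ m*p := pm p (by omega)
  have h3 := hmp' hmp
  apply cyc_ge <;> omega

lemma C11 {j j' : ℕ} (hj' : j' < j) (hj : j < m) :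
    (p:ℤ) ≤ cycDist (2*h+m*p) (2*h + j*p) (2*h + j'*p) := by
  have h1 : (j'+1)*p ≤ j*p := pm p (by omega)
  have e := pe p j'
  have h2 : j*p ≤ m*p := pm p (by omega)
  have h3 := hmp' hmp
  apply cyc_ge <;> omega

lemma C12 {j j' : ℕ} (hj' : j' < m) (hj : j < m) :
    (p:ℤ) ≤ cycDist (2*h+m*p) (2*h + j*p) ((j'+1)*p) := by
  have h1 : (j'+1)*p ≤ m*p := pm p (by omega)
  have e := pe p j'
  have h2 : j*p ≤ m*p := pm p (by omega)
  have h3 := hmp' hmp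
  apply cyc_ge <;> omega

end

lemma cycDist_comm (ℓ a b : ℕ) : cycDist ℓ a b = cycDist ℓ b a := by
  unfold cycDist; rw [abs_sub_comm]


lemma cyc_bounds {ℓ a b c : ℕ} (hc : (c:ℤ) ≤ cycDist ℓ a b) :
    ((c:ℤ) ≤ (a:ℤ) - b ∧ (a:ℤ) - b ≤ (ℓ:ℤ) - c) ∨ ((c:ℤ) ≤ (b:ℤ) - a ∧ (b:ℤ) - a ≤ (ℓ:ℤ) - c) := by
  unfold cycDist at hc
  have h1 := le_trans hc (min_le_left _ _)
  have h2 := le_trans hc (min_le_right _ _)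
  rcases abs_cases ((a:ℤ) - (b:ℤ)) with ⟨he, _⟩ | ⟨he, _⟩ <;> rw [he] at h1 h2
  · left; omega
  · right; omega

lemma modeq_bounded {n x y : ℕ} (hmod : x ≡ y [MOD n]) (hb : x < y + n) (hb2 : y < x + n) : x = y := by
  have hd := hmod.dvd
  have := Int.eq_zero_of_abs_lt_dvd hd (by rw [abs_lt]; omega)
  omega

lemma walk_len2 {V} {G : SimpleGraph V} {u v : V} (q : G.Walk u v) (hq : q.length = 2) :
    ∃ x, G.Adj u x ∧ G.Adj x v := by
  match q with
  | .cons h1 (.cons h2 .nil) => exact ⟨_, h1, h2⟩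
  | .nil => simp at hq
  | .cons _ .nil => simp at hq
  | .cons _ (.cons _ (.cons _ _)) => simp [SimpleGraph.Walk.length_cons] at hq

lemma walk_len3 {V} {G : SimpleGraph V} {u v : V} (q : G.Walk u v) (hq : q.length = 3) :
    ∃ x y, G.Adj u x ∧ G.Adj x y ∧ G.Adj y v := by
  match q with
  | .cons h1 (.cons h2 (.cons h3 .nil)) => exact ⟨_, _, h1, h2, h3⟩
  | .nil => simp at hq
  | .cons _ .nil => simp at hq
  | .cons _ (.cons _ .nil) => simp at hq
  | .cons _ (.cons _ (.cons _ (.cons _ _))) => simp [SimpleGraph.Walk.length_cons] at hq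

open SimpleGraph in
lemma isPath2 {V} {G : SimpleGraph V} {a b c : V} (h1 : G.Adj a b) (h2 : G.Adj b c) (hac : a ≠ c) :
    (Walk.cons h1 (Walk.cons h2 Walk.nil)).IsPath := by
  simp [Walk.isPath_def, h1.ne, h2.ne, hac]

open SimpleGraph in
lemma isPath3 {V} {G : SimpleGraph V} {a b c d : V} (h1 : G.Adj a b) (h2 : G.Adj b c) (h3 : G.Adj c d)
    (hac : a ≠ c) (had : a ≠ d) (hbd : b ≠ d) :
    (Walk.cons h1 (Walk.cons h2 (Walk.cons h3 Walk.nil))).IsPath := by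
  simp [Walk.isPath_def, h1.ne, h2.ne, h3.ne, hac, had, hbd]

open SimpleGraph in
lemma path_len_unique {V} {G : SimpleGraph V} (hT : G.IsTree) {u v : V} {q1 q2 : G.Walk u v}
    (h1 : q1.IsPath) (h2 : q2.IsPath) : q1.length = q2.length := by
  rw [(hT.existsUnique_path u v).unique h1 h2]

lemma path_eq_unique {V} {G : SimpleGraph V} (hT : G.IsTree) {u v : V} {q1 q2 : G.Walk u v}
    (h1 : q1.IsPath) (h2 : q2.IsPath) : q1 = q2 :=
  (hT.existsUnique_path u v).unique h1 h2



def ICirc (n a s : ℕ) : Set (ZMod n) := {x : ZMod n | ∃ i : ℕ, i ≤ s ∧ x = (a : ZMod n) + (i : ZMod n)}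

lemma ICirc_isCircInterval (n a s : ℕ) : IsCircInterval n (ICirc n a s) := ⟨a, s, rfl⟩

lemma mem_ICirc {n a s : ℕ} (k : ℕ) (hk : k ≤ s) (b : ℕ) (hb : b ≡ a + k [MOD n]) :
    ((b : ℕ) : ZMod n) ∈ ICirc n a s := by
  refine ⟨k, hk, ?_⟩
  rw [← Nat.cast_add, ZMod.natCast_eq_natCast_iff]
  exact hb

lemma ICirc_disj {n a b s t : ℕ}
    (H : ∀ k l : ℕ, k ≤ s → l ≤ t → ¬ (a + k) ≡ (b + l) [MOD n]) :
    ICirc n a s ∩ ICirc n b t = ∅ := by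
  ext x
  simp only [Set.mem_inter_iff, Set.mem_empty_iff_false, iff_false]
  rintro ⟨⟨k, hk, rfl⟩, ⟨l, hl, he⟩⟩
  refine H k l hk hl ?_
  rw [← Nat.cast_add, ← Nat.cast_add, ← ZMod.natCast_eq_natCast_iff] at *
  push_cast at he ⊢
  exact he

lemma arc_card {n : ℕ} [NeZero n] (a : ℤ) (s : ℕ) (hs : s ≤ n) :
    (Finset.image (fun t : ℕ => ((a + t : ℤ) : ZMod n)) (Finset.range s)).card = s := by
  rw [Finset.card_image_of_injOn, Finset.card_range]
  intro t ht u hu he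
  simp only [Finset.coe_range, Set.mem_Iio] at ht hu
  rw [ZMod.intCast_eq_intCast_iff] at he
  have hd := he.dvd
  have : ((a:ℤ) + u) - (a + t) = (u:ℤ) - t := by ring
  rw [this] at hd
  have := Int.eq_zero_of_abs_lt_dvd hd (by rw [abs_lt]; omega)
  omega

lemma arc_disj {n : ℕ} {a b : ℤ} {s t : ℕ}
    (H : ∀ k l : ℕ, k < s → l < t → ¬ ((n:ℤ) ∣ (a + k) - (b + l))) :
    Disjoint (Finset.image (fun t : ℕ => ((a + t : ℤ) : ZMod n)) (Finset.range s))
      (Finset.image (fun u : ℕ => ((b + u : ℤ) : ZMod n)) (Finset.range t)) := by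
  rw [Finset.disjoint_left]
  rintro x hx hy
  simp only [Finset.mem_image, Finset.mem_range] at hx hy
  obtain ⟨k, hk, rfl⟩ := hx
  obtain ⟨l, hl, he⟩ := hy
  rw [ZMod.intCast_eq_intCast_iff] at he
  exact H k l hk hl he.dvd

section Struct
variable {V : Type} {G : SimpleGraph V} {r : V} (hT : G.IsTree)

include hT

/-- no triangle through r -/
lemma noadj2 {u v : V} (hu : G.Adj r u) (hv : G.Adj r v) : ¬ G.Adj u v := by
  intro huv
  have p1 := isPath2 hu huv hv.ne
  have p2 : (Walk.cons hv Walk.nil).IsPath := by simp [Walk.isPath_def, hv.ne]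
  have := path_len_unique hT p1 p2
  simp at this

lemma dist_two_not_adj {w : V} (hw : G.dist r w = 2) : ¬ G.Adj r w := by
  intro hadj
  rw [← SimpleGraph.dist_eq_one_iff_adj] at hadj
  omega

lemma dist_two_ne {w : V} (hw : G.dist r w = 2) : w ≠ r := by
  rintro rfl; rw [SimpleGraph.dist_self] at hw; omega

lemma parent_exists {w : V} (hw : G.dist r w = 2) : ∃ x, G.Adj r x ∧ G.Adj x w := by
  obtain ⟨q, hq⟩ := (hT.isConnected r w).exists_walk_length_eq_dist
  exact walk_len2 q (by rw [hq, hw])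

lemma parent_unique {w x y : V} (hw : G.dist r w = 2) (hx : G.Adj r x) (hxw : G.Adj x w)
    (hy : G.Adj r y) (hyw : G.Adj y w) : x = y := by
  have hrw : r ≠ w := (dist_two_ne hT hw).symm
  have p1 := isPath2 hx hxw hrw
  have p2 := isPath2 hy hyw hrw
  have := path_eq_unique hT p1 p2
  have := congrArg Walk.support this
  simp [Walk.support_cons] at this
  exact this

/-- any neighbour of a distance-2 vertex is a neighbour of r -/
lemma leaf_nbr {w z : V} (hball : ∀ v, G.dist r v ≤ 2) (hw : G.dist r w = 2) (hzw : G.Adj z w) :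
    G.Adj r z := by
  have hdz := hball z
  have hrw : r ≠ w := (dist_two_ne hT hw).symm
  rcases (show G.dist r z = 0 ∨ G.dist r z = 1 ∨ G.dist r z = 2 by omega) with hz | hz | hz
  · have : r = z := (hT.isConnected.dist_eq_zero_iff).mp hz
    subst this
    exact absurd hzw (dist_two_not_adj hT hw)
  · exact SimpleGraph.dist_eq_one_iff_adj.mp hz
  · exfalso
    obtain ⟨x, hx, hxz⟩ := parent_exists hT hz
    obtain ⟨y, hy, hyw⟩ := parent_exists hT hw
    have hrz : r ≠ z := (dist_two_ne hT hz).symm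
    have hxw : x ≠ w := fun he => (dist_two_not_adj hT hw) (he ▸ hx)
    have p1 := isPath2 hy hyw hrw
    have p2 := isPath3 hx hxz hzw hrz hrw hxw
    have := path_len_unique hT p1 p2
    simp at this
end Struct


noncomputable def pafn {V : Type} (G : SimpleGraph V) (r : V) (w : V) : V :=
  if hw : ∃ x, G.Adj r x ∧ G.Adj x w then hw.choose else r

lemma pafn_adj {V : Type} {G : SimpleGraph V} {r w : V} (hw : ∃ x, G.Adj r x ∧ G.Adj x w) :
    G.Adj r (pafn G r w) ∧ G.Adj (pafn G r w) w := by
  rw [pafn, dif_pos hw]; exact hw.choose_spec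

noncomputable def nidx {V : Type} [Fintype V] (G : SimpleGraph V) [DecidableRel G.Adj]
    (r v : V) : ℕ :=
  if hv : v ∈ G.neighborFinset r then ((G.neighborFinset r).equivFin ⟨v, hv⟩ : Fin _) else 0

lemma nidx_lt {V : Type} [Fintype V] {G : SimpleGraph V} [DecidableRel G.Adj] {r v : V}
    (hv : v ∈ G.neighborFinset r) : nidx G r v < (G.neighborFinset r).card := by
  rw [nidx, dif_pos hv]; exact ((G.neighborFinset r).equivFin ⟨v, hv⟩).isLt

lemma equivFin_inj {V : Type} [DecidableEq V] {s : Finset V} {a b : V} (ha : a ∈ s) (hb : b ∈ s)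
    (he : (s.equivFin ⟨a, ha⟩ : ℕ) = (s.equivFin ⟨b, hb⟩ : ℕ)) : a = b := by
  exact congrArg Subtype.val (s.equivFin.injective (Fin.ext he))

lemma nidx_inj {V : Type} [Fintype V] {G : SimpleGraph V} [DecidableRel G.Adj] {r u v : V}
    (hu : u ∈ G.neighborFinset r) (hv : v ∈ G.neighborFinset r)
    (he : nidx G r u = nidx G r v) : u = v := by
  classical
  rw [nidx, dif_pos hu, nidx, dif_pos hv] at he
  exact equivFin_inj hu hv he

/-- the set of children of `v` -/
noncomputable def chl {V : Type} [Fintype V] [DecidableEq V] (G : SimpleGraph V)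
    [DecidableRel G.Adj] (r v : V) : Finset V :=
  (G.neighborFinset v).filter (· ≠ r)

noncomputable def cidx {V : Type} [Fintype V] [DecidableEq V] (G : SimpleGraph V)
    [DecidableRel G.Adj] (r w : V) : ℕ :=
  if hw : w ∈ chl G r (pafn G r w) then ((chl G r (pafn G r w)).equivFin ⟨w, hw⟩ : Fin _) else 0

lemma cidx_lt {V : Type} [Fintype V] [DecidableEq V] {G : SimpleGraph V} [DecidableRel G.Adj]
    {r w : V} (hw : w ∈ chl G r (pafn G r w)) : cidx G r w < (chl G r (pafn G r w)).card := by
  rw [cidx, dif_pos hw]; exact (Finset.equivFin _ ⟨w, hw⟩).isLt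

lemma cidx_inj {V : Type} [Fintype V] [DecidableEq V] {G : SimpleGraph V} [DecidableRel G.Adj]
    {r u w : V} (hpe : pafn G r u = pafn G r w)
    (hu : u ∈ chl G r (pafn G r u)) (hw : w ∈ chl G r (pafn G r w))
    (he : cidx G r u = cidx G r w) : u = w := by
  rw [cidx, cidx] at he
  rw [hpe] at hu he
  rw [dif_pos hu, dif_pos hw] at he
  exact equivFin_inj hu hw he

noncomputable def flab {V : Type} [Fintype V] [DecidableEq V] (G : SimpleGraph V)
    [DecidableRel G.Adj] (r : V) (h p : ℕ) (u : V) : ℕ :=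
  if u = r then 0
  else if u ∈ G.neighborFinset r then h + nidx G r u * p
  else if cidx G r u < nidx G r (pafn G r u) then (cidx G r u + 1) * p
  else 2 * h + cidx G r u * p

lemma flab_r {V : Type} [Fintype V] [DecidableEq V] (G : SimpleGraph V) [DecidableRel G.Adj]
    (r : V) (h p : ℕ) : flab G r h p r = 0 := by simp [flab]

lemma flab_nbr {V : Type} [Fintype V] [DecidableEq V] {G : SimpleGraph V} [DecidableRel G.Adj]
    {r v : V} (h p : ℕ) (hv : v ∈ G.neighborFinset r) :
    flab G r h p v = h + nidx G r v * p := by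
  have hne : v ≠ r := (G.mem_neighborFinset r v).mp hv |>.ne'
  rw [flab, if_neg hne, if_pos hv]

lemma flab_leaf {V : Type} [Fintype V] [DecidableEq V] {G : SimpleGraph V} [DecidableRel G.Adj]
    {r w : V} (h p : ℕ) (hne : w ≠ r) (hnv : w ∉ G.neighborFinset r) :
    flab G r h p w = if cidx G r w < nidx G r (pafn G r w) then (cidx G r w + 1) * p
      else 2 * h + cidx G r w * p := by
  rw [flab, if_neg hne, if_neg hnv]

theorem lowerb {V : Type} [Fintype V] (G : SimpleGraph V) [DecidableRel G.Adj]
    (hT : G.IsTree) (m : ℕ) (hm : 2 ≤ m) (r : V)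
    (hr : G.degree r = m + 1)
    (h p : ℕ) (hp : 1 ≤ p) (hh : 1 ≤ h) (hmp : (m + 1) * p ≤ h)
    (ℓ : ℕ) (hl : 0 < ℓ) (f : V → ℕ) (hf : IsCLabelling G h p ℓ f) :
    2 * h + m * p ≤ ℓ := by
  classical
  obtain ⟨hlt, h1, h23⟩ := hf
  haveI : NeZero ℓ := ⟨hl.ne'⟩
  have hmp2 := hmp' hmp
  set N := G.neighborFinset r with hN
  have hNcard : N.card = m + 1 := hr
  have hd1 : ∀ v ∈ N, G.dist r v = 1 := fun v hv =>
    SimpleGraph.dist_eq_one_iff_adj.mpr ((G.mem_neighborFinset r v).mp hv)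
  have hd2 : ∀ u ∈ N, ∀ v ∈ N, u ≠ v → G.dist u v = 2 := by
    intro u hu v hv huv
    have hau : G.Adj r u := (G.mem_neighborFinset r u).mp hu
    have hav : G.Adj r v := (G.mem_neighborFinset r v).mp hv
    have hle : G.dist u v ≤ 2 := by
      have := SimpleGraph.dist_le (SimpleGraph.Walk.cons hau.symm (SimpleGraph.Walk.cons hav SimpleGraph.Walk.nil))
      simpa using this
    have h0 : G.dist u v ≠ 0 := fun he => huv (hT.isConnected.dist_eq_zero_iff.mp he)
    have hne1 : G.dist u v ≠ 1 := fun he =>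
      noadj2 hT hau hav (SimpleGraph.dist_eq_one_iff_adj.mp he)
    omega
  -- ℓ ≥ 2h
  obtain ⟨v0, hv0⟩ : N.Nonempty := Finset.card_pos.mp (by omega)
  have hl2h : 2 * h ≤ ℓ := by
    rcases cyc_bounds (h1 r v0 (hd1 v0 hv0)) with ⟨e1, e2⟩ | ⟨e1, e2⟩ <;> omega
  -- the arcs
  set Sv : V → Finset (ZMod ℓ) :=
    fun v => Finset.image (fun t : ℕ => (Int.cast ((f v : ℤ) + (t : ℤ)) : ZMod ℓ)) (Finset.range p) with hSv
  set Sr : Finset (ZMod ℓ) :=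
    Finset.image (fun t : ℕ => (Int.cast ((f r : ℤ) - (h:ℤ) + (p:ℤ) + (t : ℤ)) : ZMod ℓ)) (Finset.range (2*h - p)) with hSr
  have hcardSv : ∀ v, (Sv v).card = p := by
    intro v; simp only [hSv]; exact arc_card (n := ℓ) ((f v : ℤ)) p (by omega)
  have hcardSr : Sr.card = 2*h - p := by
    simp only [hSr]; exact arc_card (n := ℓ) ((f r : ℤ) - h + p) (2*h - p) (by omega)
  have hdisjvv : ∀ u ∈ N, ∀ v ∈ N, u ≠ v → Disjoint (Sv u) (Sv v) := by
    intro u hu v hv huv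
    simp only [hSv]
    apply arc_disj
    intro k l hk hl hdvd
    have hb := cyc_bounds (h23 u v (Or.inl (hd2 u hu v hv huv)))
    have e0 := Int.eq_zero_of_abs_lt_dvd hdvd (by rw [abs_lt]; rcases hb with ⟨e1,e2⟩|⟨e1,e2⟩ <;> constructor <;> omega)
    rcases hb with ⟨e1,e2⟩|⟨e1,e2⟩ <;> omega
  have hdisjrv : ∀ v ∈ N, Disjoint Sr (Sv v) := by
    intro v hv
    simp only [hSv, hSr]
    apply arc_disj
    intro k l hk hl hdvd
    have hb := cyc_bounds (h1 r v (hd1 v hv))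
    have e0 := Int.eq_zero_of_abs_lt_dvd hdvd (by rw [abs_lt]; rcases hb with ⟨e1,e2⟩|⟨e1,e2⟩ <;> constructor <;> omega)
    rcases hb with ⟨e1,e2⟩|⟨e1,e2⟩ <;> omega
  have hbU : (N.biUnion Sv).card = (m+1) * p := by
    rw [Finset.card_biUnion hdisjvv]
    rw [Finset.sum_congr rfl (fun v _ => hcardSv v), Finset.sum_const, hNcard, smul_eq_mul]
  have hdisj2 : Disjoint Sr (N.biUnion Sv) :=
    Finset.disjoint_biUnion_right _ _ _ |>.mpr (fun v hv => hdisjrv v hv)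
  have hcount := Finset.card_le_univ (Sr ∪ N.biUnion Sv)
  rw [Finset.card_union_of_disjoint hdisj2, hcardSr, hbU, ZMod.card] at hcount
  have e := pe p m
  omega

set_option maxHeartbeats 2000000 in
theorem construction {V : Type} [Fintype V] (G : SimpleGraph V) [DecidableRel G.Adj]
    (hT : G.IsTree) (m : ℕ) (hm : 2 ≤ m) (r : V)
    (hr : G.degree r = m + 1)
    (hnbr : ∀ v : V, G.Adj r v → G.degree v = m + 1)
    (hball : ∀ v : V, G.dist r v ≤ 2)
    (h p : ℕ) (hp : 1 ≤ p) (hh : 1 ≤ h) (hmp : (m + 1) * p ≤ h) :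
    ∃ f : V → ℕ, IsElegantCLabelling G h p (2*h + m*p) f := by
  classical
  have hmp2 := hmp' hmp
  set ℓ := 2*h + m*p with hℓ
  set N := G.neighborFinset r with hN
  have hNcard : N.card = m + 1 := hr
  set f : V → ℕ := flab G r h p with hfdef
  have memN : ∀ {v}, v ∈ N ↔ G.Adj r v := fun {v} => G.mem_neighborFinset r v
  have tri : ∀ v : V, v = r ∨ v ∈ N ∨ G.dist r v = 2 := by
    intro v
    have := hball v
    rcases (show G.dist r v = 0 ∨ G.dist r v = 1 ∨ G.dist r v = 2 by omega) with h0|h1|h2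
    · left; exact (hT.isConnected.dist_eq_zero_iff.mp h0).symm
    · right; left; exact memN.mpr (SimpleGraph.dist_eq_one_iff_adj.mp h1)
    · right; right; exact h2
  have hner : ∀ {v}, v ∈ N → v ≠ r := fun {v} hv => (memN.mp hv).ne'
  have hnidx : ∀ v ∈ N, nidx G r v ≤ m := by
    intro v hv
    have h1 := nidx_lt (G := G) (r := r) (v := v) hv
    rw [← hN, hNcard] at h1
    omega
  have hfN : ∀ v ∈ N, f v = h + nidx G r v * p := fun v hv => flab_nbr h p hv
  have hfr : f r = 0 := flab_r G r h p
  have leaf_pa : ∀ w, G.dist r w = 2 → G.Adj r (pafn G r w) ∧ G.Adj (pafn G r w) w :=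
    fun w hw => pafn_adj (parent_exists hT hw)
  have leaf_pa_eq : ∀ w x, G.dist r w = 2 → G.Adj r x → G.Adj x w → pafn G r w = x := by
    intro w x hw hx hxw
    obtain ⟨h1, h2⟩ := leaf_pa w hw
    exact parent_unique hT hw h1 h2 hx hxw
  have hchl_card : ∀ v, G.Adj r v → (chl G r v).card = m := by
    intro v hv
    rw [chl, Finset.filter_ne',
      Finset.card_erase_of_mem (by rw [SimpleGraph.mem_neighborFinset]; exact hv.symm),
      SimpleGraph.card_neighborFinset_eq_degree, hnbr v hv]
    omega
  have leaf_mem_chl : ∀ w, G.dist r w = 2 → w ∈ chl G r (pafn G r w) := by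
    intro w hw
    obtain ⟨h1, h2⟩ := leaf_pa w hw
    rw [chl, Finset.mem_filter, SimpleGraph.mem_neighborFinset]
    exact ⟨h2, dist_two_ne hT hw⟩
  have hcidx : ∀ w, G.dist r w = 2 → cidx G r w < m := by
    intro w hw
    have := cidx_lt (leaf_mem_chl w hw)
    rwa [hchl_card _ (leaf_pa w hw).1] at this
  have leaf_notN : ∀ w, G.dist r w = 2 → w ∉ N := by
    intro w hw hmem
    exact dist_two_not_adj hT hw (memN.mp hmem)
  have hfL : ∀ w, G.dist r w = 2 → f w = if cidx G r w < nidx G r (pafn G r w)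
      then (cidx G r w + 1) * p else 2*h + cidx G r w * p :=
    fun w hw => flab_leaf h p (dist_two_ne hT hw) (leaf_notN w hw)
  have adjcase : ∀ u v, G.Adj u v →
      (u = r ∧ v ∈ N) ∨ (v = r ∧ u ∈ N) ∨
      (u ∈ N ∧ G.dist r v = 2 ∧ pafn G r v = u) ∨
      (v ∈ N ∧ G.dist r u = 2 ∧ pafn G r u = v) := by
    intro u v huv
    rcases tri u with rfl | hu | hu
    · exact Or.inl ⟨rfl, memN.mpr huv⟩
    · rcases tri v with rfl | hv | hv
      · exact Or.inr (Or.inl ⟨rfl, hu⟩)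
      · exact absurd huv (noadj2 hT (memN.mp hu) (memN.mp hv))
      · exact Or.inr (Or.inr (Or.inl ⟨hu, hv, leaf_pa_eq v u hv (memN.mp hu) huv⟩))
    · have hrv : G.Adj r v := leaf_nbr hT hball hu huv.symm
      exact Or.inr (Or.inr (Or.inr ⟨memN.mpr hrv, hu, leaf_pa_eq u v hu hrv huv.symm⟩))
  -- bounds
  have hbound : ∀ v, f v < ℓ := by
    intro v
    rcases tri v with rfl | hv | hv
    · rw [hfr]; omega
    · rw [hfN v hv]
      have := pm p (hnidx v hv)
      omega
    · rw [hfL v hv]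
      have h1 : (cidx G r v + 1) * p ≤ m * p := pm p (hcidx v hv)
      have e := pe p (cidx G r v)
      split <;> omega
  -- distance-1 condition
  have cond1 : ∀ u v, G.dist u v = 1 → (h:ℤ) ≤ cycDist ℓ (f u) (f v) := by
    intro u v hd
    have hadj : G.Adj u v := SimpleGraph.dist_eq_one_iff_adj.mp hd
    rcases adjcase u v hadj with ⟨rfl, hv⟩ | ⟨rfl, hu⟩ | ⟨hu, hv2, hpa⟩ | ⟨hv, hu2, hpa⟩
    · rw [hfr, hfN v hv, cycDist_comm]
      exact C1 hp hh hmp (hnidx v hv)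
    · rw [hfr, hfN u hu]
      exact C1 hp hh hmp (hnidx u hu)
    · rw [hfN u hu, hfL v hv2, hpa]
      rcases lt_or_ge (cidx G r v) (nidx G r u) with hc | hc
      · rw [if_pos hc]
        exact C2 hp hh hmp hc (hnidx u hu)
      · rw [if_neg (not_lt.mpr hc)]
        rw [cycDist_comm]
        exact C3 hp hh hmp hc (hcidx v hv2)
    · rw [hfN v hv, hfL u hu2, hpa]
      rcases lt_or_ge (cidx G r u) (nidx G r v) with hc | hc
      · rw [if_pos hc, cycDist_comm]
        exact C2 hp hh hmp hc (hnidx v hv)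
      · rw [if_neg (not_lt.mpr hc)]
        exact C3 hp hh hmp hc (hcidx u hu2)
  -- distance-2/3 condition
  have cond23 : ∀ u v, G.dist u v = 2 ∨ G.dist u v = 3 → (p:ℤ) ≤ cycDist ℓ (f u) (f v) := by
    intro u v hd
    have hne : u ≠ v := by
      rintro rfl
      rw [SimpleGraph.dist_self] at hd
      omega
    rcases tri u with rfl | hu | hu <;> rcases tri v with rfl | hv | hv
    · exact absurd rfl hne
    · rw [hfr, hfN v hv, cycDist_comm]
      exact C4 hp hh hmp (hnidx v hv)
    · rw [hfr, hfL v hv, cycDist_comm]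
      split
      · exact C6 hp hh hmp (hcidx v hv)
      · exact C7 hp hh hmp (hcidx v hv)
    · rw [hfr, hfN u hu]
      exact C4 hp hh hmp (hnidx u hu)
    · -- both neighbours
      rw [hfN u hu, hfN v hv]
      have hii : nidx G r u ≠ nidx G r v := fun he => hne (nidx_inj hu hv he)
      rcases lt_or_gt_of_ne hii with hlt | hlt
      · rw [cycDist_comm]
        exact C5 hp hh hmp hlt (hnidx v hv)
      · exact C5 hp hh hmp hlt (hnidx u hu)
    · -- u ∈ N, v leaf
      rw [hfN u hu, hfL v hv]
      split
      · exact C8 hp hh hmp (hnidx u hu) (hcidx v hv)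
      · rw [cycDist_comm]
        exact C9 hp hh hmp (hnidx u hu) (hcidx v hv)
    · rw [hfr, hfL u hu]
      split
      · exact C6 hp hh hmp (hcidx u hu)
      · exact C7 hp hh hmp (hcidx u hu)
    · rw [hfN v hv, hfL u hu]
      split
      · rw [cycDist_comm]
        exact C8 hp hh hmp (hnidx v hv) (hcidx u hu)
      · exact C9 hp hh hmp (hnidx v hv) (hcidx u hu)
    · -- both leaves
      have hsame : pafn G r u = pafn G r v := by
        rcases hd with hd2 | hd3
        · obtain ⟨q, hq⟩ := (hT.isConnected u v).exists_walk_length_eq_dist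
          obtain ⟨x, hux, hxv⟩ := walk_len2 q (by rw [hq, hd2])
          have hrx : G.Adj r x := leaf_nbr hT hball hu hux.symm
          rw [leaf_pa_eq u x hu hrx hux.symm, leaf_pa_eq v x hv hrx hxv]
        · exfalso
          obtain ⟨q, hq⟩ := (hT.isConnected u v).exists_walk_length_eq_dist
          obtain ⟨x, y, hux, hxy, hyv⟩ := walk_len3 q (by rw [hq, hd3])
          have hrx : G.Adj r x := leaf_nbr hT hball hu hux.symm
          have hry : G.Adj r y := leaf_nbr hT hball hv hyv
          exact noadj2 hT hrx hry hxy
      have hji : cidx G r u ≠ cidx G r v := fun he =>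
        hne (cidx_inj hsame (leaf_mem_chl u hu) (leaf_mem_chl v hv) he)
      rw [hfL u hu, hfL v hv, hsame]
      rcases lt_or_ge (cidx G r u) (nidx G r (pafn G r v)) with hcu | hcu <;>
        rcases lt_or_ge (cidx G r v) (nidx G r (pafn G r v)) with hcv | hcv
      · rw [if_pos hcu, if_pos hcv]
        rcases lt_or_gt_of_ne hji with hlt | hlt
        · rw [cycDist_comm]
          exact C10 hp hh hmp hlt (hcidx v hv)
        · exact C10 hp hh hmp hlt (hcidx u hu)
      · rw [if_pos hcu, if_neg (not_lt.mpr hcv), cycDist_comm]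
        exact C12 hp hh hmp (hcidx u hu) (hcidx v hv)
      · rw [if_neg (not_lt.mpr hcu), if_pos hcv]
        exact C12 hp hh hmp (hcidx v hv) (hcidx u hu)
      · rw [if_neg (not_lt.mpr hcu), if_neg (not_lt.mpr hcv)]
        rcases lt_or_gt_of_ne hji with hlt | hlt
        · rw [cycDist_comm]
          exact C11 hp hh hmp hlt (hcidx v hv)
        · exact C11 hp hh hmp hlt (hcidx u hu)
  -- the circular intervals
  set I : V → Set (ZMod ℓ) := fun u =>
    if u = r then ICirc ℓ h (m*p)
    else if u ∈ N then ICirc ℓ (2*h + nidx G r u * p) (m*p)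
    else ICirc ℓ (f (pafn G r u)) 0 with hI
  have hIr : I r = ICirc ℓ h (m*p) := by rw [hI]; simp
  have hIN : ∀ v ∈ N, I v = ICirc ℓ (2*h + nidx G r v * p) (m*p) := by
    intro v hv
    rw [hI]
    simp only [if_neg (hner hv), if_pos hv]
  have hIL : ∀ w, G.dist r w = 2 → I w = ICirc ℓ (f (pafn G r w)) 0 := by
    intro w hw
    rw [hI]
    simp only [if_neg (dist_two_ne hT hw), if_neg (leaf_notN w hw)]
  refine ⟨f, ⟨hbound, cond1, cond23⟩, I, ?_, ?_, ?_⟩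
  · intro u
    simp only [hI]
    split_ifs <;> exact ICirc_isCircInterval _ _ _
  · -- membership of neighbour labels
    intro u w hadj
    rcases adjcase u w hadj with ⟨hur, hw⟩ | ⟨hwr, hu⟩ | ⟨hu, hw2, hpa⟩ | ⟨hw, hu2, hpa⟩
    · rw [hur, hIr, hfN w hw]
      exact mem_ICirc _ (pm p (hnidx w hw)) _ (Nat.ModEq.refl _)
    · rw [hwr, hIN u hu, hfr]
      apply mem_ICirc ((m - nidx G r u) * p) (pm p (by omega)) 0
      have key : 2*h + nidx G r u * p + (m - nidx G r u) * p = ℓ := by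
        have e1 : nidx G r u * p + (m - nidx G r u) * p = (nidx G r u + (m - nidx G r u)) * p :=
          (add_mul _ _ _).symm
        have e2 : nidx G r u + (m - nidx G r u) = m := by
          have := hnidx u hu; omega
        have e3 : (nidx G r u + (m - nidx G r u)) * p = m * p := by rw [e2]
        rw [hℓ]
        omega
      show 0 % ℓ = _ % ℓ
      rw [key, Nat.mod_self, Nat.zero_mod]
    · -- u ∈ N, w child of u
      rw [hIN u hu, hfL w hw2, hpa]
      rcases lt_or_ge (cidx G r w) (nidx G r u) with hc | hc
      · rw [if_pos hc]
        have hi := hnidx u hu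
        apply mem_ICirc ((m - nidx G r u + cidx G r w + 1) * p) (pm p (by omega))
        have key : 2*h + nidx G r u * p + (m - nidx G r u + cidx G r w + 1) * p
            = (cidx G r w + 1) * p + ℓ := by
          have e1 : nidx G r u * p + (m - nidx G r u + cidx G r w + 1) * p
              = (nidx G r u + (m - nidx G r u + cidx G r w + 1)) * p := (add_mul _ _ _).symm
          have e2 : (nidx G r u + (m - nidx G r u + cidx G r w + 1)) = (cidx G r w + 1) + m := by
            omega
          have e3 : (nidx G r u + (m - nidx G r u + cidx G r w + 1)) * p
              = ((cidx G r w + 1) + m) * p := by rw [e2]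
          have e4 : ((cidx G r w + 1) + m) * p = (cidx G r w + 1) * p + m * p := add_mul _ _ _
          rw [hℓ]
          omega
        show _ % ℓ = _ % ℓ
        rw [key, Nat.add_mod_right]
      · rw [if_neg (not_lt.mpr hc)]
        apply mem_ICirc ((cidx G r w - nidx G r u) * p) (pm p (by have := hcidx w hw2; omega))
        have key : 2*h + nidx G r u * p + (cidx G r w - nidx G r u) * p = 2*h + cidx G r w * p := by
          have e1 : nidx G r u * p + (cidx G r w - nidx G r u) * p
              = (nidx G r u + (cidx G r w - nidx G r u)) * p := (add_mul _ _ _).symm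
          have e2 : nidx G r u + (cidx G r w - nidx G r u) = cidx G r w := by omega
          have e3 : (nidx G r u + (cidx G r w - nidx G r u)) * p = cidx G r w * p := by rw [e2]
          omega
        rw [key]
    · -- u leaf, w its parent
      rw [hIL u hu2, hpa]
      exact mem_ICirc 0 le_rfl _ (by simp [Nat.ModEq])
  · -- disjointness
    intro u v hadj
    rcases adjcase u v hadj with ⟨hur, hv⟩ | ⟨hvr, hu⟩ | ⟨hu, hv2, hpa⟩ | ⟨hv, hu2, hpa⟩
    · rw [hur, hIr, hIN v hv]
      apply ICirc_disj
      intro k l hk hl hmod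
      have hi := pm p (hnidx v hv)
      have heq := modeq_bounded hmod (by omega) (by omega)
      omega
    · rw [hvr, hIN u hu, hIr, Set.inter_comm]
      apply ICirc_disj
      intro k l hk hl hmod
      have hi := pm p (hnidx u hu)
      have heq := modeq_bounded hmod (by omega) (by omega)
      omega
    · -- u ∈ N, v child
      rw [hIN u hu, hIL v hv2, hpa, hfN u hu]
      apply ICirc_disj
      intro k l hk hl hmod
      have hi := pm p (hnidx u hu)
      have heq := modeq_bounded hmod (by omega) (by omega)
      omega
    · rw [hIN v hv, hIL u hu2, hpa, hfN v hv, Set.inter_comm]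
      apply ICirc_disj
      intro k l hk hl hmod
      have hi := pm p (hnidx v hv)
      have heq := modeq_bounded hmod (by omega) (by omega)
      omega

theorem stmt13 {V : Type} [Fintype V] (G : SimpleGraph V) [DecidableRel G.Adj]
    (hT : G.IsTree) (m : ℕ) (hm : 2 ≤ m) (r : V)
    (hr : G.degree r = m + 1)
    (hnbr : ∀ v : V, G.Adj r v → G.degree v = m + 1)
    (hball : ∀ v : V, G.dist r v ≤ 2)
    (h p : ℕ) (hp : 1 ≤ p) (hh : 1 ≤ h) (hmp : (m + 1) * p ≤ h) :
    sigmaNum G h p = 2 * h + m * p ∧ sigmaStar G h p = 2 * h + m * p := by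
  have hl0 : 0 < 2*h + m*p := by omega
  obtain ⟨f0, hf0⟩ := construction G hT m hm r hr hnbr hball h p hp hh hmp
  have hmemE : 2*h+m*p ∈ {ℓ : ℕ | 0 < ℓ ∧ ∃ f : V → ℕ, IsElegantCLabelling G h p ℓ f} :=
    ⟨hl0, f0, hf0⟩
  have hmemC : 2*h+m*p ∈ {ℓ : ℕ | 0 < ℓ ∧ ∃ f : V → ℕ, IsCLabelling G h p ℓ f} :=
    ⟨hl0, f0, hf0.1⟩
  constructor
  · apply le_antisymm
    · exact Nat.sInf_le hmemC
    · obtain ⟨hpos, f1, hf1⟩ := Nat.sInf_mem (⟨_, hmemC⟩ :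
        {ℓ : ℕ | 0 < ℓ ∧ ∃ f : V → ℕ, IsCLabelling G h p ℓ f}.Nonempty)
      exact lowerb G hT m hm r hr h p hp hh hmp _ hpos f1 hf1
  · apply le_antisymm
    · exact Nat.sInf_le hmemE
    · obtain ⟨hpos, f1, hf1⟩ := Nat.sInf_mem (⟨_, hmemE⟩ :
        {ℓ : ℕ | 0 < ℓ ∧ ∃ f : V → ℕ, IsElegantCLabelling G h p ℓ f}.Nonempty)
      exact lowerb G hT m hm r hr h p hp hh hmp _ hpos f1 hf1.1
end

section
/- Let m ≥ 2 and h ≥ 1 be integers. Then σ_{h,1,1}(T_{m,2}) = σ*_{h,1,1}(T_{m,2}) = max{h + 2m, 2h + m}. -/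
open SimpleGraph

set_option linter.unusedSectionVars false



private lemma zmul_bound {M d : ℤ} (hdvd : M ∣ d) (h1 : 1 ≤ d) (h2 : d ≤ M - 1) : False := by
  obtain ⟨k, rfl⟩ := hdvd
  rcases le_or_gt k 0 with hk | hk
  · nlinarith
  · nlinarith

lemma le_cycDist {ℓ a b q : ℕ}
    (H : ((q:ℤ) ≤ (a:ℤ) - b ∧ (a:ℤ) - b + q ≤ ℓ) ∨ ((q:ℤ) ≤ (b:ℤ) - a ∧ (b:ℤ) - a + q ≤ ℓ)) :
    (q:ℤ) ≤ cycDist ℓ a b := by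
  unfold cycDist; rw [le_min_iff]
  rcases abs_cases ((a:ℤ) - (b:ℤ)) with ⟨h1,h2⟩|⟨h1,h2⟩ <;> constructor <;> omega

lemma dvd_emod_sub (n a : ℤ) : n ∣ a % n - a :=
  ⟨-(a / n), by have := Int.emod_add_mul_ediv a n; linarith⟩

lemma cyc_transfer {ℓ a b q : ℕ} {x y : ℤ} (hℓ : 0 < ℓ)
    (hx : 0 ≤ x) (hx' : x < ℓ) (hy : 0 ≤ y) (hy' : y < ℓ)
    (hsh : (ℓ:ℤ) ∣ (x - y) - ((a:ℤ) - (b:ℤ)))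
    (hq : (q:ℤ) ≤ cycDist ℓ a b) (ha : a < ℓ) (hb : b < ℓ) :
    ((q:ℤ) ≤ x - y ∧ x - y + q ≤ ℓ) ∨ ((q:ℤ) ≤ y - x ∧ y - x + q ≤ ℓ) := by
  obtain ⟨k, hk⟩ := hsh
  have hb1 : (ℓ:ℤ) * k < 2 * ℓ := by
    have h1 : x - y < ℓ := by omega
    have h2 : -((ℓ:ℤ)) < (a:ℤ) - b := by omega
    linarith
  have hb2 : -(2 * (ℓ:ℤ)) < ℓ * k := by
    have h1 : -((ℓ:ℤ)) < x - y := by omega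
    have h2 : (a:ℤ) - b < ℓ := by omega
    linarith
  have hl0 : (0:ℤ) < ℓ := by exact_mod_cast hℓ
  have hk2 : k < 2 := by nlinarith
  have hk3 : -2 < k := by nlinarith
  unfold cycDist at hq; rw [le_min_iff] at hq
  rcases abs_cases ((a:ℤ) - (b:ℤ)) with ⟨h1,h2⟩|⟨h1,h2⟩ <;>
    (interval_cases k <;> omega)


section Tree
variable {V : Type} {G : SimpleGraph V} {r : V}

lemma tp1 (hT : G.IsTree) {c c' : V}
    (hc : G.Adj r c) (hc' : G.Adj r c') (hne : c ≠ c') : ¬ G.Adj c c' := by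
  intro hadj
  obtain ⟨p₀, _, hu⟩ := hT.existsUnique_path c c'
  have h1 : (Walk.cons hadj Walk.nil : G.Walk c c').IsPath := by
    simp [hadj.ne]
  have h2 : (Walk.cons hc.symm (Walk.cons hc' Walk.nil) : G.Walk c c').IsPath := by
    simp [hc.ne', hc'.ne, hne]
  have := (hu _ h1).trans (hu _ h2).symm
  simpa using congrArg Walk.length this

lemma tp2 (hT : G.IsTree) {c v : V}
    (hc : G.Adj r c) (hv : G.Adj c v) (hvr : v ≠ r) : ¬ G.Adj r v := by
  intro hadj
  obtain ⟨p₀, _, hu⟩ := hT.existsUnique_path r v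
  have h1 : (Walk.cons hadj Walk.nil : G.Walk r v).IsPath := by simp [hadj.ne]
  have h2 : (Walk.cons hc (Walk.cons hv Walk.nil) : G.Walk r v).IsPath := by
    simp [hc.ne, hv.ne, Ne.symm hvr]
  have := (hu _ h1).trans (hu _ h2).symm
  simpa using congrArg Walk.length this

lemma tp3 (hT : G.IsTree) {c c' v : V}
    (hc : G.Adj r c) (hc' : G.Adj r c') (h1 : G.Adj c v) (h2 : G.Adj c' v)
    (hvr : v ≠ r) : c = c' := by
  by_contra hne
  obtain ⟨p₀, _, hu⟩ := hT.existsUnique_path c c'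
  have hp1 : (Walk.cons h1 (Walk.cons h2.symm Walk.nil) : G.Walk c c').IsPath := by
    simp [h1.ne, h2.ne', hne]
  have hp2 : (Walk.cons hc.symm (Walk.cons hc' Walk.nil) : G.Walk c c').IsPath := by
    simp [hc.ne', hc'.ne, hne]
  have := (hu _ hp1).trans (hu _ hp2).symm
  have := congrArg Walk.support this
  simp at this
  exact hvr this

lemma tp4 (hT : G.IsTree) {c c' u v : V}
    (hc : G.Adj r c) (hc' : G.Adj r c') (hu : G.Adj c u) (hv : G.Adj c' v)
    (hur : u ≠ r) (hvr : v ≠ r) (hru : ¬ G.Adj r u) (hrv : ¬ G.Adj r v) :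
    ¬ G.Adj u v := by
  intro hadj
  by_cases hcc : c = c'
  · subst hcc
    obtain ⟨p₀, _, huq⟩ := hT.existsUnique_path u v
    have h1 : (Walk.cons hadj Walk.nil : G.Walk u v).IsPath := by simp [hadj.ne]
    have h2 : (Walk.cons hu.symm (Walk.cons hv Walk.nil) : G.Walk u v).IsPath := by
      simp [hu.ne', hv.ne, hadj.ne]
    have := (huq _ h1).trans (huq _ h2).symm
    simpa using congrArg Walk.length this
  · obtain ⟨p₀, _, huq⟩ := hT.existsUnique_path u v
    have h1 : (Walk.cons hadj Walk.nil : G.Walk u v).IsPath := by simp [hadj.ne]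
    have huc' : u ≠ c' := fun hh => hru (hh ▸ hc')
    have hvc : v ≠ c := fun hh => hrv (hh ▸ hc)
    have h2 : (Walk.cons hu.symm (Walk.cons hc.symm (Walk.cons hc' (Walk.cons hv Walk.nil))) :
        G.Walk u v).IsPath := by
      simp [hu.ne', hur, huc', hadj.ne, hc.ne', hcc, Ne.symm hvc, Ne.symm hvr, hc'.ne, hv.ne]
    have := (huq _ h1).trans (huq _ h2).symm
    simpa using congrArg Walk.length this

end Tree


section Tree
variable {V : Type} {G : SimpleGraph V} {r : V}

lemma walk2 {u v : V} (hd : G.dist u v = 2) : ∃ w, G.Adj u w ∧ G.Adj w v := by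
  obtain ⟨p, hp⟩ := G.exists_walk_of_dist_ne_zero (u := u) (v := v) (by omega)
  rw [hd] at hp
  cases p with
  | nil => simp at hp
  | cons h1 q =>
    cases q with
    | nil => simp at hp
    | cons h2 q' =>
      cases q' with
      | nil => exact ⟨_, h1, h2⟩
      | cons h3 q'' => simp [Walk.length_cons] at hp

lemma walk3 {u v : V} (hd : G.dist u v = 3) : ∃ w x, G.Adj u w ∧ G.Adj w x ∧ G.Adj x v := by
  obtain ⟨p, hp⟩ := G.exists_walk_of_dist_ne_zero (u := u) (v := v) (by omega)
  rw [hd] at hp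
  cases p with
  | nil => simp at hp
  | cons h1 q =>
    cases q with
    | nil => simp at hp
    | cons h2 q' =>
      cases q' with
      | nil => simp at hp
      | cons h3 q'' =>
        cases q'' with
        | nil => exact ⟨_, _, h1, h2, h3⟩
        | cons h4 q3 => simp [Walk.length_cons] at hp

lemma dist_two_aux (hT : G.IsTree) {u v w : V} (h1 : G.Adj u w) (h2 : G.Adj w v)
    (hne : u ≠ v) (hnadj : ¬ G.Adj u v) : G.dist u v = 2 := by
  have hle : G.dist u v ≤ 2 := by
    have := G.dist_le (Walk.cons h1 (Walk.cons h2 Walk.nil))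
    simpa using this
  have h0 : G.dist u v ≠ 0 := fun hq => hne (hT.isConnected.dist_eq_zero_iff.mp hq)
  have hone : G.dist u v ≠ 1 := fun hq => hnadj (dist_eq_one_iff_adj.mp hq)
  omega

lemma grand_parent_exists (hT : G.IsTree) (hball : ∀ v : V, G.dist r v ≤ 2) {v : V}
    (h1 : v ≠ r) (h2 : ¬ G.Adj r v) : ∃ c, G.Adj r c ∧ G.Adj c v := by
  have hd : G.dist r v = 2 := by
    have := hball v
    have h0 : G.dist r v ≠ 0 := fun hq => (Ne.symm h1) (hT.isConnected.dist_eq_zero_iff.mp hq)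
    have hone : G.dist r v ≠ 1 := fun hq => h2 (dist_eq_one_iff_adj.mp hq)
    omega
  exact walk2 hd

end Tree

open Classical in
noncomputable def treeParent {V : Type} (G : SimpleGraph V) (r v : V) : V :=
  if hv : ∃ c, G.Adj r c ∧ G.Adj c v then hv.choose else r

section Tree2
variable {V : Type} {G : SimpleGraph V} {r : V}

lemma treeParent_spec (hT : G.IsTree) (hball : ∀ v : V, G.dist r v ≤ 2) {v : V}
    (h1 : v ≠ r) (h2 : ¬ G.Adj r v) :
    G.Adj r (treeParent G r v) ∧ G.Adj (treeParent G r v) v := by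
  have hex := grand_parent_exists hT hball h1 h2
  rw [treeParent, dif_pos hex]; exact hex.choose_spec

lemma grand_nbr_eq (hT : G.IsTree) (hball : ∀ v : V, G.dist r v ≤ 2) {v w c : V}
    (hc : G.Adj r c) (hcv : G.Adj c v) (hvr : v ≠ r)
    (hrv : ¬ G.Adj r v) (hw : G.Adj v w) : w = c := by
  by_cases hwr : w = r
  · subst hwr; exact absurd hw.symm hrv
  by_cases hwc : G.Adj r w
  · exact tp3 hT hwc hc hw.symm hcv hvr
  · obtain ⟨c'', hc''⟩ := grand_parent_exists hT hball hwr hwc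
    exact absurd hw (tp4 hT hc hc''.1 hcv hc''.2 hvr hwr hrv hwc)

lemma treeParent_eq (hT : G.IsTree) (hball : ∀ v : V, G.dist r v ≤ 2) {v c : V}
    (hc : G.Adj r c) (hcv : G.Adj c v) (hvr : v ≠ r)
    (hrv : ¬ G.Adj r v) : treeParent G r v = c :=
  grand_nbr_eq hT hball hc hcv hvr hrv ((treeParent_spec hT hball hvr hrv).2).symm

lemma dist_children (hT : G.IsTree) {c c' : V} (hc : G.Adj r c) (hc' : G.Adj r c')
    (hne : c ≠ c') : G.dist c c' = 2 :=
  dist_two_aux hT hc.symm hc' hne (tp1 hT hc hc' hne)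

lemma dist_r_grand (hT : G.IsTree) {c v : V} (hc : G.Adj r c) (hcv : G.Adj c v)
    (hvr : v ≠ r) (hrv : ¬ G.Adj r v) : G.dist r v = 2 :=
  dist_two_aux hT hc hcv (Ne.symm hvr) hrv

lemma dist_sib (hT : G.IsTree) {c u v : V} (hc : G.Adj r c) (hu : G.Adj c u) (hv : G.Adj c v)
    (hur : u ≠ r) (hvr : v ≠ r) (hru : ¬ G.Adj r u) (hrv : ¬ G.Adj r v) (hne : u ≠ v) :
    G.dist u v = 2 :=
  dist_two_aux hT hu.symm hv hne (tp4 hT hc hc hu hv hur hvr hru hrv)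

lemma dist_child_grand (hT : G.IsTree) (hball : ∀ v : V, G.dist r v ≤ 2) {c c' v : V}
    (hc : G.Adj r c) (hc' : G.Adj r c') (hcv : G.Adj c v)
    (hvr : v ≠ r) (hrv : ¬ G.Adj r v) (hne : c' ≠ c) : G.dist c' v = 3 := by
  have hle : G.dist c' v ≤ 3 := by
    have := G.dist_le (Walk.cons hc'.symm (Walk.cons hc (Walk.cons hcv Walk.nil)))
    simpa using this
  have h0 : G.dist c' v ≠ 0 := by
    have : c' ≠ v := fun hh => hrv (hh ▸ hc')
    exact fun hq => this (hT.isConnected.dist_eq_zero_iff.mp hq)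
  have h1 : G.dist c' v ≠ 1 := by
    rw [ne_eq, dist_eq_one_iff_adj]
    exact fun ha => hne (tp3 hT hc' hc ha hcv hvr)
  have h2 : G.dist c' v ≠ 2 := by
    intro hd; obtain ⟨w, hw1, hw2⟩ := walk2 hd
    have := grand_nbr_eq hT hball hc hcv hvr hrv hw2.symm
    subst this
    exact tp1 hT hc' hc hne hw1
  omega

lemma grands_dist2 (hT : G.IsTree) (hball : ∀ v : V, G.dist r v ≤ 2) {u v : V}
    (hur : u ≠ r) (hru : ¬ G.Adj r u) (hvr : v ≠ r) (hrv : ¬ G.Adj r v)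
    (hd : G.dist u v = 2) : treeParent G r u = treeParent G r v := by
  obtain ⟨w, hw1, hw2⟩ := walk2 hd
  obtain ⟨hpu1, hpu2⟩ := treeParent_spec hT hball hur hru
  obtain ⟨hpv1, hpv2⟩ := treeParent_spec hT hball hvr hrv
  have e1 : w = treeParent G r u := grand_nbr_eq hT hball hpu1 hpu2 hur hru hw1
  have e2 : w = treeParent G r v := grand_nbr_eq hT hball hpv1 hpv2 hvr hrv hw2.symm
  rw [← e1, ← e2]

lemma grands_not_dist3 (hT : G.IsTree) (hball : ∀ v : V, G.dist r v ≤ 2) {u v : V}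
    (hur : u ≠ r) (hru : ¬ G.Adj r u) (hvr : v ≠ r) (hrv : ¬ G.Adj r v) :
    G.dist u v ≠ 3 := by
  intro hd
  obtain ⟨w, x, hw1, hw2, hw3⟩ := walk3 hd
  obtain ⟨hpu1, hpu2⟩ := treeParent_spec hT hball hur hru
  obtain ⟨hpv1, hpv2⟩ := treeParent_spec hT hball hvr hrv
  have e1 : w = treeParent G r u := grand_nbr_eq hT hball hpu1 hpu2 hur hru hw1
  have e2 : x = treeParent G r v := grand_nbr_eq hT hball hpv1 hpv2 hvr hrv hw3.symm
  subst e1; subst e2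
  by_cases hpp : treeParent G r u = treeParent G r v
  · rw [hpp] at hw2; exact G.irrefl hw2
  · exact tp1 hT hpu1 hpv1 hpp hw2

end Tree2


open Classical in
noncomputable def finsetIdx {V : Type} (s : Finset V) (v : V) : ℕ :=
  if hv : v ∈ s then ((Fintype.equivFin s) ⟨v, hv⟩ : Fin _).val else 0

lemma finsetIdx_lt {V : Type} {s : Finset V} {v : V} (hv : v ∈ s) : finsetIdx s v < s.card := by
  rw [finsetIdx, dif_pos hv]
  simpa [Fintype.card_coe] using ((Fintype.equivFin s) ⟨v, hv⟩).isLt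

lemma finsetIdx_inj {V : Type} {s : Finset V} {u v : V} (hu : u ∈ s) (hv : v ∈ s)
    (heq : finsetIdx s u = finsetIdx s v) : u = v := by
  simp only [finsetIdx, dif_pos hu, dif_pos hv] at heq
  have := (Fintype.equivFin s).injective (Fin.val_injective heq)
  exact Subtype.mk_eq_mk.mp this

def gVal (h m M i j : ℕ) : ℕ := if j + M < i + 2*h + m then j + 1 else M - m + j

def circI (M a s : ℕ) : Set (ZMod M) := {x : ZMod M | ∃ i : ℕ, i ≤ s ∧ x = (a : ZMod M) + (i : ZMod M)}

lemma natCast_zmod_eq {M a b : ℕ} (hab : a % M = b % M) : (a : ZMod M) = (b : ZMod M) :=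
  (ZMod.natCast_eq_natCast_iff' a b M).mpr hab

lemma mem_circI {M a s g : ℕ} (i : ℕ) (hi : i ≤ s) (hg : g % M = (a + i) % M) :
    (g : ZMod M) ∈ circI M a s :=
  ⟨i, hi, by rw [← Nat.cast_add]; exact natCast_zmod_eq hg⟩

lemma circI_disjoint {M a s a' s' : ℕ}
    (H : ∀ i i' : ℕ, i ≤ s → i' ≤ s' → ¬ ((M:ℤ) ∣ ((a':ℤ) + i') - ((a:ℤ) + i))) :
    circI M a s ∩ circI M a' s' = ∅ := by
  rw [Set.eq_empty_iff_forall_notMem]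
  rintro x ⟨⟨i, hi, hxi⟩, ⟨i', hi', hxi'⟩⟩
  have hcast : ((a + i : ℕ) : ZMod M) = ((a' + i' : ℕ) : ZMod M) := by
    push_cast; rw [← hxi, ← hxi']
  have hdvd := ((ZMod.natCast_eq_natCast_iff _ _ _).mp hcast).dvd
  refine H i i' hi hi' ?_
  have : ((a' + i' : ℕ) : ℤ) - ((a + i : ℕ) : ℤ) = ((a':ℤ) + i') - ((a:ℤ) + i) := by push_cast; ring
  rwa [this] at hdvd

lemma one_le_cycDist {ℓ a b : ℕ} (ha : a < ℓ) (hb : b < ℓ) (hne : a ≠ b) :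
    (1:ℤ) ≤ cycDist ℓ a b := by
  apply le_cycDist
  have : (a:ℤ) ≠ b := by exact_mod_cast hne
  push_cast
  omega

open Classical in
noncomputable def treeLabel {V : Type} [Fintype V] (G : SimpleGraph V) [DecidableRel G.Adj]
    (r : V) (h m M : ℕ) (v : V) : ℕ :=
  if v = r then 0
  else if G.Adj r v then h + finsetIdx (G.neighborFinset r) v
  else gVal h m M (finsetIdx (G.neighborFinset r) (treeParent G r v))
    (finsetIdx (G.neighborFinset (treeParent G r v) \ {r}) v)
section Main
variable {V : Type} [Fintype V] {G : SimpleGraph V} [DecidableRel G.Adj] {r : V} {m h : ℕ}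

lemma adj_cases (hT : G.IsTree) (hball : ∀ v : V, G.dist r v ≤ 2) {u v : V} (hadj : G.Adj u v) :
    (u = r ∧ G.Adj r v) ∨ (G.Adj r u ∧ v = r) ∨
    (G.Adj r u ∧ v ≠ r ∧ ¬ G.Adj r v ∧ treeParent G r v = u) ∨
    (u ≠ r ∧ ¬ G.Adj r u ∧ G.Adj r v ∧ treeParent G r u = v) := by
  by_cases hur : u = r
  · subst hur; exact Or.inl ⟨rfl, hadj⟩
  by_cases hvr : v = r
  · subst hvr; exact Or.inr (Or.inl ⟨hadj.symm, rfl⟩)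
  by_cases hru : G.Adj r u
  · by_cases hrv : G.Adj r v
    · exact absurd hadj (tp1 hT hru hrv hadj.ne)
    · exact Or.inr (Or.inr (Or.inl ⟨hru, hvr, hrv, treeParent_eq hT hball hru hadj hvr hrv⟩))
  · by_cases hrv : G.Adj r v
    · exact Or.inr (Or.inr (Or.inr ⟨hur, hru, hrv, treeParent_eq hT hball hrv hadj.symm hur hru⟩))
    · obtain ⟨c, hc1, hc2⟩ := grand_parent_exists hT hball hur hru
      obtain ⟨c', hc1', hc2'⟩ := grand_parent_exists hT hball hvr hrv
      exact absurd hadj (tp4 hT hc1 hc1' hc2 hc2' hur hvr hru hrv)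

lemma mem_circI_compl {M h m g : ℕ} (hh : 1 ≤ h) (hM1 : h + 2*m ≤ M)
    (hgM : g < M) (hg : g + 1 ≤ h ∨ h + m ≤ g) :
    (g : ZMod M) ∈ circI M (h+m) (M - m - 1) := by
  rcases hg with hg | hg
  · exact mem_circI (M - h - m + g) (by omega)
      (by rw [show h + m + (M - h - m + g) = M + g from by omega, Nat.add_mod_left])
  · exact mem_circI (g - (h+m)) (by omega)
      (by rw [show h + m + (g - (h+m)) = g from by omega])

lemma upper_bound (hT : G.IsTree) (hm : 2 ≤ m) (hr : G.degree r = m)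
    (hnbr : ∀ v : V, G.Adj r v → G.degree v = m + 1)
    (hball : ∀ v : V, G.dist r v ≤ 2) (hh : 1 ≤ h) {M : ℕ}
    (hM1 : h + 2*m ≤ M) (hM2 : 2*h + m ≤ M) :
    IsElegantCLabelling G h 1 M (treeLabel G r h m M) := by
  classical
  set f := treeLabel G r h m M with hf
  have hCcard : (G.neighborFinset r).card = m := by
    rw [card_neighborFinset_eq_degree, hr]
  have hcidx : ∀ c, G.Adj r c → finsetIdx (G.neighborFinset r) c < m := by
    intro c hc
    have := finsetIdx_lt (s := G.neighborFinset r) (v := c) (by rwa [mem_neighborFinset])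
    omega
  have hLcard : ∀ c, G.Adj r c → (G.neighborFinset c \ {r}).card = m := by
    intro c hc
    have hrmem : {r} ⊆ G.neighborFinset c := by
      simp only [Finset.singleton_subset_iff, mem_neighborFinset]; exact hc.symm
    rw [Finset.card_sdiff_of_subset hrmem, card_neighborFinset_eq_degree, hnbr c hc,
      Finset.card_singleton]
    omega
  have hmemL : ∀ v, v ≠ r → ¬ G.Adj r v →
      v ∈ G.neighborFinset (treeParent G r v) \ {r} := by
    intro v h1 h2
    obtain ⟨hp1, hp2⟩ := treeParent_spec hT hball h1 h2
    simp [Finset.mem_sdiff, mem_neighborFinset, hp2, h1]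
  have hlidx : ∀ v, v ≠ r → ¬ G.Adj r v →
      finsetIdx (G.neighborFinset (treeParent G r v) \ {r}) v < m := by
    intro v h1 h2
    have := finsetIdx_lt (hmemL v h1 h2)
    rwa [hLcard _ (treeParent_spec hT hball h1 h2).1] at this
  have fr : f r = 0 := if_pos rfl
  have fc : ∀ c, G.Adj r c → f c = h + finsetIdx (G.neighborFinset r) c := by
    intro c hc
    show treeLabel G r h m M c = _
    rw [treeLabel, if_neg hc.ne', if_pos hc]
  have fg : ∀ v, v ≠ r → ¬ G.Adj r v →
      f v = gVal h m M (finsetIdx (G.neighborFinset r) (treeParent G r v))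
        (finsetIdx (G.neighborFinset (treeParent G r v) \ {r}) v) := by
    intro v h1 h2
    show treeLabel G r h m M v = _
    rw [treeLabel, if_neg h1, if_neg h2]
  have g1 : ∀ i j, i < m → j < m → 1 ≤ gVal h m M i j ∧ gVal h m M i j < M := by
    intro i j hi hj; unfold gVal; split_ifs <;> omega
  have g3 : ∀ i j, i < m → j < m → gVal h m M i j + 1 ≤ h ∨ h + m ≤ gVal h m M i j := by
    intro i j hi hj; unfold gVal; split_ifs <;> omega
  have g4 : ∀ i j, i < m → j < m → (h:ℤ) ≤ cycDist M (h + i) (gVal h m M i j) ∧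
      (h:ℤ) ≤ cycDist M (gVal h m M i j) (h + i) := by
    intro i j hi hj
    constructor <;> (apply le_cycDist; unfold gVal; split_ifs <;> push_cast <;> omega)
  have g5 : ∀ i j j', i < m → j < m → j' < m → gVal h m M i j = gVal h m M i j' → j = j' := by
    intro i j j' hi hj hj'; unfold gVal; split_ifs <;> omega
  have hlt : ∀ v, f v < M := by
    intro v
    by_cases h1 : v = r
    · rw [h1, fr]; omega
    by_cases h2 : G.Adj r v
    · rw [fc v h2]; have := hcidx v h2; omega
    · rw [fg v h1 h2]
      exact (g1 _ _ (hcidx _ (treeParent_spec hT hball h1 h2).1) (hlidx v h1 h2)).2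
  have hcyc1 : ∀ u v, G.dist u v = 1 → (h:ℤ) ≤ cycDist M (f u) (f v) := by
    intro u v hd
    have hadj := dist_eq_one_iff_adj.mp hd
    rcases adj_cases hT hball hadj with ⟨h1, h2⟩ | ⟨h1, h2⟩ | ⟨h1, h2, h3, h4⟩ | ⟨h1, h2, h3, h4⟩
    · rw [h1, fr, fc v h2]
      apply le_cycDist; have := hcidx v h2; push_cast; omega
    · rw [h2, fr, fc u h1]
      apply le_cycDist; have := hcidx u h1; push_cast; omega
    · have hj := hlidx v h2 h3
      rw [h4] at hj
      rw [fc u h1, fg v h2 h3, h4]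
      exact (g4 _ _ (hcidx u h1) hj).1
    · have hj := hlidx u h1 h2
      rw [h4] at hj
      rw [fg u h1 h2, h4, fc v h3]
      exact (g4 _ _ (hcidx v h3) hj).2
  have hcyc23 : ∀ u v, G.dist u v = 2 ∨ G.dist u v = 3 →
      ((1:ℕ):ℤ) ≤ cycDist M (f u) (f v) := by
    intro u v hd
    have hne : u ≠ v := by
      rintro rfl; rw [SimpleGraph.dist_self] at hd; omega
    apply one_le_cycDist (hlt u) (hlt v)
    by_cases h1u : u = r <;> by_cases h1v : v = r
    · exact absurd (h1u.trans h1v.symm) hne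
    · by_cases h2v : G.Adj r v
      · rw [h1u, fr, fc v h2v]; omega
      · rw [h1u, fr, fg v h1v h2v]
        have := (g1 _ _ (hcidx _ (treeParent_spec hT hball h1v h2v).1) (hlidx v h1v h2v)).1
        omega
    · by_cases h2u : G.Adj r u
      · rw [h1v, fr, fc u h2u]; omega
      · rw [h1v, fr, fg u h1u h2u]
        have := (g1 _ _ (hcidx _ (treeParent_spec hT hball h1u h2u).1) (hlidx u h1u h2u)).1
        omega
    · by_cases h2u : G.Adj r u <;> by_cases h2v : G.Adj r v
      · rw [fc u h2u, fc v h2v]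
        intro heq
        refine hne (finsetIdx_inj (s := G.neighborFinset r) (by rwa [mem_neighborFinset])
          (by rwa [mem_neighborFinset]) ?_)
        omega
      · rw [fc u h2u, fg v h1v h2v]
        have hg3 := g3 _ _ (hcidx _ (treeParent_spec hT hball h1v h2v).1) (hlidx v h1v h2v)
        have := hcidx u h2u; omega
      · rw [fg u h1u h2u, fc v h2v]
        have hg3 := g3 _ _ (hcidx _ (treeParent_spec hT hball h1u h2u).1) (hlidx u h1u h2u)
        have := hcidx v h2v; omega
      · have hpp : treeParent G r u = treeParent G r v := by
          rcases hd with hd | hd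
          · exact grands_dist2 hT hball h1u h2u h1v h2v hd
          · exact absurd hd (grands_not_dist3 hT hball h1u h2u h1v h2v)
        have hmu := hmemL u h1u h2u
        have hmv := hmemL v h1v h2v
        have hju := hlidx u h1u h2u
        have hjv := hlidx v h1v h2v
        rw [hpp] at hmu hju
        rw [fg u h1u h2u, fg v h1v h2v, hpp]
        intro heq
        have hic : finsetIdx (G.neighborFinset r) (treeParent G r v) < m :=
          hcidx _ (treeParent_spec hT hball h1v h2v).1
        have := g5 _ _ _ hic hju hjv heq
        exact hne (finsetIdx_inj hmu hmv this)
  have disj_rc : circI M h (m-1) ∩ circI M (h+m) (M-m-1) = ∅ := by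
    apply circI_disjoint; intro i i' hi hi' hdvd
    refine zmul_bound hdvd ?_ ?_ <;> push_cast <;> omega
  have disj_cg : ∀ i, i < m → circI M (h+m) (M-m-1) ∩ circI M (h + i) 0 = ∅ := by
    intro i hi
    apply circI_disjoint; intro i1 i2 hi1 hi2 hdvd
    refine zmul_bound (dvd_neg.mpr hdvd) ?_ ?_ <;> push_cast <;> omega
  set I : V → Set (ZMod M) := fun v => if v = r then circI M h (m-1)
    else if G.Adj r v then circI M (h+m) (M-m-1)
    else circI M (f (treeParent G r v)) 0 with hI
  have hIr : I r = circI M h (m-1) := by simp [hI]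
  have hIc : ∀ c, c ≠ r → G.Adj r c → I c = circI M (h+m) (M-m-1) := by
    intro c h1 h2; simp only [hI]; rw [if_neg h1, if_pos h2]
  have hIg : ∀ v, v ≠ r → ¬ G.Adj r v → I v = circI M (f (treeParent G r v)) 0 := by
    intro v h1 h2; simp only [hI]; rw [if_neg h1, if_neg h2]
  refine ⟨⟨hlt, hcyc1, hcyc23⟩, I, ?_, ?_, ?_⟩
  · intro u
    by_cases h1 : u = r
    · subst h1; rw [hIr]; exact ⟨_, _, rfl⟩
    by_cases h2 : G.Adj r u
    · rw [hIc u h1 h2]; exact ⟨_, _, rfl⟩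
    · rw [hIg u h1 h2]; exact ⟨_, _, rfl⟩
  · intro u w hadj
    rcases adj_cases hT hball hadj with ⟨h1, h2⟩ | ⟨h1, h2⟩ | ⟨h1, h2, h3, h4⟩ | ⟨h1, h2, h3, h4⟩
    · rw [h1, hIr, fc w h2]
      exact mem_circI (finsetIdx _ w) (by have := hcidx w h2; omega) rfl
    · rw [h2, hIc u h1.ne' h1, fr]
      exact mem_circI_compl hh hM1 (by omega) (Or.inl (by omega))
    · rw [hIc u h1.ne' h1, fg w h2 h3]
      have hiw := hcidx _ (treeParent_spec hT hball h2 h3).1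
      have hjw := hlidx w h2 h3
      exact mem_circI_compl hh hM1 (g1 _ _ hiw hjw).2 (g3 _ _ hiw hjw)
    · rw [hIg u h1 h2, h4]
      exact mem_circI 0 le_rfl (by rw [Nat.add_zero])
  · intro u v hadj
    rcases adj_cases hT hball hadj with ⟨h1, h2⟩ | ⟨h1, h2⟩ | ⟨h1, h2, h3, h4⟩ | ⟨h1, h2, h3, h4⟩
    · rw [h1, hIr, hIc v h2.ne' h2]
      exact disj_rc
    · rw [h2, hIr, hIc u h1.ne' h1, Set.inter_comm]
      exact disj_rc
    · rw [hIc u h1.ne' h1, hIg v h2 h3, h4, fc u h1]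
      exact disj_cg _ (hcidx u h1)
    · rw [hIg u h1 h2, hIc v h3.ne' h3, h4, fc v h3, Set.inter_comm]
      exact disj_cg _ (hcidx v h3)

lemma lower_bound (hT : G.IsTree) (hm : 2 ≤ m) (hr : G.degree r = m)
    (hnbr : ∀ v : V, G.Adj r v → G.degree v = m + 1)
    (hball : ∀ v : V, G.dist r v ≤ 2) (hh : 1 ≤ h)
    {ℓ : ℕ} (hℓ : 0 < ℓ) {f : V → ℕ} (hf : IsCLabelling G h 1 ℓ f) :
    max (h + 2*m) (2*h + m) ≤ ℓ := by
  classical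
  obtain ⟨hflt, hd1, hd23⟩ := hf
  set A : V → ℤ := fun v => (((f v : ℤ) - (f r : ℤ)) % (ℓ:ℤ)) with hA
  have hl0 : (0:ℤ) < (ℓ:ℤ) := by exact_mod_cast hℓ
  have hA0 : ∀ v, 0 ≤ A v := fun v => Int.emod_nonneg _ (by omega)
  have hAlt : ∀ v, A v < ℓ := fun v => Int.emod_lt_of_pos _ hl0
  have hAr : A r = 0 := by simp [hA]
  have hdvd : ∀ u v : V, (ℓ:ℤ) ∣ (A u - A v) - ((f u : ℤ) - (f v : ℤ)) := by
    intro u v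
    have h1 := dvd_emod_sub (ℓ:ℤ) ((f u : ℤ) - f r)
    have h2 := dvd_emod_sub (ℓ:ℤ) ((f v : ℤ) - f r)
    have h3 := dvd_sub h1 h2
    have heq : (A u - A v) - ((f u:ℤ) - f v)
        = (((f u:ℤ) - f r) % ℓ - ((f u:ℤ) - f r)) - (((f v:ℤ) - f r) % ℓ - ((f v:ℤ) - f r)) := by
      rw [hA]; ring
    rw [heq]; exact h3
  have con : ∀ u v : V, ∀ q : ℕ, (q:ℤ) ≤ cycDist ℓ (f u) (f v) →
      ((q:ℤ) ≤ A u - A v ∧ A u - A v + q ≤ ℓ) ∨ ((q:ℤ) ≤ A v - A u ∧ A v - A u + q ≤ ℓ) :=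
    fun u v q hq => cyc_transfer hℓ (hA0 u) (hAlt u) (hA0 v) (hAlt v) (hdvd u v) hq (hflt u) (hflt v)
  have hCcard : (G.neighborFinset r).card = m := by rw [card_neighborFinset_eq_degree, hr]
  have hCne : (G.neighborFinset r).Nonempty := by
    rw [← Finset.card_pos, hCcard]; omega
  obtain ⟨c, hcC, hcmin⟩ := Finset.exists_min_image (G.neighborFinset r) A hCne
  have hc : G.Adj r c := by rwa [SimpleGraph.mem_neighborFinset] at hcC
  have hchild : ∀ c' : V, G.Adj r c' → (h:ℤ) ≤ A c' ∧ A c' + h ≤ ℓ := by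
    intro c' hc'
    have hcon := con r c' h (hd1 _ _ (dist_eq_one_iff_adj.mpr hc'))
    rw [hAr] at hcon
    have h0 := hA0 c'
    rcases hcon with ⟨ha, hb⟩ | ⟨ha, hb⟩ <;> omega
  set L : Finset V := G.neighborFinset c \ {r} with hL
  have hLmem : ∀ u ∈ L, G.Adj c u ∧ u ≠ r ∧ ¬ G.Adj r u := by
    intro u hu
    rw [hL, Finset.mem_sdiff, SimpleGraph.mem_neighborFinset, Finset.mem_singleton] at hu
    exact ⟨hu.1, hu.2, tp2 hT hc hu.1 hu.2⟩
  have hLcard : L.card = m := by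
    have hrmem : {r} ⊆ G.neighborFinset c := by
      simp only [Finset.singleton_subset_iff, SimpleGraph.mem_neighborFinset]; exact hc.symm
    rw [hL, Finset.card_sdiff_of_subset hrmem, card_neighborFinset_eq_degree, hnbr c hc,
      Finset.card_singleton]
    omega
  have hAinjL : Set.InjOn A L := by
    intro u hu v hv hAeq
    by_contra hne'
    obtain ⟨hcu, hur, hru⟩ := hLmem u hu
    obtain ⟨hcv, hvr, hrv⟩ := hLmem v hv
    have hd := dist_sib hT hc hcu hcv hur hvr hru hrv hne'
    have hcon := con u v 1 (hd23 _ _ (Or.inl hd))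
    push_cast at hcon; omega
  have hLim : (L.image A).card = m := by
    rw [Finset.card_image_of_injOn hAinjL, hLcard]
  have hCinj : Set.InjOn A (G.neighborFinset r) := by
    intro u hu v hv hAeq
    by_contra hne'
    rw [Finset.mem_coe, SimpleGraph.mem_neighborFinset] at hu hv
    have hd := dist_children hT hu hv hne'
    have hcon := con u v 1 (hd23 _ _ (Or.inl hd))
    push_cast at hcon; omega
  have hCim : ((G.neighborFinset r).image A).card = m := by
    rw [Finset.card_image_of_injOn hCinj, hCcard]
  set B : Finset ℤ := Finset.Icc (A c - ((h:ℤ) - 1)) (A c + ((h:ℤ) - 1)) with hB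
  have hBcard : B.card = 2*h - 1 := by
    rw [hB, Int.card_Icc, show (A c + ((h:ℤ)-1) + 1 - (A c - ((h:ℤ)-1))) = 2*(h:ℤ) - 1 from by
      ring]
    omega
  set S1 := L.image A with hS1
  set S2 : Finset ℤ := {0} with hS2
  set S4 := ((G.neighborFinset r).image A) \ B with hS4
  have hS1B : ∀ x ∈ S1, x ∉ B := by
    intro x hx
    obtain ⟨u, hu, rfl⟩ := Finset.mem_image.mp hx
    obtain ⟨hcu, hur, hru⟩ := hLmem u hu
    have hcon := con c u h (hd1 _ _ (dist_eq_one_iff_adj.mpr hcu))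
    rw [hB, Finset.mem_Icc]
    push_cast at hcon; omega
  have hS10 : ∀ x ∈ S1, x ≠ 0 := by
    intro x hx
    obtain ⟨u, hu, rfl⟩ := Finset.mem_image.mp hx
    obtain ⟨hcu, hur, hru⟩ := hLmem u hu
    have hcon := con r u 1 (hd23 _ _ (Or.inl (dist_r_grand hT hc hcu hur hru)))
    rw [hAr] at hcon; push_cast at hcon; omega
  have hS1S4 : ∀ x ∈ S1, x ∉ S4 := by
    intro x hx hx4
    obtain ⟨u, hu, hxu⟩ := Finset.mem_image.mp hx
    obtain ⟨hcu, hur, hru⟩ := hLmem u hu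
    obtain ⟨hx4', hxB⟩ := Finset.mem_sdiff.mp hx4
    obtain ⟨c', hc'C, hxc'⟩ := Finset.mem_image.mp hx4'
    rw [SimpleGraph.mem_neighborFinset] at hc'C
    by_cases hcc : c' = c
    · apply hxB
      rw [hB, Finset.mem_Icc]
      rw [hcc] at hxc'
      omega
    · have hd := dist_child_grand hT hball hc hc'C hcu hur hru hcc
      have hcon := con c' u 1 (hd23 _ _ (Or.inr hd))
      push_cast at hcon; omega
  have h0B : (0:ℤ) ∉ B := by
    rw [hB, Finset.mem_Icc]
    have := (hchild c hc).1
    omega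
  have h0S4 : (0:ℤ) ∉ S4 := by
    intro h04
    obtain ⟨hx4', _⟩ := Finset.mem_sdiff.mp h04
    obtain ⟨c', hc'C, hxc'⟩ := Finset.mem_image.mp hx4'
    rw [SimpleGraph.mem_neighborFinset] at hc'C
    have := (hchild c' hc'C).1
    omega
  have hdisj1 : Disjoint S1 (S2 ∪ (B ∪ S4)) := by
    rw [Finset.disjoint_left]; intro x hx hx'
    rcases Finset.mem_union.mp hx' with hx' | hx'
    · exact hS10 x hx (Finset.mem_singleton.mp hx')
    · rcases Finset.mem_union.mp hx' with hx' | hx'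
      · exact hS1B x hx hx'
      · exact hS1S4 x hx hx'
  have hdisj2 : Disjoint S2 (B ∪ S4) := by
    rw [Finset.disjoint_left]; intro x hx hx'
    rw [hS2, Finset.mem_singleton] at hx
    subst hx
    rcases Finset.mem_union.mp hx' with hx' | hx'
    · exact h0B hx'
    · exact h0S4 hx'
  have hdisj3 : Disjoint B S4 := Finset.disjoint_sdiff
  have hsub : S1 ∪ (S2 ∪ (B ∪ S4)) ⊆ Finset.Ico (0:ℤ) (ℓ:ℤ) := by
    intro x hx
    rw [Finset.mem_Ico]
    rcases Finset.mem_union.mp hx with hx | hx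
    · obtain ⟨u, hu, rfl⟩ := Finset.mem_image.mp hx
      exact ⟨hA0 u, hAlt u⟩
    rcases Finset.mem_union.mp hx with hx | hx
    · rw [hS2, Finset.mem_singleton] at hx; subst hx; omega
    rcases Finset.mem_union.mp hx with hx | hx
    · rw [hB, Finset.mem_Icc] at hx
      have := hchild c hc
      omega
    · obtain ⟨hx1, _⟩ := Finset.mem_sdiff.mp hx
      obtain ⟨c', hc'C, rfl⟩ := Finset.mem_image.mp hx1
      exact ⟨hA0 c', hAlt c'⟩
  have hcard : (S1 ∪ (S2 ∪ (B ∪ S4))).card ≤ ℓ := by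
    have hcc := Finset.card_le_card hsub
    rwa [Int.card_Ico, show ((ℓ:ℤ) - 0).toNat = ℓ from by omega] at hcc
  rw [Finset.card_union_of_disjoint hdisj1, Finset.card_union_of_disjoint hdisj2,
      Finset.card_union_of_disjoint hdisj3] at hcard
  have e1 : S1.card = m := hLim
  have e2 : S2.card = 1 := rfl
  have e4 : S4.card = (((G.neighborFinset r).image A) \ B).card := rfl
  have hq := Finset.card_sdiff_add_card_inter ((G.neighborFinset r).image A) B
  have hkm : (((G.neighborFinset r).image A) ∩ B).card ≤ m := by
    have hss : ((G.neighborFinset r).image A) ∩ B ⊆ (G.neighborFinset r).image A :=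
      Finset.inter_subset_left
    have := Finset.card_le_card hss
    omega
  have hkh : (((G.neighborFinset r).image A) ∩ B).card ≤ h := by
    have hsubk : ((G.neighborFinset r).image A) ∩ B ⊆ Finset.Icc (A c) (A c + ((h:ℤ)-1)) := by
      intro x hx
      obtain ⟨hx1, hx2⟩ := Finset.mem_inter.mp hx
      obtain ⟨c', hc'C, hxc'⟩ := Finset.mem_image.mp hx1
      rw [SimpleGraph.mem_neighborFinset] at hc'C
      have hmin := hcmin c' (by rwa [SimpleGraph.mem_neighborFinset])
      rw [hB, Finset.mem_Icc] at hx2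
      rw [Finset.mem_Icc]
      omega
    have hc2 := Finset.card_le_card hsubk
    rw [Int.card_Icc, show (A c + ((h:ℤ)-1) + 1 - A c) = (h:ℤ) from by ring] at hc2
    omega
  omega

end Main


theorem stmt14 {V : Type} [Fintype V] (G : SimpleGraph V) [DecidableRel G.Adj]
    (hT : G.IsTree) (m : ℕ) (hm : 2 ≤ m) (r : V)
    (hr : G.degree r = m)
    (hnbr : ∀ v : V, G.Adj r v → G.degree v = m + 1)
    (hball : ∀ v : V, G.dist r v ≤ 2)
    (h : ℕ) (hh : 1 ≤ h) :
    sigmaNum G h 1 = max (h + 2 * m) (2 * h + m) ∧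
    sigmaStar G h 1 = max (h + 2 * m) (2 * h + m) := by
  classical
  set M := max (h + 2 * m) (2 * h + m) with hM
  have hM1 : h + 2*m ≤ M := le_max_left _ _
  have hM2 : 2*h + m ≤ M := le_max_right _ _
  have hMpos : 0 < M := by omega
  have hupper := upper_bound hT hm hr hnbr hball hh hM1 hM2
  have hmemStar : M ∈ {ℓ : ℕ | 0 < ℓ ∧ ∃ f : V → ℕ, IsElegantCLabelling G h 1 ℓ f} :=
    ⟨hMpos, _, hupper⟩
  have hmemSig : M ∈ {ℓ : ℕ | 0 < ℓ ∧ ∃ f : V → ℕ, IsCLabelling G h 1 ℓ f} :=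
    ⟨hMpos, _, hupper.1⟩
  constructor
  · apply le_antisymm
    · exact Nat.sInf_le hmemSig
    · refine le_csInf ⟨M, hmemSig⟩ ?_
      rintro ℓ ⟨hpos, f, hf⟩
      exact lower_bound hT hm hr hnbr hball hh hpos hf
  · apply le_antisymm
    · exact Nat.sInf_le hmemStar
    · refine le_csInf ⟨M, hmemStar⟩ ?_
      rintro ℓ ⟨hpos, f, hf⟩
      exact lower_bound hT hm hr hnbr hball hh hpos hf.1
end

section
/- Let m ≥ 2 and h ≥ 1 be integers. Then σ_{h,1,1}(T̂_{m,2}) = σ*_{h,1,1}(T̂_{m,2}) = max{h + 2m + 1, 2h + m}. -/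
open SimpleGraph

namespace Aux15


lemma abs_coe_sub (a b : ℕ) : |(a:ℤ) - b| = ((max a b - min a b : ℕ) : ℤ) := by
  rcases le_total a b with hab | hab
  · rw [abs_of_nonpos (by push_cast; omega)]; push_cast; omega
  · rw [abs_of_nonneg (by push_cast; omega)]; push_cast; omega

lemma cyc_ge {ℓ a b k : ℕ} (h1 : k + min a b ≤ max a b) (h2 : max a b - min a b + k ≤ ℓ) :
    (k:ℤ) ≤ cycDist ℓ a b := by
  unfold cycDist
  rw [abs_coe_sub]
  omega

lemma cyc_bounds {ℓ a b k : ℕ} (hk : (k:ℤ) ≤ cycDist ℓ a b) :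
    k + min a b ≤ max a b ∧ (max a b - min a b) + k ≤ ℓ := by
  unfold cycDist at hk
  rw [abs_coe_sub] at hk
  omega

lemma cyc_ne {ℓ a b : ℕ} (hk : (1:ℤ) ≤ cycDist ℓ a b) : a ≠ b := by
  have := cyc_bounds (k := 1) (by exact_mod_cast hk)
  omega

lemma cyc_shift {ℓ a b t : ℕ} (ha : a < ℓ) (hb : b < ℓ) (ht : t < ℓ) :
    cycDist ℓ (if t ≤ a then a - t else a + ℓ - t) (if t ≤ b then b - t else b + ℓ - t)
      = cycDist ℓ a b := by
  unfold cycDist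
  rw [abs_coe_sub, abs_coe_sub]
  split_ifs <;> omega



variable {V : Type} {G : SimpleGraph V}

lemma tree_dist {u v : V} (hT : G.IsTree) (p : G.Walk u v) (hp : p.IsPath) :
    G.dist u v = p.length := by
  refine le_antisymm (SimpleGraph.dist_le p) ?_
  obtain ⟨q, hq, hq'⟩ := hT.isConnected.exists_path_of_dist u v
  have := (hT.existsUnique_path u v).unique hp hq
  rw [this, hq']

lemma tree_path_eq {u v : V} (hT : G.IsTree) (p q : G.Walk u v) (hp : p.IsPath)
    (hq : q.IsPath) : p = q :=
  (hT.existsUnique_path u v).unique hp hq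

section Struct
variable {r c c' w w' : V}

/-- distance between two children is 2 -/
lemma dist_sib (hT : G.IsTree) (hc : G.Adj r c) (hc' : G.Adj r c') (hne : c ≠ c') :
    G.dist c c' = 2 := by
  have hp : (Walk.cons hc.symm (Walk.cons hc' Walk.nil)).IsPath := by
    simp [Walk.isPath_def, hne, hc.ne', hc'.ne]
  simpa using tree_dist hT _ hp

lemma not_adj_sib (hT : G.IsTree) (hc : G.Adj r c) (hc' : G.Adj r c') (hne : c ≠ c') :
    ¬ G.Adj c c' := by
  intro had
  have h1 : G.dist c c' = 1 := dist_eq_one_iff_adj.mpr had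
  have h2 := dist_sib hT hc hc' hne
  omega

/-- a leaf is not adjacent to the root -/
lemma not_adj_root (hT : G.IsTree) (hc : G.Adj r c) (hw : G.Adj c w) (hwr : w ≠ r) :
    ¬ G.Adj r w := by
  intro had
  have hp : (Walk.cons hc (Walk.cons hw Walk.nil)).IsPath := by
    simp [Walk.isPath_def, hwr.symm, hw.ne, hc.ne]
  have h2 := tree_dist hT _ hp
  have h1 : G.dist r w = 1 := dist_eq_one_iff_adj.mpr had
  simp [h1] at h2

lemma dist_root_leaf (hT : G.IsTree) (hc : G.Adj r c) (hw : G.Adj c w) (hwr : w ≠ r) :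
    G.dist r w = 2 := by
  have hp : (Walk.cons hc (Walk.cons hw Walk.nil)).IsPath := by
    simp [Walk.isPath_def, hwr.symm, hw.ne, hc.ne]
  simpa using tree_dist hT _ hp

/-- uniqueness of the parent -/
lemma parent_unique (hT : G.IsTree) (hc : G.Adj r c) (hc' : G.Adj r c') (hw : G.Adj c w)
    (hw' : G.Adj c' w) (hwr : w ≠ r) : c = c' := by
  by_contra hne
  have hp : (Walk.cons hw.symm (Walk.cons hc.symm Walk.nil)).IsPath := by
    simp [Walk.isPath_def, hwr, hw.ne', hc.ne']
  have hq : (Walk.cons hw'.symm (Walk.cons hc'.symm Walk.nil)).IsPath := by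
    simp [Walk.isPath_def, hwr, hw'.ne', hc'.ne']
  have h := congrArg Walk.support (tree_path_eq hT _ _ hp hq)
  simp at h
  exact hne h

lemma dist_sib_leaf (hT : G.IsTree) (hc : G.Adj r c) (hc' : G.Adj r c') (hw : G.Adj c w)
    (hwr : w ≠ r) (hne : c' ≠ c) : G.dist c' w = 3 := by
  have hwc' : w ≠ c' := by
    rintro rfl
    exact not_adj_root hT hc hw hwr hc'
  have hp : (Walk.cons hc'.symm (Walk.cons hc (Walk.cons hw Walk.nil))).IsPath := by
    simp [Walk.isPath_def, hwr.symm, hw.ne, hc.ne, hc'.ne', hne, Ne.symm hwc']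
  simpa using tree_dist hT _ hp

lemma dist_leaf_leaf_same (hT : G.IsTree) (hw : G.Adj c w) (hw' : G.Adj c w')
    (hne : w ≠ w') : G.dist w w' = 2 := by
  have hp : (Walk.cons hw.symm (Walk.cons hw' Walk.nil)).IsPath := by
    simp [Walk.isPath_def, hne, hw.ne', hw'.ne]
  simpa using tree_dist hT _ hp

lemma dist_leaf_leaf_diff (hT : G.IsTree) (hc : G.Adj r c) (hc' : G.Adj r c') (hw : G.Adj c w)
    (hw' : G.Adj c' w') (hwr : w ≠ r) (hwr' : w' ≠ r) (hne : c ≠ c') : G.dist w w' = 4 := by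
  have hww' : w ≠ w' := by
    rintro rfl
    exact hne (parent_unique hT hc hc' hw hw' hwr)
  have hwc' : w ≠ c' := by
    rintro rfl
    exact not_adj_root hT hc hw hwr hc'
  have hw'c : w' ≠ c := by
    rintro rfl
    exact not_adj_root hT hc' hw' hwr' hc
  have hp : (Walk.cons hw.symm (Walk.cons hc.symm (Walk.cons hc'
      (Walk.cons hw' Walk.nil)))).IsPath := by
    simp [Walk.isPath_def, hww', hwc', hwr, hw.ne', hw'.ne, hc.ne', hc'.ne, hne,
      Ne.symm hw'c, Ne.symm hwr']
  simpa using tree_dist hT _ hp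

/-- classification of vertices of the ball of radius two -/
lemma classify (hT : G.IsTree) (hball : ∀ v : V, G.dist r v ≤ 2) (v : V) :
    v = r ∨ G.Adj r v ∨ (v ≠ r ∧ ¬ G.Adj r v ∧ ∃ c, G.Adj r c ∧ G.Adj c v) := by
  have hb := hball v
  interval_cases hd : G.dist r v
  · left
    rcases SimpleGraph.dist_eq_zero_iff_eq_or_not_reachable.mp hd with h | h
    · exact h.symm
    · exact absurd (hT.isConnected.preconnected r v) h
  · right; left; exact dist_eq_one_iff_adj.mp hd
  · right; right
    obtain ⟨p, hp⟩ := SimpleGraph.exists_walk_of_dist_ne_zero (by omega : G.dist r v ≠ 0)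
    rw [hd] at hp
    have hvr : v ≠ r := by
      rintro rfl
      simp [SimpleGraph.dist_self] at hd
    refine ⟨hvr, ?_, ?_⟩
    · intro had
      have := dist_eq_one_iff_adj.mpr had
      omega
    · cases p with
      | nil => simp at hp
      | cons a q =>
        cases q with
        | nil => simp at hp
        | cons b q2 =>
          cases q2 with
          | nil => exact ⟨_, a, b⟩
          | cons d q3 => simp only [Walk.length_cons] at hp; omega

end Struct



/-- the optimal span -/
def LL (h m : ℕ) : ℕ := max (h + 2 * m + 1) (2 * h + m)

/-- the label of the `t`-th leaf of the child with index `j` -/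
def leafLabel (h m j t : ℕ) : ℕ :=
  if max (2 * h + j) (h + m + 1) + t + 1 ≤ LL h m then max (2 * h + j) (h + m + 1) + t
  else max (2 * h + j) (h + m + 1) + t + 1 - LL h m

section lab
variable {h m j j' t t' : ℕ} (hh : 1 ≤ h) (hm : 2 ≤ m) (hj : j ≤ m) (ht : t < m)

lemma LL_ge1 : 2 * h + m ≤ LL h m := le_max_right _ _
lemma LL_ge2 : h + 2 * m + 1 ≤ LL h m := le_max_left _ _

include hh hm hj ht in
/-- leaf labels lie in `[1,h-1] ∪ [h+m+1, L-1]` -/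
lemma leafLabel_range :
    (1 ≤ leafLabel h m j t ∧ leafLabel h m j t ≤ h - 1) ∨
    (h + m + 1 ≤ leafLabel h m j t ∧ leafLabel h m j t + 1 ≤ LL h m) := by
  unfold leafLabel LL
  split_ifs <;> omega

include hh hm hj ht in
lemma leafLabel_cyc : (h:ℤ) ≤ cycDist (LL h m) (h + j) (leafLabel h m j t) := by
  refine cyc_ge ?_ ?_ <;> (unfold leafLabel LL; split_ifs <;> omega)

include hh hm hj ht in
lemma leafLabel_inj (ht' : t' < m) (he : leafLabel h m j t = leafLabel h m j t') : t = t' := by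
  unfold leafLabel LL at he
  split_ifs at he <;> omega

include hh hm hj in
lemma child_cyc : (h:ℤ) ≤ cycDist (LL h m) 0 (h + j) := by
  refine cyc_ge ?_ ?_
  · omega
  · unfold LL; omega

lemma cyc_one {L a b : ℕ} (hne : a ≠ b) (ha : a < L) (hb : b < L) :
    (1:ℤ) ≤ cycDist L a b := by
  have : ((1:ℕ):ℤ) ≤ cycDist L a b := cyc_ge (by omega) (by omega)
  exact_mod_cast this

lemma cyc_comm {L a b : ℕ} : cycDist L a b = cycDist L b a := by
  unfold cycDist; rw [abs_sub_comm]

end lab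
lemma mod_two {a L : ℕ} (h2 : a < 2 * L) : a % L = if a < L then a else a - L := by
  split_ifs with hl
  · exact Nat.mod_eq_of_lt hl
  · rw [Nat.mod_eq_sub_mod (by omega)]
    exact Nat.mod_eq_of_lt (by omega)

lemma cast_eq_mod {L a b : ℕ} (hab : (a : ZMod L) = (b : ZMod L)) : a % L = b % L := by
  have := congrArg ZMod.val hab
  rwa [ZMod.val_natCast, ZMod.val_natCast] at this

lemma adj_shape {V : Type} {G : SimpleGraph V} {r : V} (hT : G.IsTree)
    (hball : ∀ v : V, G.dist r v ≤ 2) {u v : V} (huv : G.Adj u v) :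
    (u = r ∧ G.Adj r v) ∨ (v = r ∧ G.Adj r u) ∨
    (G.Adj r u ∧ v ≠ r ∧ ¬ G.Adj r v) ∨ (G.Adj r v ∧ u ≠ r ∧ ¬ G.Adj r u) := by
  rcases classify hT hball u with rfl | hu | ⟨hur, hunr, cu, hcu1, hcu2⟩
  · exact Or.inl ⟨rfl, huv⟩
  · rcases classify hT hball v with rfl | hv | ⟨hvr, hvnr, cv, hcv1, hcv2⟩
    · exact Or.inr (Or.inl ⟨rfl, hu⟩)
    · exact absurd huv (not_adj_sib hT hu hv huv.ne)
    · exact Or.inr (Or.inr (Or.inl ⟨hu, hvr, hvnr⟩))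
  · rcases classify hT hball v with rfl | hv | ⟨hvr, hvnr, cv, hcv1, hcv2⟩
    · exact Or.inr (Or.inl ⟨rfl, by exact absurd huv.symm hunr⟩)
    · exact Or.inr (Or.inr (Or.inr ⟨hv, hur, hunr⟩))
    · exfalso
      have hd1 : G.dist u v = 1 := dist_eq_one_iff_adj.mpr huv
      by_cases hcc : cu = cv
      · subst hcc
        have := dist_leaf_leaf_same hT hcu2 hcv2 huv.ne
        omega
      · have := dist_leaf_leaf_diff hT hcu1 hcv1 hcu2 hcv2 hur hvr hcc
        omega

lemma enum_exists {V : Type} [DecidableEq V] (s : Finset V) :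
    ∃ g : V → ℕ, (∀ v ∈ s, g v < s.card) ∧ ∀ v ∈ s, ∀ v' ∈ s, g v = g v' → v = v' := by
  refine ⟨fun v => if hv : v ∈ s then (s.equivFin ⟨v, hv⟩ : ℕ) else 0, ?_, ?_⟩
  · intro v hv
    simp only [dif_pos hv]
    exact (s.equivFin ⟨v, hv⟩).isLt
  · intro v hv v' hv' he
    simp only [dif_pos hv, dif_pos hv'] at he
    have := s.equivFin.injective (Fin.val_injective he)
    exact Subtype.ext_iff.mp this

lemma pa_exists {V : Type} {G : SimpleGraph V} {r : V} (hT : G.IsTree) :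
    ∃ pa : V → V, ∀ v c, v ≠ r → G.Adj r c → G.Adj c v → pa v = c := by
  classical
  refine ⟨fun v => if hv : ∃ c, G.Adj r c ∧ G.Adj c v then Classical.choose hv else r, ?_⟩
  intro v c hvr hc hcv
  have hex : ∃ c', G.Adj r c' ∧ G.Adj c' v := ⟨c, hc, hcv⟩
  have hsp := Classical.choose_spec hex
  simp only [dif_pos hex]
  exact parent_unique hT hsp.1 hc hsp.2 hcv hvr

lemma lower {V : Type} [Fintype V] (G : SimpleGraph V) [DecidableRel G.Adj]
    (hT : G.IsTree) {m : ℕ} {r : V}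
    (hr : G.degree r = m + 1)
    (hnbr : ∀ v : V, G.Adj r v → G.degree v = m + 1)
    {h : ℕ} (hh : 1 ≤ h) {ℓ : ℕ} {f : V → ℕ} (hℓ : 0 < ℓ)
    (hf : IsCLabelling G h 1 ℓ f) :
    max (h + 2 * m + 1) (2 * h + m) ≤ ℓ := by
  classical
  obtain ⟨hf1, hf2, hf3⟩ := hf
  set d : V → ℕ := fun v => if f r ≤ f v then f v - f r else f v + ℓ - f r with hdef
  have hd : ∀ v, d v < ℓ := by
    intro v; have := hf1 v; have := hf1 r; simp only [hdef]; split_ifs <;> omega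
  have hdr : d r = 0 := by simp [hdef]
  have hsh : ∀ u v, cycDist ℓ (d u) (d v) = cycDist ℓ (f u) (f v) := fun u v =>
    cyc_shift (hf1 u) (hf1 v) (hf1 r)
  have hd2 : ∀ u v, G.dist u v = 1 → (h:ℤ) ≤ cycDist ℓ (d u) (d v) := by
    intro u v huv; rw [hsh]; exact hf2 u v huv
  have hd3 : ∀ u v, G.dist u v = 2 ∨ G.dist u v = 3 → d u ≠ d v := by
    intro u v huv
    exact cyc_ne (by rw [hsh]; exact_mod_cast hf3 u v huv)
  have hd1ne : ∀ u v, G.dist u v = 1 → d u ≠ d v := by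
    intro u v huv
    refine cyc_ne (le_trans ?_ (hd2 u v huv))
    exact_mod_cast hh
  -- the children
  set C : Finset V := G.neighborFinset r with hCdef
  have hCcard : C.card = m + 1 := by rw [hCdef, card_neighborFinset_eq_degree, hr]
  have hCne : C.Nonempty := Finset.card_pos.mp (by omega)
  obtain ⟨cs, hcsC, hcsmax⟩ := C.exists_max_image d hCne
  have hadjcs : G.Adj r cs := by rwa [hCdef, mem_neighborFinset] at hcsC
  set y : ℕ := d cs with hydef
  have hy : h ≤ y ∧ y + h ≤ ℓ := by
    have := cyc_bounds (hd2 r cs (dist_eq_one_iff_adj.mpr hadjcs))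
    rw [hdr] at this
    omega
  -- the leaves of cs
  set Lf : Finset V := (G.neighborFinset cs).erase r with hLdef
  have hLmem : ∀ w ∈ Lf, G.Adj cs w ∧ w ≠ r := by
    intro w hw
    rw [hLdef, Finset.mem_erase, mem_neighborFinset] at hw
    exact ⟨hw.2, hw.1⟩
  have hLcard : Lf.card = m := by
    rw [hLdef, Finset.card_erase_of_mem (by rw [mem_neighborFinset]; exact hadjcs.symm),
      card_neighborFinset_eq_degree, hnbr cs hadjcs]
    omega
  -- image finsets
  set AL : Finset ℕ := Lf.image d with hALdef
  set AC : Finset ℕ := C.image d with hACdef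
  set Ball : Finset ℕ := Finset.Icc (y - h + 1) (y + h - 1) with hBdef
  have hALcard : AL.card = m := by
    rw [hALdef, Finset.card_image_of_injOn, hLcard]
    intro w hw w' hw' heq
    by_contra hne
    exact hd3 w w' (Or.inl (dist_leaf_leaf_same hT (hLmem w (Finset.mem_coe.mp hw)).1
      (hLmem w' (Finset.mem_coe.mp hw')).1 hne)) heq
  have hACcard : AC.card = m + 1 := by
    rw [hACdef, Finset.card_image_of_injOn, hCcard]
    intro c hc c' hc' heq
    by_contra hne
    simp only [Finset.mem_coe, hCdef, mem_neighborFinset] at hc hc'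
    exact hd3 c c' (Or.inl (dist_sib hT hc hc' hne)) heq
  have hBcard : Ball.card = 2 * h - 1 := by
    rw [hBdef, Nat.card_Icc]; omega
  -- cyclic distance facts about members
  have hALy : ∀ a ∈ AL, ¬ (y - h + 1 ≤ a ∧ a ≤ y + h - 1) ∧ a ≠ 0 := by
    intro a ha
    rw [hALdef, Finset.mem_image] at ha
    obtain ⟨w, hw, rfl⟩ := ha
    obtain ⟨hw1, hw2⟩ := hLmem w hw
    have hcb := cyc_bounds (hd2 cs w (dist_eq_one_iff_adj.mpr hw1))
    have hne0 : d w ≠ 0 := by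
      rw [← hdr]; exact fun e => hd3 r w (Or.inl (dist_root_leaf hT hadjcs hw1 hw2)) e.symm
    rw [← hydef] at hcb
    refine ⟨by omega, hne0⟩
  have hAC0 : ∀ a ∈ AC, a ≠ 0 := by
    intro a ha
    rw [hACdef, Finset.mem_image] at ha
    obtain ⟨c, hc, rfl⟩ := ha
    rw [hCdef, mem_neighborFinset] at hc
    rw [← hdr]
    exact fun e => hd1ne r c (dist_eq_one_iff_adj.mpr hc) e.symm
  have hALAC : ∀ a ∈ AL, a ∉ AC := by
    intro a ha haC
    rw [hALdef, Finset.mem_image] at ha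
    obtain ⟨w, hw, rfl⟩ := ha
    rw [hACdef, Finset.mem_image] at haC
    obtain ⟨c, hc, hceq⟩ := haC
    rw [hCdef, mem_neighborFinset] at hc
    obtain ⟨hw1, hw2⟩ := hLmem w hw
    by_cases hccs : c = cs
    · subst hccs
      exact hd1ne c w (dist_eq_one_iff_adj.mpr hw1) hceq
    · exact hd3 c w (Or.inr (dist_sib_leaf hT hadjcs hc hw1 hw2 hccs)) hceq
  -- main counting
  have hsub : {0} ∪ AL ∪ (AC ∪ Ball) ⊆ Finset.range ℓ := by
    intro z hz
    rw [Finset.mem_range]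
    simp only [Finset.mem_union, Finset.mem_singleton] at hz
    rcases hz with (rfl | hz) | hz | hz
    · omega
    · rw [hALdef, Finset.mem_image] at hz; obtain ⟨w, _, rfl⟩ := hz; exact hd w
    · rw [hACdef, Finset.mem_image] at hz; obtain ⟨c, _, rfl⟩ := hz; exact hd c
    · rw [hBdef, Finset.mem_Icc] at hz; omega
  have hcard0 : ({0} ∪ AL ∪ (AC ∪ Ball)).card ≤ ℓ := by
    have := Finset.card_le_card hsub
    rwa [Finset.card_range] at this
  have hdisj1 : Disjoint ({0} : Finset ℕ) AL := by
    rw [Finset.disjoint_left]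
    intro a ha haL
    rw [Finset.mem_singleton] at ha
    subst ha
    exact (hALy 0 haL).2 rfl
  have hdisj2 : Disjoint ({0} ∪ AL : Finset ℕ) (AC ∪ Ball) := by
    rw [Finset.disjoint_left]
    intro a ha haR
    simp only [Finset.mem_union, Finset.mem_singleton] at ha haR
    rcases ha with rfl | ha
    · rcases haR with haR | haR
      · exact hAC0 0 haR rfl
      · rw [hBdef, Finset.mem_Icc] at haR; omega
    · rcases haR with haR | haR
      · exact hALAC a ha haR
      · rw [hBdef, Finset.mem_Icc] at haR
        exact (hALy a ha).1 haR
  have hIcc2 : AC ∩ Ball ⊆ Finset.Icc (y - h + 1) y := by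
    intro z hz
    rw [Finset.mem_inter] at hz
    obtain ⟨hz1, hz2⟩ := hz
    rw [hACdef, Finset.mem_image] at hz1
    obtain ⟨c, hc, rfl⟩ := hz1
    rw [hBdef, Finset.mem_Icc] at hz2
    have := hcsmax c hc
    rw [Finset.mem_Icc]
    omega
  have hintcard : (AC ∩ Ball).card ≤ h := by
    have := Finset.card_le_card hIcc2
    rw [Nat.card_Icc] at this
    omega
  have hXcard : (AC ∪ Ball).card + (AC ∩ Ball).card = (m + 1) + (2 * h - 1) := by
    rw [Finset.card_union_add_card_inter, hACcard, hBcard]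
  have hXcard2 : 2 * h - 1 ≤ (AC ∪ Ball).card := by
    rw [← hBcard]; exact Finset.card_le_card Finset.subset_union_right
  have e1 : ({0} ∪ AL ∪ (AC ∪ Ball)).card = (1 + m) + (AC ∪ Ball).card := by
    rw [Finset.card_union_of_disjoint hdisj2, Finset.card_union_of_disjoint hdisj1,
      Finset.card_singleton, hALcard]
  omega

lemma upper {V : Type} [Fintype V] (G : SimpleGraph V) [DecidableRel G.Adj]
    (hT : G.IsTree) {m : ℕ} (hm : 2 ≤ m) {r : V}
    (hr : G.degree r = m + 1)
    (hnbr : ∀ v : V, G.Adj r v → G.degree v = m + 1)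
    (hball : ∀ v : V, G.dist r v ≤ 2)
    {h : ℕ} (hh : 1 ≤ h) :
    ∃ f : V → ℕ, IsElegantCLabelling G h 1 (LL h m) f := by
  classical
  have hL1 : h + 2 * m + 1 ≤ LL h m := le_max_left _ _
  have hL2 : 2 * h + m ≤ LL h m := le_max_right _ _
  haveI : NeZero (LL h m) := ⟨by omega⟩
  -- enumeration of children
  obtain ⟨jdx, hjlt, hjinj⟩ := enum_exists (G.neighborFinset r)
  have hCcard : (G.neighborFinset r).card = m + 1 := by
    rw [card_neighborFinset_eq_degree, hr]
  have hjle : ∀ c, G.Adj r c → jdx c ≤ m := by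
    intro c hc
    have := hjlt c ((mem_neighborFinset G r c).mpr hc)
    omega
  -- parent function
  obtain ⟨pa, hpa⟩ := pa_exists hT
  -- enumeration of the leaves of each child
  choose tdx htlt htinj using fun c : V => enum_exists ((G.neighborFinset c).erase r)
  have hLfcard : ∀ c, G.Adj r c → ((G.neighborFinset c).erase r).card = m := by
    intro c hc
    rw [Finset.card_erase_of_mem (by rw [mem_neighborFinset]; exact hc.symm),
      card_neighborFinset_eq_degree, hnbr c hc]
    omega
  have htle : ∀ c v, G.Adj r c → v ≠ r → G.Adj c v → tdx c v < m := by
    intro c v hc hvr hcv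
    have := htlt c v (by rw [Finset.mem_erase, mem_neighborFinset]; exact ⟨hvr, hcv⟩)
    rwa [hLfcard c hc] at this
  -- the labelling
  obtain ⟨f, hfr, hfC, hfL⟩ : ∃ f : V → ℕ, f r = 0 ∧ (∀ c, G.Adj r c → f c = h + jdx c) ∧
      (∀ v, v ≠ r → ¬ G.Adj r v → f v = leafLabel h m (jdx (pa v)) (tdx (pa v) v)) := by
    refine ⟨fun v => if v = r then 0 else if G.Adj r v then h + jdx v
      else leafLabel h m (jdx (pa v)) (tdx (pa v) v), by simp, ?_, ?_⟩
    · intro c hc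
      simp only [if_neg hc.ne', if_pos hc]
    · intro v h1 h2
      simp only [if_neg h1, if_neg h2]
  -- facts about leaves
  have hleaf : ∀ v, v ≠ r → ¬ G.Adj r v → (G.Adj r (pa v) ∧ G.Adj (pa v) v ∧
      jdx (pa v) ≤ m ∧ tdx (pa v) v < m) := by
    intro v h1 h2
    rcases classify hT hball v with rfl | hv | ⟨hvr, hvnr, c, hc1, hc2⟩
    · exact absurd rfl h1
    · exact absurd hv h2
    · rw [hpa v c h1 hc1 hc2]
      exact ⟨hc1, hc2, hjle c hc1, htle c v hc1 h1 hc2⟩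
  -- range bound
  have hflt : ∀ v, f v < LL h m := by
    intro v
    rcases classify hT hball v with rfl | hv | ⟨h1, h2, _⟩
    · rw [hfr]; omega
    · rw [hfC v hv]; have := hjle v hv; omega
    · rw [hfL v h1 h2]
      obtain ⟨_, _, hj, ht⟩ := hleaf v h1 h2
      rcases leafLabel_range hh hm hj ht with ⟨a, b⟩ | ⟨a, b⟩ <;> omega
  -- distance-one condition
  have hc1 : ∀ u v, G.dist u v = 1 → (h:ℤ) ≤ cycDist (LL h m) (f u) (f v) := by
    intro u v hd
    have hadj := dist_eq_one_iff_adj.mp hd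
    rcases adj_shape hT hball hadj with ⟨rfl, hv⟩ | ⟨rfl, hu⟩ | ⟨hu, hvr, hvn⟩ | ⟨hv, hur, hun⟩
    · rw [hfr, hfC v hv]
      exact child_cyc hh hm (hjle v hv)
    · rw [hfr, hfC u hu, cyc_comm]
      exact child_cyc hh hm (hjle u hu)
    · have hpav : pa v = u := hpa v u hvr hu hadj
      rw [hfC u hu, hfL v hvr hvn, hpav]
      exact leafLabel_cyc hh hm (hjle u hu) (htle u v hu hvr hadj)
    · have hpau : pa u = v := hpa u v hur hv hadj.symm
      rw [hfC v hv, hfL u hur hun, hpau, cyc_comm]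
      exact leafLabel_cyc hh hm (hjle v hv) (htle v u hv hur hadj.symm)
  -- labels of vertices at distance two or three are distinct
  have hne23 : ∀ u v, G.dist u v = 2 ∨ G.dist u v = 3 → f u ≠ f v := by
    intro u v hd
    have hne : u ≠ v := by
      rintro rfl
      rw [SimpleGraph.dist_self] at hd
      omega
    have hnadj : ¬ G.Adj u v := by
      intro had
      have := dist_eq_one_iff_adj.mpr had
      omega
    rcases classify hT hball u with rfl | hu | ⟨hur, hun, cu, hcu1, hcu2⟩ <;>
      rcases classify hT hball v with rfl | hv | ⟨hvr, hvn, cv, hcv1, hcv2⟩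
    · exact absurd rfl hne
    · exact absurd hv hnadj
    · rw [hfr, hfL v hvr hvn]
      obtain ⟨_, _, hj, ht⟩ := hleaf v hvr hvn
      rcases leafLabel_range hh hm hj ht with ⟨a, b⟩ | ⟨a, b⟩ <;> omega
    · exact absurd hu (fun had => hnadj had.symm)
    · rw [hfC u hu, hfC v hv]
      intro heq
      exact hne (hjinj u ((mem_neighborFinset G r u).mpr hu) v
        ((mem_neighborFinset G r v).mpr hv) (by omega))
    · rw [hfC u hu, hfL v hvr hvn]
      obtain ⟨_, _, hj, ht⟩ := hleaf v hvr hvn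
      have := hjle u hu
      rcases leafLabel_range hh hm hj ht with ⟨a, b⟩ | ⟨a, b⟩ <;> omega
    · rw [hfr, hfL u hur hun]
      obtain ⟨_, _, hj, ht⟩ := hleaf u hur hun
      rcases leafLabel_range hh hm hj ht with ⟨a, b⟩ | ⟨a, b⟩ <;> omega
    · rw [hfC v hv, hfL u hur hun]
      obtain ⟨_, _, hj, ht⟩ := hleaf u hur hun
      have := hjle v hv
      rcases leafLabel_range hh hm hj ht with ⟨a, b⟩ | ⟨a, b⟩ <;> omega
    · -- both leaves
      have hpau : pa u = cu := hpa u cu hur hcu1 hcu2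
      have hpav : pa v = cv := hpa v cv hvr hcv1 hcv2
      by_cases hcc : cu = cv
      · subst hcc
        rw [hfL u hur hun, hfL v hvr hvn, hpau, hpav]
        intro heq
        have htne : tdx cu u = tdx cu v :=
          leafLabel_inj hh hm (hjle cu hcu1) (htle cu u hcu1 hur hcu2)
            (htle cu v hcu1 hvr hcv2) heq
        exact hne (htinj cu u (by rw [Finset.mem_erase, mem_neighborFinset]; exact ⟨hur, hcu2⟩)
          v (by rw [Finset.mem_erase, mem_neighborFinset]; exact ⟨hvr, hcv2⟩) htne)
      · have := dist_leaf_leaf_diff hT hcu1 hcv1 hcu2 hcv2 hur hvr hcc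
        omega
  have hclab : IsCLabelling G h 1 (LL h m) f := by
    refine ⟨hflt, hc1, ?_⟩
    intro u v hd
    have h1 : (1:ℤ) ≤ cycDist (LL h m) (f u) (f v) :=
      cyc_one (hne23 u v hd) (hflt u) (hflt v)
    exact_mod_cast h1
  -- the circular intervals witnessing elegance
  refine ⟨f, hclab, fun u => if u = r
      then {x : ZMod (LL h m) | ∃ i : ℕ, i ≤ m ∧ x = ((h : ℕ) : ZMod (LL h m)) + (i : ZMod (LL h m))}
      else if G.Adj r u
      then {x : ZMod (LL h m) | ∃ i : ℕ, i ≤ LL h m - m - 2 ∧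
        x = ((h + m + 1 : ℕ) : ZMod (LL h m)) + (i : ZMod (LL h m))}
      else {x : ZMod (LL h m) | ∃ i : ℕ, i ≤ 0 ∧
        x = ((f (pa u) : ℕ) : ZMod (LL h m)) + (i : ZMod (LL h m))}, ?_, ?_, ?_⟩
  · intro u
    dsimp only
    split_ifs
    · exact ⟨_, m, rfl⟩
    · exact ⟨_, LL h m - m - 2, rfl⟩
    · exact ⟨_, 0, rfl⟩
  · -- membership of neighbours' labels
    intro u w hadj
    dsimp only
    rcases adj_shape hT hball hadj with ⟨rfl, hv⟩ | ⟨rfl, hu⟩ | ⟨hu, hvr, hvn⟩ | ⟨hv, hur, hun⟩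
    · rw [if_pos rfl, hfC w hv]
      exact ⟨jdx w, hjle w hv, by push_cast; ring⟩
    · rw [if_neg hu.ne', if_pos hu, hfr]
      refine ⟨LL h m - (h + m + 1), by omega, ?_⟩
      rw [← Nat.cast_add, show h + m + 1 + (LL h m - (h + m + 1)) = LL h m by omega,
        ZMod.natCast_self]
      simp
    · -- u is a child, w is a leaf of u
      rw [if_neg hu.ne', if_pos hu, hfL w hvr hvn]
      obtain ⟨_, _, hj, ht⟩ := hleaf w hvr hvn
      rcases leafLabel_range hh hm hj ht with ⟨ha, hb⟩ | ⟨ha, hb⟩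
      · refine ⟨leafLabel h m (jdx (pa w)) (tdx (pa w) w) + LL h m - (h + m + 1), by omega, ?_⟩
        rw [← Nat.cast_add, show h + m + 1 + (leafLabel h m (jdx (pa w)) (tdx (pa w) w)
          + LL h m - (h + m + 1)) = leafLabel h m (jdx (pa w)) (tdx (pa w) w) + LL h m by omega,
          Nat.cast_add, ZMod.natCast_self, add_zero]
      · refine ⟨leafLabel h m (jdx (pa w)) (tdx (pa w) w) - (h + m + 1), by omega, ?_⟩
        rw [← Nat.cast_add, show h + m + 1 + (leafLabel h m (jdx (pa w)) (tdx (pa w) w)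
          - (h + m + 1)) = leafLabel h m (jdx (pa w)) (tdx (pa w) w) by omega]
    · -- u is a leaf, w is its parent
      have hpau : pa u = w := hpa u w hur hv hadj.symm
      rw [if_neg hur, if_neg hun]
      exact ⟨0, le_refl 0, by rw [hpau]; simp⟩
  · -- disjointness of intervals along edges
    intro u v hadj
    dsimp only
    have key : ∀ i i' b : ℕ, i ≤ LL h m - m - 2 → h ≤ b → b + i' ≤ h + m →
        ((h + m + 1 : ℕ) : ZMod (LL h m)) + (i : ZMod (LL h m)) ≠
          ((b : ℕ) : ZMod (LL h m)) + (i' : ZMod (LL h m)) := by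
      intro i i' b hi hb1 hb2 heq
      rw [← Nat.cast_add, ← Nat.cast_add] at heq
      have hmod := cast_eq_mod heq
      rw [mod_two (by omega), mod_two (by omega)] at hmod
      split_ifs at hmod <;> omega
    rcases adj_shape hT hball hadj with ⟨rfl, hv⟩ | ⟨rfl, hu⟩ | ⟨hu, hvr, hvn⟩ | ⟨hv, hur, hun⟩
    · rw [if_pos rfl, if_neg hv.ne', if_pos hv]
      apply Set.eq_empty_iff_forall_notMem.mpr
      rintro x ⟨⟨i, hi, rfl⟩, ⟨i', hi', heq⟩⟩
      exact key i' i h hi' le_rfl (by omega) heq.symm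
    · rw [if_neg hu.ne', if_pos hu, if_pos rfl]
      apply Set.eq_empty_iff_forall_notMem.mpr
      rintro x ⟨⟨i, hi, rfl⟩, ⟨i', hi', heq⟩⟩
      exact key i i' h hi le_rfl (by omega) heq
    · rw [if_neg hu.ne', if_pos hu, if_neg hvr, if_neg hvn]
      apply Set.eq_empty_iff_forall_notMem.mpr
      rintro x ⟨⟨i, hi, rfl⟩, ⟨i', hi', heq⟩⟩
      have hpav : pa v = u := hpa v u hvr hu hadj
      rw [hpav, hfC u hu] at heq
      have := hjle u hu
      exact key i i' (h + jdx u) hi (by omega) (by omega) heq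
    · rw [if_neg hur, if_neg hun, if_neg hv.ne', if_pos hv]
      apply Set.eq_empty_iff_forall_notMem.mpr
      rintro x ⟨⟨i, hi, rfl⟩, ⟨i', hi', heq⟩⟩
      have hpau : pa u = v := hpa u v hur hv hadj.symm
      rw [hpau, hfC v hv] at heq
      have := hjle v hv
      exact key i' i (h + jdx v) hi' (by omega) (by omega) heq.symm


end Aux15

theorem stmt15 {V : Type} [Fintype V] (G : SimpleGraph V) [DecidableRel G.Adj]
    (hT : G.IsTree) (m : ℕ) (hm : 2 ≤ m) (r : V)
    (hr : G.degree r = m + 1)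
    (hnbr : ∀ v : V, G.Adj r v → G.degree v = m + 1)
    (hball : ∀ v : V, G.dist r v ≤ 2)
    (h : ℕ) (hh : 1 ≤ h) :
    sigmaNum G h 1 = max (h + 2 * m + 1) (2 * h + m) ∧
    sigmaStar G h 1 = max (h + 2 * m + 1) (2 * h + m) := by
  have hub := Aux15.upper G hT hm hr hnbr hball hh
  obtain ⟨f0, hf0⟩ := hub
  have hmemS : (max (h + 2 * m + 1) (2 * h + m)) ∈
      {ℓ : ℕ | 0 < ℓ ∧ ∃ f : V → ℕ, IsCLabelling G h 1 ℓ f} := ⟨by omega, f0, hf0.1⟩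
  have hmemE : (max (h + 2 * m + 1) (2 * h + m)) ∈
      {ℓ : ℕ | 0 < ℓ ∧ ∃ f : V → ℕ, IsElegantCLabelling G h 1 ℓ f} := ⟨by omega, f0, hf0⟩
  constructor
  · refine le_antisymm (Nat.sInf_le hmemS) (le_csInf ⟨_, hmemS⟩ ?_)
    rintro b ⟨hb, f, hf⟩
    exact Aux15.lower G hT hr hnbr hh hb hf
  · refine le_antisymm (Nat.sInf_le hmemE) (le_csInf ⟨_, hmemE⟩ ?_)
    rintro b ⟨hb, f, hf⟩
    exact Aux15.lower G hT hr hnbr hh hb hf.1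
end

section
/- Let h ≥ 1 and m, k ≥ 2 be integers. Then σ_{h,1,1}(T̂_{m,k}) = σ*_{h,1,1}(T̂_{m,k}) = max{h + 2m + 1, 2h + m}. -/
open SimpleGraph

/-!
Lower bound. For every edge `ru` the labels of `N(r) ∪ N(u)` are pairwise distinct. The `m + 1`
labels around `u` lie in the arc of residues at cyclic distance at least `h` from `f u`, which has
`ℓ - 2h + 1` elements, so `ℓ ≥ 2h + m`. If `u` is the neighbour of `r` whose label comes last
going up from `f r`, the `h - 1` residues just above `f u` carry none of the `2m + 2` labels of
`N(r) ∪ N(u)`, so `ℓ ≥ h + 2m + 1`.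

Upper bound. Every finite tree of maximum degree at most `m + 1` has an elegant labelling of span
`max (h + 2m + 1) (2h + m)`. It is grown leaf by leaf, keeping every interval `I_v` at cyclic
distance at least `h` from the label of `v`: a new leaf `w` at `v` takes a free slot of `I_v`, and
`I_w` is placed so that it contains the label of `v`, misses `I_v` and keeps its distance from the
label of `w`.
-/

namespace ZMod

lemma val_add_eq_or_val_add_add_eq {n : ℕ} [NeZero n] (a b : ZMod n) :
    (a + b).val = a.val + b.val ∨ (a + b).val + n = a.val + b.val := by
  rcases lt_or_ge (a.val + b.val) n with h | h
  · exact Or.inl (val_add_of_lt h)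
  · exact Or.inr (val_add_val_of_le h).symm

lemma exists_add_notMem_of_ncard_le {L m : ℕ} (hm : m < L) (a : ZMod L) {T : Set (ZMod L)}
    (hT : T.ncard ≤ m) : ∃ s ≤ m, a + (s : ZMod L) ∉ T := by
  have : NeZero L := ⟨by omega⟩
  by_contra! hall
  have hsub : (((Finset.range (m + 1)).image fun i : ℕ => a + (i : ZMod L) : Finset _) :
      Set (ZMod L)) ⊆ T := by
    intro z hz
    simp only [Finset.coe_image, Finset.coe_range, Set.mem_image, Set.mem_Iio] at hz
    obtain ⟨i, hi, rfl⟩ := hz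
    exact hall i (by omega)
  have hinj : Set.InjOn (fun i : ℕ => a + (i : ZMod L)) (Finset.range (m + 1) : Set ℕ) := by
    intro i hi j hj hij
    simp only [Finset.coe_range, Set.mem_Iio] at hi hj
    have := congrArg val (add_left_cancel hij)
    rwa [val_cast_of_lt (by omega), val_cast_of_lt (by omega)] at this
  have := Set.ncard_le_ncard hsub
  rw [Set.ncard_coe_finset, Finset.card_image_of_injOn hinj, Finset.card_range] at this
  omega

end ZMod

section CyclicDistance

variable {L : ℕ} [NeZero L]

lemma cycDist_val_eq (x y : ZMod L) :
    cycDist L x.val y.val = min ((y - x).val : ℤ) (L - (y - x).val) := by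
  have hx := x.val_lt
  have hy := y.val_lt
  have hd := (y - x).val_lt
  unfold cycDist
  rcases ZMod.val_add_eq_or_val_add_add_eq (y - x) x with h | h <;>
    rw [sub_add_cancel] at h <;>
    rcases abs_cases ((x.val : ℤ) - y.val) with ⟨habs, _⟩ | ⟨habs, _⟩ <;> rw [habs] <;> omega

lemma le_cycDist_val_iff (c : ℕ) (x y : ZMod L) :
    (c : ℤ) ≤ cycDist L x.val y.val ↔ c ≤ (y - x).val ∧ (y - x).val + c ≤ L := by
  rw [cycDist_val_eq, le_min_iff]
  omega

lemma one_le_cycDist_val_iff (x y : ZMod L) : (1 : ℤ) ≤ cycDist L x.val y.val ↔ x ≠ y := by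
  rw [← Nat.cast_one, le_cycDist_val_iff, ne_comm, ← sub_ne_zero, ← ZMod.val_ne_zero]
  have := (y - x).val_lt
  omega

end CyclicDistance

def circInterval {L : ℕ} (a : ZMod L) (m : ℕ) : Set (ZMod L) :=
  {x | ∃ i : ℕ, i ≤ m ∧ x = a + (i : ZMod L)}

lemma isCircInterval_circInterval {L : ℕ} (a : ZMod L) (m : ℕ) :
    IsCircInterval L (circInterval a m) :=
  ⟨a, m, rfl⟩

lemma disjoint_circInterval_add {L m d : ℕ} (a : ZMod L) (hd : m < d) (hdL : d + m < L) :
    Disjoint (circInterval a m) (circInterval (a + d) m) := by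
  rw [Set.disjoint_left]
  rintro _ ⟨i, hi, rfl⟩ ⟨j, hj, hij⟩
  have hcast : ((i : ℕ) : ZMod L) = ((d + j : ℕ) : ZMod L) := by
    push_cast
    linear_combination hij
  have := congrArg ZMod.val hcast
  rw [ZMod.val_cast_of_lt (by omega), ZMod.val_cast_of_lt (by omega)] at this
  omega

namespace SimpleGraph

variable {V : Type} {G : SimpleGraph V}

lemma ncard_neighborSet_eq_degree [Fintype V] [DecidableRel G.Adj] (v : V) :
    (G.neighborSet v).ncard = G.degree v := by
  rw [← card_neighborFinset_eq_degree, ← Set.ncard_coe_finset, coe_neighborFinset]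

lemma ncard_neighborSet_induce (s : Set V) (z : s) :
    ((G.induce s).neighborSet z).ncard = (G.neighborSet z ∩ s).ncard := by
  rw [neighborSet_induce, ← Set.ncard_image_of_injective _ Subtype.val_injective,
    Set.image_preimage_eq_inter_range, Subtype.range_coe]

lemma exists_adj_adj_of_dist_eq_two {u v : V} (huv : G.dist u v = 2) :
    u ≠ v ∧ ∃ y, G.Adj u y ∧ G.Adj y v := by
  obtain ⟨p, hp⟩ :=
    (Reachable.of_dist_ne_zero (by omega : G.dist u v ≠ 0)).exists_walk_length_eq_dist
  refine ⟨fun h => by simp [h] at huv, p.getVert 1, ?_, ?_⟩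
  · simpa using p.adj_getVert_succ (i := 0) (by omega)
  · have := p.adj_getVert_succ (i := 1) (by omega)
    rwa [show 1 + 1 = p.length by omega, p.getVert_length] at this

lemma exists_adj_adj_adj_of_dist_eq_three {u v : V} (huv : G.dist u v = 3) :
    ∃ y z, G.Adj u y ∧ G.Adj y z ∧ G.Adj z v := by
  obtain ⟨p, hp⟩ :=
    (Reachable.of_dist_ne_zero (by omega : G.dist u v ≠ 0)).exists_walk_length_eq_dist
  refine ⟨p.getVert 1, p.getVert 2, ?_, p.adj_getVert_succ (by omega), ?_⟩
  · simpa using p.adj_getVert_succ (i := 0) (by omega)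
  · have := p.adj_getVert_succ (i := 2) (by omega)
    rwa [show 2 + 1 = p.length by omega, p.getVert_length] at this

lemma adj_cases_of_leaf {w v p q : V} (hleaf : ∀ y, G.Adj w y → y = v) (hpq : G.Adj p q) :
    (p = w ∧ q = v) ∨ (p = v ∧ q = w) ∨ (p ≠ w ∧ q ≠ w) := by
  by_cases hp : p = w
  · subst hp; exact Or.inl ⟨rfl, hleaf q hpq⟩
  by_cases hq : q = w
  · subst hq; exact Or.inr (Or.inl ⟨hleaf p hpq.symm, rfl⟩)
  exact Or.inr (Or.inr ⟨hp, hq⟩)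

lemma IsAcyclic.disjoint_neighborSet (hG : G.IsAcyclic) {r u : V} (hru : G.Adj r u) :
    Disjoint (G.neighborSet r) (G.neighborSet u) :=
  Set.disjoint_left.mpr fun x hr hu => by
    classical exact hG.cliqueFree le_rfl {r, u, x} (is3Clique_triple_iff.mpr ⟨hru, hr, hu⟩)

lemma IsTree.exists_leaf [Finite V] [Nontrivial V] (hT : G.IsTree) :
    ∃ w v, G.Adj w v ∧ (∀ y, G.Adj w y → y = v) ∧ (G.induce {w}ᶜ).IsTree := by
  classical
  have := Fintype.ofFinite V
  obtain ⟨w, hw⟩ := hT.exists_vert_degree_one_of_nontrivial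
  obtain ⟨v, hwv, hleaf⟩ := degree_eq_one_iff_existsUnique_adj.mp hw
  exact ⟨w, v, hwv, hleaf,
    ⟨hT.connected.induce_compl_singleton_of_degree_eq_one hw, hT.isAcyclic.induce _⟩⟩

lemma IsTree.eq_of_adj_of_dist_add_one_eq (hT : G.IsTree) {r v y₁ y₂ : V} (h₁ : G.Adj y₁ v)
    (h₂ : G.Adj y₂ v) (hd₁ : G.dist r y₁ + 1 = G.dist r v) (hd₂ : G.dist r y₂ + 1 = G.dist r v) :
    y₁ = y₂ := by
  obtain ⟨q₁, hq₁⟩ := hT.connected.exists_walk_length_eq_dist r y₁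
  obtain ⟨q₂, hq₂⟩ := hT.connected.exists_walk_length_eq_dist r y₂
  have hp₁ := (q₁.concat h₁).isPath_of_length_eq_dist (by simp [hq₁, hd₁])
  have hp₂ := (q₂.concat h₂).isPath_of_length_eq_dist (by simp [hq₂, hd₂])
  obtain ⟨rfl, -⟩ := Walk.concat_inj <| congrArg Subtype.val <|
    (hT.isAcyclic.subsingleton_path r v).elim ⟨_, hp₁⟩ ⟨_, hp₂⟩
  rfl

/-- In a ball of radius `k` around `r`, a vertex at distance `k` has only its parent as a
neighbour. -/
lemma IsTree.ncard_neighborSet_le_of_forall_dist_le [Finite V] (hT : G.IsTree) {r : V} {k m : ℕ}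
    (hdeg : ∀ v, G.dist r v < k → (G.neighborSet v).ncard = m + 1)
    (hball : ∀ v, G.dist r v ≤ k) (v : V) : (G.neighborSet v).ncard ≤ m + 1 := by
  rcases (hball v).lt_or_eq with hv | hv
  · exact (hdeg v hv).le
  have hparent : ∀ y ∈ G.neighborSet v, G.dist r y + 1 = G.dist r v := fun y hy => by
    have := hball y
    rcases hT.dist_eq_dist_add_one_of_adj r hy with h | h <;> omega
  refine ((Set.ncard_le_one).mpr fun y₁ h₁ y₂ h₂ => ?_).trans (by omega)
  exact hT.eq_of_adj_of_dist_add_one_eq (G.adj_symm h₁) (G.adj_symm h₂) (hparent y₁ h₁)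
    (hparent y₂ h₂)

/-- `F v` is the label of `v` and `circInterval (a v) m` is the interval `I_v` of an elegant
labelling. The anchor condition keeps `I_v` at cyclic distance at least `h` from `F v`. -/
structure IsAnchoredLabelling (G : SimpleGraph V) (h m L : ℕ) (F a : V → ZMod L) : Prop where
  anchor : ∀ v, ∃ x : ℕ, h ≤ x ∧ x + m + h ≤ L ∧ a v = F v + x
  mem_circInterval : ∀ ⦃v w⦄, G.Adj v w → F w ∈ circInterval (a v) m
  injOn : ∀ v, Set.InjOn F (G.neighborSet v)
  disjoint : ∀ ⦃v w⦄, G.Adj v w → Disjoint (circInterval (a v) m) (circInterval (a w) m)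

namespace IsAnchoredLabelling

variable {h m L : ℕ} {F a : V → ZMod L}

lemma ne_of_dist_eq_two_or_three (hF : IsAnchoredLabelling G h m L F a) {u v : V}
    (huv : G.dist u v = 2 ∨ G.dist u v = 3) : F u ≠ F v := by
  rcases huv with huv | huv
  · obtain ⟨hne, y, huy, hyv⟩ := exists_adj_adj_of_dist_eq_two huv
    exact fun h => hne (hF.injOn y huy.symm hyv h)
  · obtain ⟨y, z, huy, hyz, hzv⟩ := exists_adj_adj_adj_of_dist_eq_three huv
    exact fun h => (hF.disjoint hyz).ne_of_mem (hF.mem_circInterval huy.symm)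
      (hF.mem_circInterval hzv) h

lemma le_cycDist [NeZero L] (hF : IsAnchoredLabelling G h m L F a) {v w : V} (hvw : G.Adj v w) :
    (h : ℤ) ≤ cycDist L (F v).val (F w).val := by
  rcases Nat.eq_zero_or_pos h with rfl | hh
  · rw [le_cycDist_val_iff]
    have := (F w - F v).val_lt
    omega
  obtain ⟨x, hx, hxL, hav⟩ := hF.anchor v
  obtain ⟨i, hi, hw⟩ := hF.mem_circInterval hvw
  have hsub : F w - F v = ((x + i : ℕ) : ZMod L) := by
    rw [hw, hav]
    push_cast
    ring
  rw [le_cycDist_val_iff, hsub, ZMod.val_cast_of_lt (by omega)]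
  omega

theorem isElegantCLabelling [NeZero L] (hF : IsAnchoredLabelling G h m L F a) :
    IsElegantCLabelling G h 1 L (fun v => (F v).val) := by
  refine ⟨⟨fun v => (F v).val_lt, fun u v huv => ?_, fun u v huv => ?_⟩,
    fun v => circInterval (a v) m, fun v => isCircInterval_circInterval _ _,
    fun u w huw => ?_, fun u v huv => ?_⟩
  · exact hF.le_cycDist (dist_eq_one_iff_adj.mp huv)
  · exact_mod_cast (one_le_cycDist_val_iff _ _).mpr (hF.ne_of_dist_eq_two_or_three huv)
  · simpa only [ZMod.natCast_zmod_val] using hF.mem_circInterval huw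
  · exact Set.disjoint_iff_inter_eq_empty.mp (hF.disjoint huv)

/-- Attaching a leaf `w` at a vertex `v`: `w` gets the free slot `s` of `I_v`, and `I_w` starts
`y` steps after `F w`. -/
lemma exists_of_induce_compl_leaf_of_slot {w v : V} {F' a' : ({w}ᶜ : Set V) → ZMod L}
    (hF' : (G.induce {w}ᶜ).IsAnchoredLabelling h m L F' a') (hwv : G.Adj w v)
    (hleaf : ∀ y, G.Adj w y → y = v) {s y : ℕ} (hs : s ≤ m)
    (hfree : a' ⟨v, hwv.ne'⟩ + (s : ZMod L) ∉ F' '' (G.induce {w}ᶜ).neighborSet ⟨v, hwv.ne'⟩)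
    (hy : h ≤ y ∧ y + m + h ≤ L) (hsy : m < s + y ∧ s + y + m < L)
    (hback : F' ⟨v, hwv.ne'⟩ ∈ circInterval (a' ⟨v, hwv.ne'⟩ + (s : ZMod L) + (y : ZMod L)) m) :
    ∃ F a : V → ZMod L, G.IsAnchoredLabelling h m L F a := by
  classical
  have hvw : v ≠ w := hwv.ne'
  set F : V → ZMod L := fun z => if hz : z = w then a' ⟨v, hvw⟩ + s else F' ⟨z, hz⟩
  set a : V → ZMod L := fun z => if hz : z = w then a' ⟨v, hvw⟩ + s + y else a' ⟨z, hz⟩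
  have hF : ∀ z (hz : z ≠ w), F z = F' ⟨z, hz⟩ := fun z hz => by simp [F, hz]
  have ha : ∀ z (hz : z ≠ w), a z = a' ⟨z, hz⟩ := fun z hz => by simp [a, hz]
  have hFw : F w = a v + s := by simp [F, ha v hvw]
  have haw : a w = a v + (s + y : ℕ) := by simp [a, ha v hvw]; ring
  refine ⟨F, a, ⟨fun z => ?_, fun p q hpq => ?_, fun z q₁ hq₁ q₂ hq₂ heq => ?_, fun p q hpq => ?_⟩⟩
  · by_cases hz : z = w
    · exact ⟨y, hy.1, hy.2, by rw [hz, haw, hFw]; push_cast; ring⟩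
    · simpa only [hF z hz, ha z hz] using hF'.anchor ⟨z, hz⟩
  · rcases adj_cases_of_leaf hleaf hpq with ⟨hp, hq⟩ | ⟨hp, hq⟩ | ⟨hp, hq⟩
    · simpa [hp, hq, hF v hvw, a] using hback
    · exact hp ▸ hq ▸ ⟨s, hs, hFw⟩
    · rw [hF q hq, ha p hp]
      exact hF'.mem_circInterval (v := ⟨p, hp⟩) (w := ⟨q, hq⟩) hpq
  · by_cases hz : z = w
    · rw [hleaf q₁ (hz ▸ hq₁), hleaf q₂ (hz ▸ hq₂)]
    have hslot : ∀ q (hq : q ≠ w), G.Adj v q → F q ≠ F w := fun q hq hvq hqw =>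
      hfree ⟨⟨q, hq⟩, hvq, by rw [← hF q hq, hqw, hFw, ha v hvw]⟩
    by_cases h₁ : q₁ = w <;> by_cases h₂ : q₂ = w
    · rw [h₁, h₂]
    · rw [h₁] at hq₁ heq
      exact absurd heq.symm (hslot q₂ h₂ (hleaf z hq₁.symm ▸ hq₂))
    · rw [h₂] at hq₂ heq
      exact absurd heq (hslot q₁ h₁ (hleaf z hq₂.symm ▸ hq₁))
    · rw [hF q₁ h₁, hF q₂ h₂] at heq
      exact congrArg Subtype.val
        (hF'.injOn ⟨z, hz⟩ (x₁ := ⟨q₁, h₁⟩) (x₂ := ⟨q₂, h₂⟩) hq₁ hq₂ heq)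
  · rcases adj_cases_of_leaf hleaf hpq with ⟨hp, hq⟩ | ⟨hp, hq⟩ | ⟨hp, hq⟩
    · rw [hp, hq, haw]
      exact (disjoint_circInterval_add (a v) hsy.1 hsy.2).symm
    · rw [hp, hq, haw]
      exact disjoint_circInterval_add (a v) hsy.1 hsy.2
    · rw [ha p hp, ha q hq]
      exact hF'.disjoint (v := ⟨p, hp⟩) (w := ⟨q, hq⟩) hpq

lemma exists_of_induce_compl_leaf [Finite V] {w v : V} {F' a' : ({w}ᶜ : Set V) → ZMod L}
    (hF' : (G.induce {w}ᶜ).IsAnchoredLabelling h m L F' a')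
    (hwv : G.Adj w v) (hleaf : ∀ y, G.Adj w y → y = v) (hdeg : (G.neighborSet v).ncard ≤ m + 1)
    (hh : 1 ≤ h) (hL₁ : h + 2 * m + 1 ≤ L) (hL₂ : 2 * h + m ≤ L) :
    ∃ F a : V → ZMod L, G.IsAnchoredLabelling h m L F a := by
  set v' : ({w}ᶜ : Set V) := ⟨v, hwv.ne'⟩
  obtain ⟨x, hx, hxL, hav⟩ := hF'.anchor v'
  have hdeg' : ((G.induce {w}ᶜ).neighborSet v').ncard ≤ m := by
    have := Set.ncard_sdiff_singleton_add_one (s := G.neighborSet v) hwv.symm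
    rw [ncard_neighborSet_induce, ← Set.sdiff_eq]
    change (G.neighborSet v \ {w}).ncard ≤ m
    omega
  obtain ⟨s, hs, hfree⟩ := ZMod.exists_add_notMem_of_ncard_le (by omega) (a' v')
    ((Set.ncard_image_le (f := F')).trans hdeg')
  -- each bound on `y` serves one requirement: `F v ∈ I_w`, `y` is an anchor, `I_w` misses `I_v`
  set y := max (L - x - s - m) (max h (m + 1 - s)) with hy
  have hanchor : h ≤ y ∧ y + m + h ≤ L := by omega
  have hsy : m < s + y ∧ s + y + m < L := by omega
  refine exists_of_induce_compl_leaf_of_slot hF' hwv hleaf hs hfree hanchor hsy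
    ⟨L - (x + s + y), by omega, ?_⟩
  have hL : ((x + s + y + (L - (x + s + y)) : ℕ) : ZMod L) = 0 := by
    rw [show x + s + y + (L - (x + s + y)) = L by omega, ZMod.natCast_self]
  rw [hav]
  push_cast at hL ⊢
  linear_combination -hL

end IsAnchoredLabelling

theorem IsTree.exists_isAnchoredLabelling [Finite V] {h m L : ℕ} (hT : G.IsTree)
    (hdeg : ∀ v, (G.neighborSet v).ncard ≤ m + 1) (hh : 1 ≤ h) (hL₁ : h + 2 * m + 1 ≤ L)
    (hL₂ : 2 * h + m ≤ L) :
    ∃ F a : V → ZMod L, G.IsAnchoredLabelling h m L F a := by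
  induction V using Finite.induction_subsingleton_or_nontrivial with
  | hbase V =>
    have hnadj : ∀ v w, ¬G.Adj v w := fun v w hvw => hvw.ne (Subsingleton.elim v w)
    exact ⟨0, fun _ => h, fun v => ⟨h, le_rfl, by omega, by simp⟩,
      fun v w hvw => (hnadj v w hvw).elim, fun v x₁ hx₁ => (hnadj v x₁ hx₁).elim,
      fun v w hvw => (hnadj v w hvw).elim⟩
  | hstep V ih =>
    obtain ⟨w, v, hwv, hleaf, hT'⟩ := hT.exists_leaf
    obtain ⟨F', a', hF'⟩ := ih _ (Finite.card_subtype_lt (x := w) (by simp)) hT' fun z =>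
      (ncard_neighborSet_induce _ z).trans_le
        ((Set.ncard_le_ncard Set.inter_subset_left).trans (hdeg z))
    exact IsAnchoredLabelling.exists_of_induce_compl_leaf hF' hwv hleaf (hdeg v) hh hL₁ hL₂

end SimpleGraph

namespace IsCLabelling

variable {V : Type} {G : SimpleGraph V} {h p ℓ : ℕ} {f : V → ℕ}

lemma ne_of_walk (hf : IsCLabelling G h p ℓ f) (hh : 1 ≤ h) (hp : 1 ≤ p) {x y : V} (hxy : x ≠ y)
    (q : G.Walk x y) (hq : q.length ≤ 3) : f x ≠ f y := by
  have hd : G.dist x y ≤ 3 := (SimpleGraph.dist_le q).trans hq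
  have hd0 : G.dist x y ≠ 0 := fun h0 => hxy ((q.reachable.dist_eq_zero_iff).mp h0)
  have hcyc : (1 : ℤ) ≤ cycDist ℓ (f x) (f y) := by
    by_cases hd1 : G.dist x y = 1
    · exact le_trans (by exact_mod_cast hh) (hf.2.1 x y hd1)
    · exact le_trans (by exact_mod_cast hp) (hf.2.2 x y (by omega))
  intro hfxy
  simp [hfxy, cycDist] at hcyc

lemma injOn_neighborSet (hf : IsCLabelling G h p ℓ f) (hh : 1 ≤ h) (hp : 1 ≤ p) (u : V) :
    Set.InjOn f (G.neighborSet u) := fun x (hx : G.Adj u x) y (hy : G.Adj u y) hfxy => by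
  by_contra hxy
  exact hf.ne_of_walk hh hp hxy (.cons hx.symm (.cons hy .nil)) (by simp) hfxy

lemma injOn_neighborSet_union (hf : IsCLabelling G h p ℓ f) (hh : 1 ≤ h) (hp : 1 ≤ p)
    {r u : V} (hru : G.Adj r u) : Set.InjOn f (G.neighborSet r ∪ G.neighborSet u) := by
  rintro x (hx | hx) y (hy | hy) hfxy <;> by_contra hxy <;> rw [mem_neighborSet] at hx hy
  · exact hxy (hf.injOn_neighborSet hh hp r hx hy hfxy)
  · exact hf.ne_of_walk hh hp hxy (.cons hx.symm (.cons hru (.cons hy .nil))) (by simp) hfxy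
  · exact hf.ne_of_walk hh hp hxy (.cons hx.symm (.cons hru.symm (.cons hy .nil))) (by simp) hfxy
  · exact hxy (hf.injOn_neighborSet hh hp u hx hy hfxy)

variable [NeZero ℓ]

lemma val_sub_of_adj (hf : IsCLabelling G h p ℓ f) {x y : V} (hxy : G.Adj x y) :
    h ≤ ((f y : ZMod ℓ) - f x).val ∧ ((f y : ZMod ℓ) - f x).val + h ≤ ℓ := by
  have := hf.2.1 x y (SimpleGraph.dist_eq_one_iff_adj.mpr hxy)
  rwa [← ZMod.val_cast_of_lt (hf.1 x), ← ZMod.val_cast_of_lt (hf.1 y), le_cycDist_val_iff]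
    at this

lemma injOn_val_sub (hf : IsCLabelling G h p ℓ f) {s : Set V} (hs : Set.InjOn f s) (c : ZMod ℓ) :
    Set.InjOn (fun x => ((f x : ZMod ℓ) - c).val) s := fun x hx y hy hxy => by
  have := congrArg ZMod.val (sub_left_injective (ZMod.val_injective ℓ hxy))
  rw [ZMod.val_cast_of_lt (hf.1 x), ZMod.val_cast_of_lt (hf.1 y)] at this
  exact hs hx hy this

lemma ncard_neighborSet_le (hf : IsCLabelling G h p ℓ f) (hh : 1 ≤ h) (hp : 1 ≤ p) (u : V) :
    (G.neighborSet u).ncard ≤ ℓ + 1 - 2 * h := by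
  have hmaps : ∀ y ∈ G.neighborSet u, ((f y : ZMod ℓ) - f u).val ∈ Set.Icc h (ℓ - h) :=
    fun y hy => by have := hf.val_sub_of_adj hy; exact ⟨this.1, by omega⟩
  have := Set.ncard_le_ncard_of_injOn _ hmaps
    (hf.injOn_val_sub (hf.injOn_neighborSet hh hp u) _) (Set.finite_Icc _ _)
  rw [Set.ncard_Icc_nat] at this
  omega

lemma exists_adj_ncard_union_le (hf : IsCLabelling G h p ℓ f) (hh : 1 ≤ h) (hp : 1 ≤ p) {r : V}
    (hr : (G.neighborSet r).Nonempty) :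
    ∃ u, G.Adj r u ∧ (G.neighborSet r ∪ G.neighborSet u).ncard + h ≤ ℓ + 1 := by
  set ρ : V → ℕ := fun x => ((f x : ZMod ℓ) - f r).val
  obtain ⟨u, hu, hρu⟩ : ∃ u ∈ G.neighborSet r, ∀ x ∈ G.neighborSet r, ρ x ≤ ρ u := by
    have hbdd : BddAbove (ρ '' G.neighborSet r) :=
      ⟨ℓ, by rintro _ ⟨x, _, rfl⟩; exact (ZMod.val_lt _).le⟩
    obtain ⟨u, hu, hu'⟩ := Nat.sSup_mem (hr.image ρ) hbdd
    exact ⟨u, hu, fun x hx => hu' ▸ le_csSup hbdd ⟨x, hx, rfl⟩⟩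
  refine ⟨u, hu, ?_⟩
  have hρu' : h ≤ ρ u ∧ ρ u + h ≤ ℓ := hf.val_sub_of_adj hu
  -- `u` maximises `ρ` on the neighbours of `r`, so no label of `N(r) ∪ N(u)` lies just above `ρ u`
  have hgap : Disjoint (ρ '' (G.neighborSet r ∪ G.neighborSet u)) (Set.Ioo (ρ u) (ρ u + h)) := by
    rw [Set.disjoint_left]
    rintro _ ⟨y, hy | hy, rfl⟩ ⟨hy₁, hy₂⟩
    · exact absurd (hρu y hy) (by omega)
    · have hδ := hf.val_sub_of_adj hy
      have hsplit := ZMod.val_add_eq_or_val_add_add_eq ((f y : ZMod ℓ) - (f u : ZMod ℓ))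
        ((f u : ZMod ℓ) - f r)
      rw [sub_add_sub_cancel] at hsplit
      change ρ y = _ + ρ u ∨ ρ y + ℓ = _ + ρ u at hsplit
      omega
  have hfin : (ρ '' (G.neighborSet r ∪ G.neighborSet u)).Finite :=
    (Set.finite_Iio ℓ).subset (by rintro _ ⟨x, _, rfl⟩; exact ZMod.val_lt _)
  have hsub : ρ '' (G.neighborSet r ∪ G.neighborSet u) ∪ Set.Ioo (ρ u) (ρ u + h) ⊆ Set.Iio ℓ := by
    rintro _ (⟨x, _, rfl⟩ | ⟨_, hz⟩)
    · exact ZMod.val_lt _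
    · exact Set.mem_Iio.mpr (by omega)
  have := Set.ncard_le_ncard hsub (Set.finite_Iio ℓ)
  rw [Set.ncard_union_eq hgap hfin,
    (hf.injOn_val_sub (hf.injOn_neighborSet_union hh hp hu) _).ncard_image, Set.ncard_Ioo_nat,
    Set.ncard_Iio_nat] at this
  omega

end IsCLabelling

lemma sigmaNum_eq_and_sigmaStar_eq {V : Type} {G : SimpleGraph V} {h p L : ℕ} (hL : 0 < L)
    (hupper : ∃ f, IsElegantCLabelling G h p L f)
    (hlower : ∀ ℓ f, 0 < ℓ → IsCLabelling G h p ℓ f → L ≤ ℓ) :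
    sigmaNum G h p = L ∧ sigmaStar G h p = L := by
  obtain ⟨f, hf⟩ := hupper
  exact ⟨IsLeast.csInf_eq ⟨⟨hL, f, hf.1⟩, fun ℓ ⟨hℓ, g, hg⟩ => hlower ℓ g hℓ hg⟩,
    IsLeast.csInf_eq ⟨⟨hL, f, hf⟩, fun ℓ ⟨hℓ, g, hg⟩ => hlower ℓ g hℓ hg.1⟩⟩

theorem stmt16_general {V : Type} [Fintype V] (G : SimpleGraph V) [DecidableRel G.Adj]
    (hT : G.IsTree) (m k : ℕ) (hk : 2 ≤ k) (r : V)
    (hdeg : ∀ v : V, G.dist r v < k → G.degree v = m + 1)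
    (hball : ∀ v : V, G.dist r v ≤ k)
    (h : ℕ) (hh : 1 ≤ h) :
    sigmaNum G h 1 = max (h + 2 * m + 1) (2 * h + m) ∧
    sigmaStar G h 1 = max (h + 2 * m + 1) (2 * h + m) := by
  have hdeg' : ∀ v, G.dist r v < k → (G.neighborSet v).ncard = m + 1 := fun v hv => by
    rw [ncard_neighborSet_eq_degree, hdeg v hv]
  have : NeZero (max (h + 2 * m + 1) (2 * h + m)) := ⟨by omega⟩
  obtain ⟨F, a, hF⟩ := hT.exists_isAnchoredLabelling
    (hT.ncard_neighborSet_le_of_forall_dist_le hdeg' hball) hh le_sup_left le_sup_right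
  refine sigmaNum_eq_and_sigmaStar_eq (by omega) ⟨_, hF.isElegantCLabelling⟩ fun ℓ f hℓ hf => ?_
  have : NeZero ℓ := ⟨hℓ.ne'⟩
  have hr : G.dist r r < k := by rw [dist_self]; omega
  obtain ⟨u, hru, hunion⟩ := hf.exists_adj_ncard_union_le hh le_rfl
    (Set.nonempty_of_ncard_ne_zero (by rw [hdeg' r hr]; omega))
  have hu : G.dist r u < k := by rw [dist_eq_one_iff_adj.mpr hru]; omega
  have hwindow := hf.ncard_neighborSet_le hh le_rfl u
  rw [Set.ncard_union_eq (hT.isAcyclic.disjoint_neighborSet hru), hdeg' r hr, hdeg' u hu]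
    at hunion
  rw [hdeg' u hu] at hwindow
  omega

theorem stmt16 {V : Type} [Fintype V] (G : SimpleGraph V) [DecidableRel G.Adj]
    (hT : G.IsTree) (m k : ℕ) (hm : 2 ≤ m) (hk : 2 ≤ k) (r : V)
    (hdeg : ∀ v : V, G.dist r v < k → G.degree v = m + 1)
    (hball : ∀ v : V, G.dist r v ≤ k)
    (h : ℕ) (hh : 1 ≤ h) :
    sigmaNum G h 1 = max (h + 2 * m + 1) (2 * h + m) ∧
    sigmaStar G h 1 = max (h + 2 * m + 1) (2 * h + m) :=
  stmt16_general G hT m k hk r hdeg hball h hh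
end
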